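/- arXiv:1606.08546 — 3 statements merged into one kernel-verified Lean document; each statement's English description precedes it below -/
import Mathlib

section
/- Let x1 < x2 be real numbers and let λ1 > 0, λ2 > 0 and ν > 0. Then there exists a smooth function f : ℝ → ℝ with compact support contained in (x1,x2) such that: −λ1 ≤ f' ≤ λ2 on (x1,x2); | |{x ∈ (x1,x2) : f'(x) = −λ1}| − (λ2/(λ1+λ2))(x2−x1) | < ν; | |{x ∈ (x1,x2) : f'(x) = λ2}| − (λ1/(λ1+λ2))(x2−x1) | < ν; ∫_{x1}^{x2} f(x) dx = 0; and ‖f‖_{L∞(x1,x2)} < ν. -/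
open MeasureTheory Set Pointwise

noncomputable section
namespace Osc

/-- Two-sided Lipschitz property: slopes in `[-l1, l2]`. -/
def TS (l1 l2 : ℝ) (g : ℝ → ℝ) : Prop :=
  ∀ ⦃x y : ℝ⦄, x ≤ y → -(l1 * (y - x)) ≤ g y - g x ∧ g y - g x ≤ l2 * (y - x)

lemma TS.congr {l1 l2 : ℝ} {g g' : ℝ → ℝ} (h : ∀ x, g x = g' x) (hg : TS l1 l2 g) :
    TS l1 l2 g' := by
  intro x y hxy; simpa [← h x, ← h y] using hg hxy

lemma TS.affine {l1 l2 a m : ℝ} (hm1 : -l1 ≤ m) (hm2 : m ≤ l2) :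
    TS l1 l2 (fun t => a + m * t) := by
  intro x y hxy
  refine ⟨?_, ?_⟩ <;> simp only [] <;> nlinarith [sub_nonneg.2 hxy]

lemma TS.min {l1 l2 : ℝ} {g g' : ℝ → ℝ} (hg : TS l1 l2 g) (hg' : TS l1 l2 g') :
    TS l1 l2 (fun x => min (g x) (g' x)) := by
  intro x y hxy
  obtain ⟨h1, h2⟩ := hg hxy; obtain ⟨h1', h2'⟩ := hg' hxy
  constructor
  · rcases min_cases (g x) (g' x) with ⟨he, _⟩ | ⟨he, _⟩ <;>
      rcases min_cases (g y) (g' y) with ⟨he', _⟩ | ⟨he', _⟩ <;> simp only [he, he'] <;> linarith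
  · rcases min_cases (g x) (g' x) with ⟨he, _⟩ | ⟨he, _⟩ <;>
      rcases min_cases (g y) (g' y) with ⟨he', _⟩ | ⟨he', _⟩ <;> simp only [he, he'] <;> linarith

lemma TS.max {l1 l2 : ℝ} {g g' : ℝ → ℝ} (hg : TS l1 l2 g) (hg' : TS l1 l2 g') :
    TS l1 l2 (fun x => max (g x) (g' x)) := by
  intro x y hxy
  obtain ⟨h1, h2⟩ := hg hxy; obtain ⟨h1', h2'⟩ := hg' hxy
  constructor
  · rcases max_cases (g x) (g' x) with ⟨he, _⟩ | ⟨he, _⟩ <;>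
      rcases max_cases (g y) (g' y) with ⟨he', _⟩ | ⟨he', _⟩ <;> simp only [he, he'] <;> linarith
  · rcases max_cases (g x) (g' x) with ⟨he, _⟩ | ⟨he, _⟩ <;>
      rcases max_cases (g y) (g' y) with ⟨he', _⟩ | ⟨he', _⟩ <;> simp only [he, he'] <;> linarith

/-- Gluing: if `u` vanishes right of `c` and `v` vanishes left of `c`, sum of TS is TS. -/
lemma TS.add_glue {l1 l2 c : ℝ} (hl1 : 0 ≤ l1) (hl2 : 0 ≤ l2) {u v : ℝ → ℝ}
    (hu : TS l1 l2 u) (hv : TS l1 l2 v)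
    (hu0 : ∀ x, c ≤ x → u x = 0) (hv0 : ∀ x, x ≤ c → v x = 0) :
    TS l1 l2 (fun x => u x + v x) := by
  intro x y hxy
  simp only []
  rcases le_or_gt y c with hy | hy
  · have h := hu hxy
    rw [hv0 x (hxy.trans hy), hv0 y hy]
    constructor <;> linarith [h.1, h.2]
  rcases le_or_gt c x with hx | hx
  · have h := hv hxy
    rw [hu0 x hx, hu0 y (hx.trans hxy)]
    constructor <;> linarith [h.1, h.2]
  · -- x < c < y
    have hxc : x ≤ c := hx.le
    have hcy : c ≤ y := hy.le
    have h1 := hu hxc; have h2 := hv hcy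
    have e1 : v x = 0 := hv0 x hxc
    have e2 : u y = 0 := hu0 y hcy
    have e3 : u c = 0 := hu0 c le_rfl
    have e4 : v c = 0 := hv0 c le_rfl
    rw [e1, e2]
    rw [e3] at h1; rw [e4] at h2
    constructor
    · nlinarith [h1.1, h2.1]
    · nlinarith [h1.2, h2.2]

lemma TS.comp_sub {l1 l2 a : ℝ} {g : ℝ → ℝ} (hg : TS l1 l2 g) :
    TS l1 l2 (fun x => g (x - a)) := by
  intro x y hxy
  have := hg (show x - a ≤ y - a by linarith)
  constructor <;> [(have := this.1); (have := this.2)] <;>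
    · ring_nf at this ⊢; linarith

lemma TS.lipschitzWith {l1 l2 : ℝ} (hl1 : 0 ≤ l1) (hl2 : 0 ≤ l2) {g : ℝ → ℝ}
    (hg : TS l1 l2 g) : LipschitzWith (Real.toNNReal (l1 ⊔ l2)) g := by
  rw [lipschitzWith_iff_dist_le_mul]
  intro x y
  rw [Real.coe_toNNReal _ (le_sup_of_le_left hl1), Real.dist_eq, Real.dist_eq]
  rcases le_total x y with hxy | hxy
  · have h := hg hxy
    rw [abs_sub_comm (g x) (g y), abs_sub_comm x y,
      abs_of_nonneg (by linarith : (0:ℝ) ≤ y - x), abs_le]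
    constructor <;> nlinarith [le_sup_left (a := l1) (b := l2), le_sup_right (a := l1) (b := l2), h.1, h.2]
  · have h := hg hxy
    rw [abs_of_nonneg (by linarith : (0:ℝ) ≤ x - y), abs_le]
    constructor <;> nlinarith [le_sup_left (a := l1) (b := l2), le_sup_right (a := l1) (b := l2), h.1, h.2]

lemma TS.continuous {l1 l2 : ℝ} (hl1 : 0 ≤ l1) (hl2 : 0 ≤ l2) {g : ℝ → ℝ}
    (hg : TS l1 l2 g) : Continuous g :=
  (hg.lipschitzWith hl1 hl2).continuous

/-- Basic zigzag tooth: supported in `[0,w]`, slope pattern `l2, -l1, l2`,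
written as a lattice combination of affine functions. -/
def Zc (l1 l2 p w t : ℝ) : ℝ :=
  min (max (max (l2 * (t - w)) (min (l2 * t) (l2 * p - l1 * (t - p))))
    (min 0 (l2 * p - l1 * (t - p)))) (max 0 (l2 * p - l1 * (t - p)))

section Zc
variable {l1 l2 p w : ℝ} (hl1 : 0 < l1) (hl2 : 0 < l2) (hp : 0 < p)
  (hw : l1 * (w - 2 * p) = 2 * (l2 * p))

include hl1 hl2 hp hw

lemma w_gt : 2 * p < w := by nlinarith

lemma Zc_eq1 {t : ℝ} (h0 : 0 ≤ t) (h1 : t ≤ p) : Zc l1 l2 p w t = l2 * t := by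
  have hpw := w_gt hl1 hl2 hp hw
  unfold Zc
  have hBC : min (l2 * t) (l2 * p - l1 * (t - p)) = l2 * t := min_eq_left (by nlinarith)
  rw [hBC]
  have hAB : max (l2 * (t - w)) (l2 * t) = l2 * t := max_eq_right (by nlinarith)
  rw [hAB]
  have h0C : min 0 (l2 * p - l1 * (t - p)) = 0 := min_eq_left (by nlinarith)
  rw [h0C]
  have : max (l2 * t) 0 = l2 * t := max_eq_left (by nlinarith)
  rw [this]
  exact min_eq_left (le_max_of_le_right (by nlinarith))

lemma Zc_eq2 {t : ℝ} (h0 : p ≤ t) (h1 : t ≤ w - p) :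
    Zc l1 l2 p w t = l2 * p - l1 * (t - p) := by
  unfold Zc
  have hBC : min (l2 * t) (l2 * p - l1 * (t - p)) = l2 * p - l1 * (t - p) :=
    min_eq_right (by nlinarith)
  rw [hBC]
  have hA : max (l2 * (t - w)) (l2 * p - l1 * (t - p)) = l2 * p - l1 * (t - p) :=
    max_eq_right (by nlinarith)
  rw [hA]
  have h1' : max (l2 * p - l1 * (t - p)) (min 0 (l2 * p - l1 * (t - p))) =
      l2 * p - l1 * (t - p) := max_eq_left (min_le_right _ _)
  rw [h1']
  exact min_eq_left (le_max_right _ _)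

lemma Zc_eq3 {t : ℝ} (h0 : w - p ≤ t) (h1 : t ≤ w) : Zc l1 l2 p w t = l2 * (t - w) := by
  have hpw := w_gt hl1 hl2 hp hw
  unfold Zc
  have hC2 : l2 * p - l1 * (t - p) ≤ l2 * (t - w) := by nlinarith
  have hCneg : l2 * p - l1 * (t - p) ≤ 0 := by nlinarith
  have hBC : min (l2 * t) (l2 * p - l1 * (t - p)) = l2 * p - l1 * (t - p) :=
    min_eq_right (by nlinarith)
  rw [hBC]
  have hA : max (l2 * (t - w)) (l2 * p - l1 * (t - p)) = l2 * (t - w) := max_eq_left hC2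
  rw [hA]
  have h0C : min 0 (l2 * p - l1 * (t - p)) = l2 * p - l1 * (t - p) := min_eq_right hCneg
  rw [h0C]
  have : max (l2 * (t - w)) (l2 * p - l1 * (t - p)) = l2 * (t - w) := max_eq_left hC2
  rw [this]
  have h0C' : max 0 (l2 * p - l1 * (t - p)) = 0 := max_eq_left hCneg
  rw [h0C']
  exact min_eq_left (by nlinarith)

lemma Zc_zero_left {t : ℝ} (ht : t ≤ 0) : Zc l1 l2 p w t = 0 := by
  have hpw := w_gt hl1 hl2 hp hw
  unfold Zc
  have hBC : min (l2 * t) (l2 * p - l1 * (t - p)) = l2 * t := min_eq_left (by nlinarith)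
  rw [hBC]
  have hAB : max (l2 * (t - w)) (l2 * t) = l2 * t := max_eq_right (by nlinarith)
  rw [hAB]
  have h0C : min 0 (l2 * p - l1 * (t - p)) = 0 := min_eq_left (by nlinarith)
  rw [h0C]
  have : max (l2 * t) 0 = 0 := max_eq_right (by nlinarith)
  rw [this]
  exact min_eq_left (le_max_of_le_left le_rfl)

lemma Zc_zero_right {t : ℝ} (ht : w ≤ t) : Zc l1 l2 p w t = 0 := by
  have hpw := w_gt hl1 hl2 hp hw
  unfold Zc
  have hCneg : l2 * p - l1 * (t - p) ≤ 0 := by nlinarith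
  have hBC : min (l2 * t) (l2 * p - l1 * (t - p)) = l2 * p - l1 * (t - p) :=
    min_eq_right (by nlinarith)
  rw [hBC]
  have hA : max (l2 * (t - w)) (l2 * p - l1 * (t - p)) = l2 * (t - w) :=
    max_eq_left (by nlinarith)
  rw [hA]
  have h0C : min 0 (l2 * p - l1 * (t - p)) = l2 * p - l1 * (t - p) := min_eq_right hCneg
  rw [h0C]
  have : max (l2 * (t - w)) (l2 * p - l1 * (t - p)) = l2 * (t - w) :=
    max_eq_left (by nlinarith)
  rw [this]
  have h0C' : max 0 (l2 * p - l1 * (t - p)) = 0 := max_eq_left hCneg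
  rw [h0C']
  exact min_eq_right (by nlinarith)

lemma Zc_TS : TS l1 l2 (Zc l1 l2 p w) := by
  have a1 : TS l1 l2 (fun t : ℝ => -(l2 * w) + l2 * t) := TS.affine (by linarith) le_rfl
  have a2 : TS l1 l2 (fun t : ℝ => 0 + l2 * t) := TS.affine (by linarith) le_rfl
  have a3 : TS l1 l2 (fun t : ℝ => (l2 * p + l1 * p) + (-l1) * t) :=
    TS.affine le_rfl (by linarith)
  have a0 : TS l1 l2 (fun t : ℝ => 0 + 0 * t) := TS.affine (by linarith) (by linarith)
  have := ((((a1.max (a2.min a3)).max (a0.min a3))).min (a0.max a3))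
  refine this.congr (fun t => ?_)
  show min (max (max (-(l2 * w) + l2 * t) (min (0 + l2 * t) ((l2 * p + l1 * p) + (-l1) * t)))
    (min (0 + 0 * t) ((l2 * p + l1 * p) + (-l1) * t)))
    (max (0 + 0 * t) ((l2 * p + l1 * p) + (-l1) * t)) = Zc l1 l2 p w t
  unfold Zc
  have e1 : -(l2 * w) + l2 * t = l2 * (t - w) := by ring
  have e2 : (0:ℝ) + l2 * t = l2 * t := by ring
  have e3 : (l2 * p + l1 * p) + (-l1) * t = l2 * p - l1 * (t - p) := by ring
  have e4 : (0:ℝ) + 0 * t = 0 := by ring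
  rw [e1, e2, e3, e4]

lemma Zc_abs_le {t : ℝ} : |Zc l1 l2 p w t| ≤ l2 * p := by
  have hpw := w_gt hl1 hl2 hp hw
  rcases le_total t 0 with h | h
  · rw [Zc_zero_left hl1 hl2 hp hw h]; simp; positivity
  rcases le_total t p with h1 | h1
  · rw [Zc_eq1 hl1 hl2 hp hw h h1, abs_le]; constructor <;> nlinarith
  rcases le_total t (w - p) with h2 | h2
  · rw [Zc_eq2 hl1 hl2 hp hw h1 h2, abs_le]; constructor <;> nlinarith
  rcases le_total t w with h3 | h3
  · rw [Zc_eq3 hl1 hl2 hp hw h2 h3, abs_le]; constructor <;> nlinarith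
  · rw [Zc_zero_right hl1 hl2 hp hw h3]; simp; positivity

lemma Zc_continuous : Continuous (Zc l1 l2 p w) :=
  (Zc_TS hl1 hl2 hp hw).continuous hl1.le hl2.le

lemma Zc_hasCompactSupport : HasCompactSupport (Zc l1 l2 p w) := by
  apply HasCompactSupport.intro (isCompact_Icc (a := (0:ℝ)) (b := w))
  intro t ht
  simp only [mem_Icc, not_and_or, not_le] at ht
  rcases ht with ht | ht
  · exact Zc_zero_left hl1 hl2 hp hw ht.le
  · exact Zc_zero_right hl1 hl2 hp hw ht.le

lemma Zc_integrable : Integrable (Zc l1 l2 p w) :=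
  (Zc_continuous hl1 hl2 hp hw).integrable_of_hasCompactSupport
    (Zc_hasCompactSupport hl1 hl2 hp hw)

lemma Zc_intervalIntegrable (a b : ℝ) : IntervalIntegrable (Zc l1 l2 p w) volume a b :=
  (Zc_continuous hl1 hl2 hp hw).intervalIntegrable a b

lemma Zc_integral_zero : ∫ t, Zc l1 l2 p w t = 0 := by
  have hpw := w_gt hl1 hl2 hp hw
  have h1 : ∫ t, Zc l1 l2 p w t = ∫ t in Set.Ioc 0 w, Zc l1 l2 p w t := by
    refine (setIntegral_eq_integral_of_forall_compl_eq_zero (fun t ht => ?_)).symm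
    simp only [mem_Ioc, not_and_or, not_lt, not_le] at ht
    rcases ht with ht | ht
    · exact Zc_zero_left hl1 hl2 hp hw ht
    · exact Zc_zero_right hl1 hl2 hp hw ht.le
  rw [h1, ← intervalIntegral.integral_of_le (by linarith : (0:ℝ) ≤ w)]
  have split1 : ∫ t in (0:ℝ)..p, Zc l1 l2 p w t = l2 * p ^ 2 / 2 := by
    rw [intervalIntegral.integral_congr (g := fun t => l2 * t) (fun t ht => by
      rw [uIcc_of_le hp.le] at ht
      exact Zc_eq1 hl1 hl2 hp hw ht.1 ht.2)]
    rw [intervalIntegral.integral_const_mul]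
    simp [integral_id]
    ring
  have split2 : ∫ t in p..(w - p), Zc l1 l2 p w t = 0 := by
    rw [intervalIntegral.integral_congr (g := fun t => l2 * p - l1 * (t - p)) (fun t ht => by
      rw [uIcc_of_le (by linarith : p ≤ w - p)] at ht
      exact Zc_eq2 hl1 hl2 hp hw ht.1 ht.2)]
    have : ∀ t : ℝ, l2 * p - l1 * (t - p) = (l2 * p + l1 * p) - l1 * t := fun t => by ring
    simp_rw [this]
    rw [intervalIntegral.integral_sub (by apply Continuous.intervalIntegrable; continuity)
      (by apply Continuous.intervalIntegrable; continuity)]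
    rw [intervalIntegral.integral_const_mul]
    simp [integral_id]
    ring_nf
    nlinarith [hw]
  have split3 : ∫ t in (w - p)..w, Zc l1 l2 p w t = -(l2 * p ^ 2 / 2) := by
    rw [intervalIntegral.integral_congr (g := fun t => l2 * (t - w)) (fun t ht => by
      rw [uIcc_of_le (by linarith : w - p ≤ w)] at ht
      exact Zc_eq3 hl1 hl2 hp hw ht.1 ht.2)]
    have : ∀ t : ℝ, l2 * (t - w) = l2 * t - l2 * w := fun t => by ring
    simp_rw [this]
    rw [intervalIntegral.integral_sub (by apply Continuous.intervalIntegrable; continuity)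
      (by apply Continuous.intervalIntegrable; continuity)]
    rw [intervalIntegral.integral_const_mul]
    simp [integral_id]
    ring
  have j1 := intervalIntegral.integral_add_adjacent_intervals
    (Zc_intervalIntegrable hl1 hl2 hp hw 0 p) (Zc_intervalIntegrable hl1 hl2 hp hw p (w - p))
  have j2 := intervalIntegral.integral_add_adjacent_intervals
    (IntervalIntegrable.trans (Zc_intervalIntegrable hl1 hl2 hp hw 0 p)
      (Zc_intervalIntegrable hl1 hl2 hp hw p (w - p)))
    (Zc_intervalIntegrable hl1 hl2 hp hw (w - p) w)
  rw [← j2, ← j1, split1, split2, split3]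
  ring

end Zc
/-- The sawtooth: `n` translated teeth starting at `y1`, each of width `w`. -/
def SS (l1 l2 p w y1 : ℝ) (n : ℕ) (x : ℝ) : ℝ :=
  ∑ k ∈ Finset.range n, Zc l1 l2 p w (x - (y1 + k * w))

section SS
variable {l1 l2 p w y1 : ℝ} {n : ℕ} (hl1 : 0 < l1) (hl2 : 0 < l2) (hp : 0 < p)
  (hw : l1 * (w - 2 * p) = 2 * (l2 * p))

include hl1 hl2 hp hw

lemma w_pos : 0 < w := by have := w_gt hl1 hl2 hp hw; linarith

lemma SS_zero_left {x : ℝ} (hx : x ≤ y1) : SS l1 l2 p w y1 n x = 0 := by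
  have hw0 := w_pos hl1 hl2 hp hw
  apply Finset.sum_eq_zero
  intro k _
  apply Zc_zero_left hl1 hl2 hp hw
  have : (0:ℝ) ≤ (k : ℝ) * w := by positivity
  linarith

lemma SS_zero_right {x : ℝ} (hx : y1 + n * w ≤ x) : SS l1 l2 p w y1 n x = 0 := by
  have hw0 := w_pos hl1 hl2 hp hw
  apply Finset.sum_eq_zero
  intro k hk
  apply Zc_zero_right hl1 hl2 hp hw
  have hk' : (k : ℝ) + 1 ≤ (n : ℝ) := by
    exact_mod_cast Nat.succ_le_of_lt (Finset.mem_range.mp hk)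
  nlinarith

lemma SS_eq_tooth {k : ℕ} (hk : k < n) {x : ℝ} (h0 : y1 + k * w ≤ x)
    (h1 : x ≤ y1 + k * w + w) : SS l1 l2 p w y1 n x = Zc l1 l2 p w (x - (y1 + k * w)) := by
  have hw0 := w_pos hl1 hl2 hp hw
  apply Finset.sum_eq_single_of_mem k (Finset.mem_range.mpr hk)
  intro j _ hjk
  rcases lt_or_gt_of_ne hjk with hj | hj
  · apply Zc_zero_right hl1 hl2 hp hw
    have : (j : ℝ) + 1 ≤ (k : ℝ) := by exact_mod_cast Nat.succ_le_of_lt hj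
    nlinarith
  · apply Zc_zero_left hl1 hl2 hp hw
    have : (k : ℝ) + 1 ≤ (j : ℝ) := by exact_mod_cast Nat.succ_le_of_lt hj
    nlinarith

lemma SS_TS : TS l1 l2 (SS l1 l2 p w y1 n) := by
  induction n with
  | zero =>
    have : TS l1 l2 (fun t : ℝ => 0 + 0 * t) := TS.affine (by linarith) (by linarith)
    exact this.congr (fun t => by simp [SS])
  | succ m ih =>
    have hcs : TS l1 l2 (fun x : ℝ => Zc l1 l2 p w (x - (y1 + (m:ℝ) * w))) :=
      (Zc_TS hl1 hl2 hp hw).comp_sub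
    have hglue := TS.add_glue hl1.le hl2.le ih hcs
      (fun x hx => SS_zero_right hl1 hl2 hp hw hx)
      (fun x (hx : x ≤ y1 + (m:ℝ) * w) => Zc_zero_left hl1 hl2 hp hw (by linarith))
    refine hglue.congr (fun x => ?_)
    simp only [SS, Finset.sum_range_succ]

lemma SS_abs_le (x : ℝ) : |SS l1 l2 p w y1 n x| ≤ l2 * p := by
  have hw0 := w_pos hl1 hl2 hp hw
  have hlp : (0:ℝ) ≤ l2 * p := by positivity
  rcases le_or_gt x y1 with hx | hx
  · rw [SS_zero_left hl1 hl2 hp hw hx]; simpa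
  rcases le_or_gt (y1 + n * w) x with hx2 | hx2
  · rw [SS_zero_right hl1 hl2 hp hw hx2]; simpa
  · set k := ⌊(x - y1) / w⌋₊ with hkdef
    have hxy : 0 ≤ (x - y1) / w := div_nonneg (by linarith) hw0.le
    have hk1 : (k : ℝ) ≤ (x - y1) / w := Nat.floor_le hxy
    have hk2 : (x - y1) / w < (k : ℝ) + 1 := Nat.lt_floor_add_one _
    have hkn : k < n := by
      rw [hkdef]
      rw [Nat.floor_lt hxy]
      rw [div_lt_iff₀ hw0]
      linarith
    have hk1'' : (k : ℝ) * w ≤ x - y1 := (le_div_iff₀ hw0).mp hk1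
    have hk2' : x - y1 < ((k : ℝ) + 1) * w := (div_lt_iff₀ hw0).mp hk2
    rw [SS_eq_tooth hl1 hl2 hp hw hkn (by linarith) (by nlinarith)]
    exact Zc_abs_le hl1 hl2 hp hw

lemma SS_continuous : Continuous (SS l1 l2 p w y1 n) :=
  (SS_TS hl1 hl2 hp hw (y1 := y1) (n := n)).continuous hl1.le hl2.le

lemma SS_hasCompactSupport : HasCompactSupport (SS l1 l2 p w y1 n) := by
  apply HasCompactSupport.intro (isCompact_Icc (a := y1) (b := y1 + n * w))
  intro x hx
  simp only [mem_Icc, not_and_or, not_le] at hx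
  rcases hx with hx | hx
  · exact SS_zero_left hl1 hl2 hp hw hx.le
  · exact SS_zero_right hl1 hl2 hp hw hx.le

lemma SS_integrable : Integrable (SS l1 l2 p w y1 n) :=
  (SS_continuous hl1 hl2 hp hw).integrable_of_hasCompactSupport
    (SS_hasCompactSupport hl1 hl2 hp hw)

lemma SS_integral_zero : ∫ x, SS l1 l2 p w y1 n x = 0 := by
  have : ∫ x, SS l1 l2 p w y1 n x
      = ∑ k ∈ Finset.range n, ∫ x, Zc l1 l2 p w (x - (y1 + k * w)) := by
    rw [← integral_finset_sum]
    · rfl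
    · intro k _
      exact (Zc_integrable hl1 hl2 hp hw).comp_sub_right (y1 + k * w)
  rw [this]
  apply Finset.sum_eq_zero
  intro k _
  rw [integral_sub_right_eq_self (μ := volume) (Zc l1 l2 p w) (y1 + k * w)]
  exact Zc_integral_zero hl1 hl2 hp hw

end SS

lemma TS.deriv_bounds {l1 l2 : ℝ} {f : ℝ → ℝ} (hf : TS l1 l2 f) {x : ℝ}
    (hd : DifferentiableAt ℝ f x) : -l1 ≤ deriv f x ∧ deriv f x ≤ l2 := by
  have hder := hd.hasDerivAt
  rw [hasDerivAt_iff_tendsto_slope] at hder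
  have hslope : ∀ y : ℝ, y ≠ x → -l1 ≤ slope f x y ∧ slope f x y ≤ l2 := by
    intro y hy
    rw [slope_def_field]
    rcases lt_or_gt_of_ne hy with hlt | hgt
    · have h := hf hlt.le
      have hpos : 0 < x - y := by linarith
      have hre : (f y - f x) / (y - x) = (f x - f y) / (x - y) := by
        rw [← neg_sub (f x) (f y), ← neg_sub x y, neg_div_neg_eq]
      rw [hre]
      constructor
      · rw [le_div_iff₀ hpos]; nlinarith [h.2]
      · rw [div_le_iff₀ hpos]; nlinarith [h.1]
    · have h := hf hgt.le
      have hpos : 0 < y - x := by linarith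
      constructor
      · rw [le_div_iff₀ hpos]; nlinarith [h.1]
      · rw [div_le_iff₀ hpos]; nlinarith [h.2]
  constructor
  · refine ge_of_tendsto hder ?_
    filter_upwards [self_mem_nhdsWithin] with y hy using (hslope y hy).1
  · refine le_of_tendsto hder ?_
    filter_upwards [self_mem_nhdsWithin] with y hy using (hslope y hy).2

section Conv
open scoped Convolution

variable (φ : ContDiffBump (0:ℝ)) {g : ℝ → ℝ}

/-- Mollification of `g` by the normalized bump `φ`. -/
def conv (φ : ContDiffBump (0:ℝ)) (g : ℝ → ℝ) : ℝ → ℝ :=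
  (φ.normed volume) ⋆[ContinuousLinearMap.lsmul ℝ ℝ, volume] g

lemma conv_apply (x : ℝ) : conv φ g x = ∫ t, φ.normed volume t * g (x - t) := by
  simp [conv, convolution_def, ContinuousLinearMap.lsmul_apply, smul_eq_mul]

variable (hgc : Continuous g) (hgs : HasCompactSupport g)
include hgc hgs

lemma conv_integrand_integrable (x : ℝ) :
    Integrable (fun t => φ.normed volume t * g (x - t)) := by
  apply Continuous.integrable_of_hasCompactSupport
  · exact φ.continuous_normed.mul (hgc.comp (continuous_const.sub continuous_id))
  · exact φ.hasCompactSupport_normed.mul_right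

lemma conv_contDiff : ContDiff ℝ (⊤ : ℕ∞) (conv φ g) :=
  HasCompactSupport.contDiff_convolution_left _ φ.hasCompactSupport_normed
    φ.contDiff_normed (hgc.locallyIntegrable (μ := volume))

omit hgc hgs in
lemma integral_normed_mul_const (c : ℝ) : ∫ t, φ.normed volume t * c = c := by
  rw [integral_mul_const, φ.integral_normed, one_mul]

lemma conv_TS {l1 l2 : ℝ} (hg : TS l1 l2 g) : TS l1 l2 (conv φ g) := by
  intro x y hxy
  have hix := conv_integrand_integrable φ hgc hgs x
  have hiy := conv_integrand_integrable φ hgc hgs y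
  have hdiff : Integrable (fun t => φ.normed volume t * (g (y - t) - g (x - t))) :=
    (hiy.sub hix).congr (Filter.EventuallyEq.of_eq (funext fun t => by
      simp only [Pi.sub_apply]; ring)).symm
  have hsub : conv φ g y - conv φ g x
      = ∫ t, φ.normed volume t * (g (y - t) - g (x - t)) := by
    rw [conv_apply, conv_apply, ← integral_sub hiy hix]
    congr 1; funext t; ring
  constructor
  · rw [hsub]
    calc -(l1 * (y - x)) = ∫ t, φ.normed volume t * (-(l1 * (y - x))) :=
          (integral_normed_mul_const φ _).symm
      _ ≤ _ := by
          apply integral_mono (φ.integrable_normed.mul_const _) hdiff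
          intro t
          apply mul_le_mul_of_nonneg_left _ (φ.nonneg_normed t)
          have h := (hg (show x - t ≤ y - t by linarith)).1
          rw [sub_sub_sub_cancel_right] at h
          exact h
  · rw [hsub]
    calc (∫ t, φ.normed volume t * (g (y - t) - g (x - t)))
        ≤ ∫ t, φ.normed volume t * (l2 * (y - x)) := by
          apply integral_mono hdiff (φ.integrable_normed.mul_const _)
          intro t
          apply mul_le_mul_of_nonneg_left _ (φ.nonneg_normed t)
          have h := (hg (show x - t ≤ y - t by linarith)).2
          rw [sub_sub_sub_cancel_right] at h
          exact h
      _ = l2 * (y - x) := integral_normed_mul_const φ _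

lemma conv_abs_le {M : ℝ} (hM0 : 0 ≤ M) (hM : ∀ x, |g x| ≤ M) (x : ℝ) :
    |conv φ g x| ≤ M := by
  rw [conv_apply]
  calc |∫ t, φ.normed volume t * g (x - t)| ≤ ∫ t, |φ.normed volume t * g (x - t)| := by
        simpa [Real.norm_eq_abs, abs_mul] using
          norm_integral_le_integral_norm (μ := volume) (fun t => φ.normed volume t * g (x - t))
    _ ≤ ∫ t, φ.normed volume t * M := by
        apply integral_mono (conv_integrand_integrable φ hgc hgs x).abs
          (φ.integrable_normed.mul_const _)
        intro t
        show |φ.normed volume t * g (x - t)| ≤ φ.normed volume t * M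
        rw [abs_mul, abs_of_nonneg (φ.nonneg_normed t)]
        
        exact mul_le_mul_of_nonneg_left (hM _) (φ.nonneg_normed t)
    _ = M := integral_normed_mul_const φ _

lemma conv_integral_zero (hgz : ∫ x, g x = 0) : ∫ x, conv φ g x = 0 := by
  rw [conv, integral_convolution _ φ.integrable_normed
    (hgc.integrable_of_hasCompactSupport hgs), hgz]
  simp

omit hgc hgs in
lemma conv_support : Function.support (conv φ g)
    ⊆ Metric.ball (0:ℝ) φ.rOut + Function.support g := by
  have := support_convolution_subset (μ := volume)
    (L := ContinuousLinearMap.lsmul ℝ ℝ) (f := φ.normed volume) (g := g)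
  rw [φ.support_normed_eq] at this
  exact this

lemma conv_locally_affine {a m u v : ℝ} (huv : ∀ z ∈ Icc u v, g z = a + m * z)
    {x : ℝ} (hx : x ∈ Ioo (u + φ.rOut) (v - φ.rOut)) : deriv (conv φ g) x = m := by
  set C := ∫ t, φ.normed volume t * t with hC
  have hint1 : Integrable (fun t => φ.normed volume t * t) :=
    Continuous.integrable_of_hasCompactSupport (φ.continuous_normed.mul continuous_id)
      φ.hasCompactSupport_normed.mul_right
  have hEq : ∀ z ∈ Ioo (u + φ.rOut) (v - φ.rOut),
      conv φ g z = (a - m * C) + m * z := by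
    intro z hz
    rw [conv_apply]
    have hptw : ∀ t, φ.normed volume t * g (z - t)
        = φ.normed volume t * (a + m * z) - m * (φ.normed volume t * t) := by
      intro t
      rcases eq_or_ne (φ.normed volume t) 0 with h0 | h0
      · simp [h0]
      · have ht : t ∈ Metric.ball (0:ℝ) φ.rOut := by
          rw [← φ.support_normed_eq (μ := volume)]; exact h0
        rw [Real.ball_eq_Ioo] at ht
        obtain ⟨ht1, ht2⟩ := ht
        have hz' : z - t ∈ Icc u v := by
          constructor
          · have := hz.1; simp only [mem_Ioo] at hz ⊢; linarith [hz.1]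
          · linarith [hz.2]
        rw [huv _ hz']; ring
    simp_rw [hptw]
    rw [integral_sub (φ.integrable_normed.mul_const _) (hint1.const_mul m),
      integral_normed_mul_const φ, integral_const_mul, ← hC]
    ring
  have hev : conv φ g =ᶠ[nhds x] fun z => (a - m * C) + m * z := by
    filter_upwards [Ioo_mem_nhds hx.1 hx.2] with z hz using hEq z hz
  rw [Filter.EventuallyEq.deriv_eq hev]
  have : HasDerivAt (fun z : ℝ => (a - m * C) + m * z) m x := by
    simpa using ((hasDerivAt_id x).const_mul m).const_add (a - m * C)
  exact this.deriv

end Conv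

section MeasureHelpers

lemma pair_disj {n : ℕ} {a b : ℕ → ℝ}
    (hsep : ∀ j k, j < k → k < n → b j ≤ a k) :
    Set.PairwiseDisjoint (↑(Finset.range n)) (fun k => Ioo (a k) (b k)) := by
  intro j hj k hk hjk
  simp only [Finset.coe_range, mem_Iio] at hj hk
  show Disjoint (Ioo (a j) (b j)) (Ioo (a k) (b k))
  rcases lt_or_gt_of_ne hjk with h | h
  · exact Set.Ioo_disjoint_Ioo.mpr
      (le_trans (min_le_left _ _) (le_trans (hsep j k h hk) (le_max_right _ _)))
  · exact Set.Ioo_disjoint_Ioo.mpr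
      (le_trans (min_le_right _ _) (le_trans (hsep k j h hj) (le_max_left _ _)))

lemma vol_union_Ioo {n : ℕ} {a b : ℕ → ℝ} {len : ℝ} (hl : 0 ≤ len)
    (hlen : ∀ k, k < n → b k - a k = len)
    (hsep : ∀ j k, j < k → k < n → b j ≤ a k) :
    volume (⋃ k ∈ Finset.range n, Ioo (a k) (b k)) = ENNReal.ofReal ((n : ℝ) * len) := by
  rw [measure_biUnion_finset (pair_disj hsep) (fun k _ => measurableSet_Ioo)]
  have : ∀ k ∈ Finset.range n, volume (Ioo (a k) (b k)) = ENNReal.ofReal len := by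
    intro k hk
    rw [Real.volume_Ioo, hlen k (Finset.mem_range.mp hk)]
  rw [Finset.sum_congr rfl this, Finset.sum_const, Finset.card_range, nsmul_eq_mul,
    ENNReal.ofReal_mul (by positivity), ENNReal.ofReal_natCast]

end MeasureHelpers

end Osc
open Osc

set_option maxHeartbeats 2000000

/-- Existence of a highly oscillating smooth profile `f` with compact support
in `(x1,x2)`, slope in `[-λ1, λ2]`, prescribed measures of the two slope phases, zero mean,
and small supremum norm. -/
theorem exists_oscillating_profile
    (x1 x2 lam1 lam2 ν : ℝ) (hx : x1 < x2)
    (h1 : 0 < lam1) (h2 : 0 < lam2) (hν : 0 < ν) :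
    ∃ f : ℝ → ℝ, ContDiff ℝ (⊤ : ℕ∞) f ∧ HasCompactSupport f ∧ tsupport f ⊆ Ioo x1 x2 ∧
      (∀ x ∈ Ioo x1 x2, -lam1 ≤ deriv f x ∧ deriv f x ≤ lam2) ∧
      |(volume {x ∈ Ioo x1 x2 | deriv f x = -lam1}).toReal
        - lam2 / (lam1 + lam2) * (x2 - x1)| < ν ∧
      |(volume {x ∈ Ioo x1 x2 | deriv f x = lam2}).toReal
        - lam1 / (lam1 + lam2) * (x2 - x1)| < ν ∧
      (∫ x in x1..x2, f x) = 0 ∧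
      sSup ((fun x => |f x|) '' Ioo x1 x2) < ν := by
  have hL : 0 < x2 - x1 := by linarith
  set L : ℝ := x2 - x1 with hLdef
  obtain ⟨β, hβ, hβν, hβL⟩ : ∃ β : ℝ, 0 < β ∧ β ≤ ν/8 ∧ β ≤ L/4 :=
    ⟨min (ν/8) (L/4), lt_min (by linarith) (by linarith), min_le_left _ _, min_le_right _ _⟩
  set y1 : ℝ := x1 + β with hy1def
  set Lp : ℝ := L - 2*β with hLpdef
  have hLp : 0 < Lp := by simp only [hLpdef]; linarith
  obtain ⟨n, hn0, hnge⟩ : ∃ n : ℕ, 0 < n ∧ 2*lam2*Lp ≤ (n:ℝ)*ν := by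
    refine ⟨⌈(2*lam2*Lp)/ν⌉₊ + 1, Nat.succ_pos _, ?_⟩
    have h1' : (2*lam2*Lp)/ν ≤ (⌈(2*lam2*Lp)/ν⌉₊ + 1 : ℝ) := by
      refine le_trans (Nat.le_ceil _) ?_
      push_cast; linarith
    rw [div_le_iff₀ hν] at h1'
    calc 2*lam2*Lp ≤ ((⌈(2*lam2*Lp)/ν⌉₊ + 1 : ℝ)) * ν := h1'
      _ = ((⌈(2*lam2*Lp)/ν⌉₊ + 1 : ℕ) : ℝ) * ν := by push_cast; ring
  have hnR : 0 < (n:ℝ) := by exact_mod_cast hn0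
  have hl12 : 0 < lam1 + lam2 := by linarith
  obtain ⟨w, p, hw0, hp, hrel, hnw, hlam2w⟩ :
      ∃ w p : ℝ, 0 < w ∧ 0 < p ∧ lam1*(w - 2*p) = 2*(lam2*p) ∧ (n:ℝ)*w = Lp ∧
        lam2*w ≤ ν/2 := by
    refine ⟨Lp/n, lam1*(Lp/n)/(2*(lam1+lam2)), div_pos hLp hnR, by positivity, ?_, ?_, ?_⟩
    · field_simp; ring
    · field_simp
    · rw [show lam2 * (Lp/(n:ℝ)) = (lam2*Lp)/(n:ℝ) from by ring, div_le_iff₀ hnR]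
      nlinarith [hnge]
  set q : ℝ := w - 2*p with hqdef
  have hq0 : 0 < q := by
    have := Osc.w_gt h1 h2 hp hrel
    simp only [hqdef]; linarith
  have h2pw : 2*p < w := by linarith [hq0]
  obtain ⟨δ, hδ0, hδp, hδq, hδβ, hδν⟩ :
      ∃ δ : ℝ, 0 < δ ∧ δ ≤ p/4 ∧ δ ≤ q/8 ∧ δ ≤ β/2 ∧ (n:ℝ)*δ ≤ ν/16 := by
    refine ⟨min (min (p/4) (q/8)) (min (β/2) (ν/(16*(n:ℝ)))), ?_,
      le_trans (min_le_left _ _) (min_le_left _ _),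
      le_trans (min_le_left _ _) (min_le_right _ _),
      le_trans (min_le_right _ _) (min_le_left _ _), ?_⟩
    · apply lt_min (lt_min (by linarith) (by linarith))
      apply lt_min (by linarith)
      positivity
    · have hδ' : min (min (p/4) (q/8)) (min (β/2) (ν/(16*(n:ℝ)))) ≤ ν/(16*(n:ℝ)) :=
        le_trans (min_le_right _ _) (min_le_right _ _)
      calc (n:ℝ) * min (min (p/4) (q/8)) (min (β/2) (ν/(16*(n:ℝ))))
          ≤ (n:ℝ) * (ν/(16*(n:ℝ))) := by
            apply mul_le_mul_of_nonneg_left hδ' hnR.le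
        _ = ν/16 := by field_simp
  set φ : ContDiffBump (0:ℝ) := ⟨δ/2, δ, by positivity, by linarith⟩ with hφdef
  have hrOut : φ.rOut = δ := rfl
  set s : ℝ → ℝ := SS lam1 lam2 p w y1 n with hsdef
  have hsc : Continuous s := SS_continuous h1 h2 hp hrel
  have hss : HasCompactSupport s := SS_hasCompactSupport h1 h2 hp hrel
  set f : ℝ → ℝ := conv φ s with hfdef
  have hy2 : y1 + (n:ℝ)*w = x2 - β := by
    rw [hnw]; simp only [hy1def, hLpdef, hLdef]; ring
  -- smoothness
  have hsmooth : ContDiff ℝ (⊤:ℕ∞) f := conv_contDiff φ hsc hss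
  have hdiff : Differentiable ℝ f := hsmooth.differentiable (by simp)
  have hTSf : TS lam1 lam2 f := conv_TS φ hsc hss (SS_TS h1 h2 hp hrel)
  -- support
  have hsupps : Function.support s ⊆ Icc y1 (y1 + (n:ℝ)*w) := by
    apply Function.support_subset_iff'.mpr
    intro x hxm
    simp only [mem_Icc, not_and_or, not_le] at hxm
    rcases hxm with hxm | hxm
    · exact SS_zero_left h1 h2 hp hrel hxm.le
    · exact SS_zero_right h1 h2 hp hrel hxm.le
  have hsupf : Function.support f ⊆ Icc (y1 - δ) (y1 + (n:ℝ)*w + δ) := by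
    intro x hxm
    obtain ⟨t, ht, z, hz, rfl⟩ := Set.mem_add.mp (conv_support φ hxm)
    rw [Real.ball_eq_Ioo] at ht
    have hz' := hsupps hz
    simp only [mem_Ioo, zero_sub, zero_add] at ht
    simp only [mem_Icc] at hz' ⊢
    constructor <;> [linarith [ht.1, hz'.1]; linarith [ht.2, hz'.2]]
  have htsupp : tsupport f ⊆ Icc (y1 - δ) (y1 + (n:ℝ)*w + δ) :=
    closure_minimal hsupf isClosed_Icc
  have hIccIoo : Icc (y1 - δ) (y1 + (n:ℝ)*w + δ) ⊆ Ioo x1 x2 := by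
    intro x hxm
    rw [hy2] at hxm
    simp only [mem_Icc] at hxm
    simp only [mem_Ioo]
    constructor
    · have : x1 + β - δ ≤ x := by simpa [hy1def] using hxm.1
      linarith
    · linarith [hxm.2]
  have hcs : HasCompactSupport f :=
    IsCompact.of_isClosed_subset isCompact_Icc (isClosed_closure) htsupp
  -- tooth positions
  have hck : ∀ k : ℕ, k < n → (k:ℝ)*w + w ≤ (n:ℝ)*w := by
    intro k hk
    have h' : (k:ℝ) + 1 ≤ (n:ℝ) := by exact_mod_cast Nat.succ_le_of_lt hk
    have hm := mul_le_mul_of_nonneg_right h' hw0.le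
    linarith [hm]
  -- derivative values on plateaus
  have hderivA : ∀ k : ℕ, k < n → ∀ x ∈ Ioo (y1 + (k:ℝ)*w + p + δ) (y1 + (k:ℝ)*w + (w - p) - δ),
      deriv f x = -lam1 := by
    intro k hk x hxm
    have haff : ∀ z ∈ Icc (y1 + (k:ℝ)*w + p) (y1 + (k:ℝ)*w + (w - p)),
        s z = (lam2*p + lam1*(y1 + (k:ℝ)*w + p)) + (-lam1) * z := by
      intro z hz
      simp only [mem_Icc] at hz
      rw [hsdef, SS_eq_tooth h1 h2 hp hrel hk (by linarith [hz.1]) (by linarith [hz.2]),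
        Zc_eq2 h1 h2 hp hrel (by linarith [hz.1]) (by linarith [hz.2])]
      ring
    exact conv_locally_affine φ hsc hss haff (by rw [hrOut]; exact hxm)
  have hderivB1 : ∀ k : ℕ, k < n → ∀ x ∈ Ioo (y1 + (k:ℝ)*w + δ) (y1 + (k:ℝ)*w + p - δ),
      deriv f x = lam2 := by
    intro k hk x hxm
    have haff : ∀ z ∈ Icc (y1 + (k:ℝ)*w) (y1 + (k:ℝ)*w + p),
        s z = (-(lam2*(y1 + (k:ℝ)*w))) + lam2 * z := by
      intro z hz
      simp only [mem_Icc] at hz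
      rw [hsdef, SS_eq_tooth h1 h2 hp hrel hk (by linarith [hz.1]) (by linarith [hz.2]),
        Zc_eq1 h1 h2 hp hrel (by linarith [hz.1]) (by linarith [hz.2])]
      ring
    exact conv_locally_affine φ hsc hss haff (by rw [hrOut]; exact hxm)
  have hderivB2 : ∀ k : ℕ, k < n → ∀ x ∈ Ioo (y1 + (k:ℝ)*w + (w - p) + δ) (y1 + (k:ℝ)*w + w - δ),
      deriv f x = lam2 := by
    intro k hk x hxm
    have haff : ∀ z ∈ Icc (y1 + (k:ℝ)*w + (w - p)) (y1 + (k:ℝ)*w + w),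
        s z = (-(lam2*(y1 + (k:ℝ)*w + w))) + lam2 * z := by
      intro z hz
      simp only [mem_Icc] at hz
      rw [hsdef, SS_eq_tooth h1 h2 hp hrel hk (by linarith [hz.1]) (by linarith [hz.2]),
        Zc_eq3 h1 h2 hp hrel (by linarith [hz.1]) (by linarith [hz.2])]
      ring
    exact conv_locally_affine φ hsc hss haff (by rw [hrOut]; exact hxm)
  -- interval inclusion in (x1,x2)
  have hIoosub : ∀ k : ℕ, k < n → ∀ x : ℝ, y1 + (k:ℝ)*w < x → x < y1 + (k:ℝ)*w + w →
      x ∈ Ioo x1 x2 := by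
    intro k hk x hx1' hx2'
    have hkw : (0:ℝ) ≤ (k:ℝ)*w := by positivity
    have h2' := hck k hk
    constructor
    · simp only [hy1def] at hx1'; linarith
    · have : x < y1 + (n:ℝ)*w := by linarith
      rw [hy2] at this; linarith
  -- the two measure estimates
  have hderivcont : Continuous (deriv f) := hsmooth.continuous_deriv (mod_cast le_top)
  set A := {x ∈ Ioo x1 x2 | deriv f x = -lam1} with hAdef
  set B := {x ∈ Ioo x1 x2 | deriv f x = lam2} with hBdef
  have hAmeas : MeasurableSet A :=
    measurableSet_Ioo.inter (hderivcont.measurable (measurableSet_singleton (-lam1)))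
  have hBmeas : MeasurableSet B :=
    measurableSet_Ioo.inter (hderivcont.measurable (measurableSet_singleton lam2))
  have hdisjAB : Disjoint A B := by
    rw [Set.disjoint_left]
    rintro x ⟨_, hdA⟩ ⟨_, hdB⟩
    rw [hdA] at hdB
    linarith
  -- lower bound for A
  have hUA : volume (⋃ k ∈ Finset.range n,
      Ioo (y1 + (k:ℝ)*w + p + δ) (y1 + (k:ℝ)*w + (w - p) - δ)) = ENNReal.ofReal ((n:ℝ) * (q - 2*δ)) := by
    apply vol_union_Ioo (by linarith)
    · intro k _; simp only [hqdef]; ring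
    · intro j k hjk hk
      have h' : (j:ℝ) + 1 ≤ (k:ℝ) := by exact_mod_cast Nat.succ_le_of_lt hjk
      have hm := mul_le_mul_of_nonneg_right h' hw0.le
      linarith [hm, hδ0, hp, h2pw]
  have hUAsub : (⋃ k ∈ Finset.range n,
      Ioo (y1 + (k:ℝ)*w + p + δ) (y1 + (k:ℝ)*w + (w - p) - δ)) ⊆ A := by
    refine Set.iUnion₂_subset (fun k hk x hxm => ?_)
    rw [Finset.mem_range] at hk
    simp only [mem_Ioo] at hxm
    exact ⟨hIoosub k hk x (by linarith [hxm.1]) (by linarith [hxm.2]),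
      hderivA k hk x (by simp only [mem_Ioo]; exact hxm)⟩
  have hAlow : ENNReal.ofReal ((n:ℝ) * (q - 2*δ)) ≤ volume A := by
    rw [← hUA]; exact measure_mono hUAsub
  -- lower bound for B
  have hU1 : volume (⋃ k ∈ Finset.range n,
      Ioo (y1 + (k:ℝ)*w + δ) (y1 + (k:ℝ)*w + p - δ)) = ENNReal.ofReal ((n:ℝ) * (p - 2*δ)) := by
    apply vol_union_Ioo (by linarith)
    · intro k _; ring
    · intro j k hjk hk
      have h' : (j:ℝ) + 1 ≤ (k:ℝ) := by exact_mod_cast Nat.succ_le_of_lt hjk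
      have hm := mul_le_mul_of_nonneg_right h' hw0.le
      linarith [hm, hδ0, hp, h2pw]
  have hU2 : volume (⋃ k ∈ Finset.range n,
      Ioo (y1 + (k:ℝ)*w + (w - p) + δ) (y1 + (k:ℝ)*w + w - δ)) = ENNReal.ofReal ((n:ℝ) * (p - 2*δ)) := by
    apply vol_union_Ioo (by linarith)
    · intro k _; ring
    · intro j k hjk hk
      have h' : (j:ℝ) + 1 ≤ (k:ℝ) := by exact_mod_cast Nat.succ_le_of_lt hjk
      have hm := mul_le_mul_of_nonneg_right h' hw0.le
      linarith [hm, hδ0, hp, h2pw]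
  have hU1sub : (⋃ k ∈ Finset.range n,
      Ioo (y1 + (k:ℝ)*w + δ) (y1 + (k:ℝ)*w + p - δ)) ⊆ B := by
    refine Set.iUnion₂_subset (fun k hk x hxm => ?_)
    rw [Finset.mem_range] at hk
    simp only [mem_Ioo] at hxm
    exact ⟨hIoosub k hk x (by linarith [hxm.1]) (by linarith [hxm.2]),
      hderivB1 k hk x (by simp only [mem_Ioo]; exact hxm)⟩
  have hU2sub : (⋃ k ∈ Finset.range n,
      Ioo (y1 + (k:ℝ)*w + (w - p) + δ) (y1 + (k:ℝ)*w + w - δ)) ⊆ B := by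
    refine Set.iUnion₂_subset (fun k hk x hxm => ?_)
    rw [Finset.mem_range] at hk
    simp only [mem_Ioo] at hxm
    exact ⟨hIoosub k hk x (by linarith [hxm.1]) (by linarith [hxm.2]),
      hderivB2 k hk x (by simp only [mem_Ioo]; exact hxm)⟩
  have hU12disj : Disjoint (⋃ k ∈ Finset.range n,
      Ioo (y1 + (k:ℝ)*w + δ) (y1 + (k:ℝ)*w + p - δ))
      (⋃ k ∈ Finset.range n,
      Ioo (y1 + (k:ℝ)*w + (w - p) + δ) (y1 + (k:ℝ)*w + w - δ)) := by
    rw [Set.disjoint_left]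
    intro x hx1m hx2m
    simp only [mem_iUnion, Finset.mem_range, mem_Ioo] at hx1m hx2m
    obtain ⟨k, hk, hk1, hk2⟩ := hx1m
    obtain ⟨j, hj, hj1, hj2⟩ := hx2m
    rcases le_or_gt k j with hkj | hkj
    · have h' : (k:ℝ) ≤ (j:ℝ) := by exact_mod_cast hkj
      have hm := mul_le_mul_of_nonneg_right h' hw0.le
      linarith [hm, hδ0, h2pw]
    · have h' : (j:ℝ) + 1 ≤ (k:ℝ) := by exact_mod_cast Nat.succ_le_of_lt hkj
      have hm := mul_le_mul_of_nonneg_right h' hw0.le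
      linarith [hm, hδ0, h2pw]
  have hBlow : ENNReal.ofReal ((n:ℝ) * (p - 2*δ)) + ENNReal.ofReal ((n:ℝ) * (p - 2*δ))
      ≤ volume B :=
    calc ENNReal.ofReal ((n:ℝ) * (p - 2*δ)) + ENNReal.ofReal ((n:ℝ) * (p - 2*δ))
        = volume (⋃ k ∈ Finset.range n,
            Ioo (y1 + (k:ℝ)*w + δ) (y1 + (k:ℝ)*w + p - δ))
          + volume (⋃ k ∈ Finset.range n,
            Ioo (y1 + (k:ℝ)*w + (w - p) + δ) (y1 + (k:ℝ)*w + w - δ)) := by rw [hU1, hU2]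
      _ = volume ((⋃ k ∈ Finset.range n,
            Ioo (y1 + (k:ℝ)*w + δ) (y1 + (k:ℝ)*w + p - δ))
          ∪ (⋃ k ∈ Finset.range n,
            Ioo (y1 + (k:ℝ)*w + (w - p) + δ) (y1 + (k:ℝ)*w + w - δ))) :=
          (measure_union hU12disj
            ((Finset.range n).measurableSet_biUnion (fun k _ => measurableSet_Ioo))).symm
      _ ≤ volume B := measure_mono (Set.union_subset hU1sub hU2sub)
  -- upper bounds via disjointness
  have hABsum : volume A + volume B ≤ ENNReal.ofReal L := by
    rw [← measure_union hdisjAB hBmeas]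
    calc volume (A ∪ B) ≤ volume (Ioo x1 x2) :=
          measure_mono (Set.union_subset (fun x hxm => hxm.1) (fun x hxm => hxm.1))
      _ = ENNReal.ofReal L := by rw [Real.volume_Ioo]
  -- convert to reals
  have hAfin : volume A ≠ ⊤ :=
    (lt_of_le_of_lt (measure_mono (fun x (hxm : x ∈ A) => hxm.1))
      (by rw [Real.volume_Ioo]; exact ENNReal.ofReal_lt_top)).ne
  have hBfin : volume B ≠ ⊤ :=
    (lt_of_le_of_lt (measure_mono (fun x (hxm : x ∈ B) => hxm.1))
      (by rw [Real.volume_Ioo]; exact ENNReal.ofReal_lt_top)).ne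
  set rA := (volume A).toReal with hrAdef
  set rB := (volume B).toReal with hrBdef
  have hrAlow : (n:ℝ) * (q - 2*δ) ≤ rA := by
    have h0' : (0:ℝ) ≤ (n:ℝ) * (q - 2*δ) := mul_nonneg hnR.le (by linarith)
    have := ENNReal.toReal_mono hAfin hAlow
    rwa [ENNReal.toReal_ofReal h0'] at this
  have hrBlow : (n:ℝ) * (p - 2*δ) + (n:ℝ) * (p - 2*δ) ≤ rB := by
    have h0' : (0:ℝ) ≤ (n:ℝ) * (p - 2*δ) := mul_nonneg hnR.le (by linarith)
    have := ENNReal.toReal_mono hBfin hBlow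
    rwa [ENNReal.toReal_add ENNReal.ofReal_ne_top ENNReal.ofReal_ne_top,
      ENNReal.toReal_ofReal h0'] at this
  have hrABsum : rA + rB ≤ L := by
    have := ENNReal.toReal_mono ENNReal.ofReal_ne_top hABsum
    rwa [ENNReal.toReal_add hAfin hBfin, ENNReal.toReal_ofReal hL.le] at this
  -- key algebraic identities
  have hq' : q * (lam1+lam2) = lam2 * w := by linear_combination hrel + lam2 * hqdef
  have hnq : (n:ℝ) * q = lam2/(lam1+lam2) * Lp := by
    have hqw : q = lam2/(lam1+lam2) * w := by
      field_simp
      linear_combination hq'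
    rw [hqw]
    calc (n:ℝ) * (lam2/(lam1+lam2) * w) = lam2/(lam1+lam2) * ((n:ℝ)*w) := by ring
      _ = lam2/(lam1+lam2) * Lp := by rw [hnw]
  have hnp : (n:ℝ) * p + (n:ℝ) * p = lam1/(lam1+lam2) * Lp := by
    have hp' : p + p = lam1/(lam1+lam2) * w := by
      field_simp
      linear_combination (-1 : ℝ) * hq' + (lam1+lam2) * hqdef
    calc (n:ℝ) * p + (n:ℝ) * p = (n:ℝ) * (p + p) := by ring
      _ = (n:ℝ) * (lam1/(lam1+lam2) * w) := by rw [hp']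
      _ = lam1/(lam1+lam2) * ((n:ℝ)*w) := by ring
      _ = lam1/(lam1+lam2) * Lp := by rw [hnw]
  have hcoef2 : lam2/(lam1+lam2) ≤ 1 := by
    rw [div_le_one hl12]; linarith
  have hcoef1 : lam1/(lam1+lam2) ≤ 1 := by
    rw [div_le_one hl12]; linarith
  have hcoef2' : 0 < lam2/(lam1+lam2) := by positivity
  have hcoef1' : 0 < lam1/(lam1+lam2) := by positivity
  have habL : lam2/(lam1+lam2) * L + lam1/(lam1+lam2) * L = L := by
    field_simp; ring
  have hLpL : lam2/(lam1+lam2) * Lp ≥ lam2/(lam1+lam2) * L - 2*β := by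
    have he : lam2/(lam1+lam2) * Lp = lam2/(lam1+lam2) * L - lam2/(lam1+lam2) * (2*β) := by
      simp only [hLpdef]; ring
    have hb : lam2/(lam1+lam2) * (2*β) ≤ 2*β := mul_le_of_le_one_left (by linarith) hcoef2
    linarith [he, hb]
  have hLpL' : lam1/(lam1+lam2) * Lp ≥ lam1/(lam1+lam2) * L - 2*β := by
    have he : lam1/(lam1+lam2) * Lp = lam1/(lam1+lam2) * L - lam1/(lam1+lam2) * (2*β) := by
      simp only [hLpdef]; ring
    have hb : lam1/(lam1+lam2) * (2*β) ≤ 2*β := mul_le_of_le_one_left (by linarith) hcoef1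
    linarith [he, hb]
  -- final estimates
  have hrAlow' : lam2/(lam1+lam2) * L - ν/2 ≤ rA := by
    have : (n:ℝ) * (q - 2*δ) = (n:ℝ)*q - 2*((n:ℝ)*δ) := by ring
    rw [this, hnq] at hrAlow
    linarith [hδν, hβν]
  have hrBlow' : lam1/(lam1+lam2) * L - ν/2 ≤ rB := by
    have : (n:ℝ) * (p - 2*δ) + (n:ℝ) * (p - 2*δ)
        = ((n:ℝ)*p + (n:ℝ)*p) - 4*((n:ℝ)*δ) := by ring
    rw [this, hnp] at hrBlow
    linarith [hδν, hβν]
  have hAest : |rA - lam2 / (lam1 + lam2) * (x2 - x1)| < ν := by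
    rw [← hLdef, abs_lt]
    constructor
    · linarith
    · have hup : rA ≤ L - rB := by linarith
      have h2' : L - rB ≤ lam2/(lam1+lam2) * L + ν/2 := by linarith
      linarith
  have hBest : |rB - lam1 / (lam1 + lam2) * (x2 - x1)| < ν := by
    rw [← hLdef, abs_lt]
    constructor
    · linarith
    · have hup : rB ≤ L - rA := by linarith
      have h2' : L - rA ≤ lam1/(lam1+lam2) * L + ν/2 := by linarith
      linarith
  have hint0 : (∫ x in x1..x2, f x) = 0 := by
    rw [intervalIntegral.integral_of_le hx.le]
    rw [setIntegral_eq_integral_of_forall_compl_eq_zero (fun x hxm => ?_)]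
    · exact conv_integral_zero φ hsc hss (SS_integral_zero h1 h2 hp hrel)
    · by_contra hne
      have := hIccIoo (hsupf hne)
      simp only [mem_Ioc, mem_Ioo, not_and_or, not_lt, not_le] at hxm this
      rcases hxm with hxm | hxm <;> linarith [this.1, this.2]
  have hsup : sSup ((fun x => |f x|) '' Ioo x1 x2) < ν := by
    have hbd : ∀ x : ℝ, |f x| ≤ lam2 * p :=
      conv_abs_le φ hsc hss (by positivity) (SS_abs_le h1 h2 hp hrel)
    have hltν : lam2 * p ≤ ν/2 := by
      have hpw : p ≤ w := by linarith
      have := mul_le_mul_of_nonneg_left hpw h2.le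
      linarith
    have hle : sSup ((fun x => |f x|) '' Ioo x1 x2) ≤ ν/2 := by
      apply Real.sSup_le _ (by linarith)
      rintro y ⟨x, _, rfl⟩
      exact le_trans (hbd x) hltν
    linarith
  exact ⟨f, hsmooth, hcs, fun x hxm => hIccIoo (htsupp hxm),
    fun x _ => hTSf.deriv_bounds (hdiff x), hAest, hBest, hint0, hsup⟩
end
end

section
/- For any numbers r1, r2 with σ(s2) < r1 < r2 < σ(s1), there exist a function σ̃ : ℝ → ℝ and constants 0 < λ̃ ≤ Λ̃ such that: σ̃ is continuously differentiable on ℝ with α-Hölder continuous derivative; σ̃ = σ on (−∞, s^−_{r1}] ∪ [s^+_{r2}, ∞); σ̃ < σ on (s^−_{r1}, s^−_{r2}]; σ̃ > σ on [s^+_{r1}, s^+_{r2}); and λ̃ ≤ σ̃' ≤ Λ̃ on ℝ. -/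
open MeasureTheory Set
open scoped NNReal

noncomputable section

/-- The open space-time domain `Ω_T = (0,1) × (0,T)`. -/
def OmegaT (T : ℝ) : Set (ℝ × ℝ) := Ioo (0:ℝ) 1 ×ˢ Ioo (0:ℝ) T

/-- The closed space-time domain `cl Ω_T = [0,1] × [0,T]`. -/
def ClOmegaT (T : ℝ) : Set (ℝ × ℝ) := Icc (0:ℝ) 1 ×ˢ Icc (0:ℝ) T

/-- Parabolic α-Hölder continuity on `cl Ω_T`. -/
def ParabolicHolder (α T : ℝ) (g : ℝ → ℝ → ℝ) : Prop :=
  ∃ C : ℝ, ∀ x ∈ Icc (0:ℝ) 1, ∀ y ∈ Icc (0:ℝ) 1, ∀ t ∈ Icc (0:ℝ) T, ∀ s ∈ Icc (0:ℝ) T,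
    |g x t - g y s| ≤ C * (|x - y| ^ α + |t - s| ^ (α / 2))

/-- Hypotheses on the forward-backward diffusion flux `σ`, with derivative function `σ'`
(one-sided derivative on `(-∞,s1]` and `[s2,∞)`). -/
structure FluxHyp (α s1 s2 lam Lam : ℝ) (sigma sigma' : ℝ → ℝ) : Prop where
  alpha_pos : 0 < α
  alpha_lt_one : α < 1
  s1_pos : 0 < s1
  s1_lt_s2 : s1 < s2
  lam_pos : 0 < lam
  lam_le_Lam : lam ≤ Lam
  deriv_left : ∀ s ∈ Iic s1, HasDerivWithinAt sigma (sigma' s) (Iic s1) s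
  deriv_right : ∀ s ∈ Ici s2, HasDerivWithinAt sigma (sigma' s) (Ici s2) s
  holder_left : ∃ C : ℝ, ∀ s ∈ Iic s1, ∀ t ∈ Iic s1, |sigma' s - sigma' t| ≤ C * |s - t| ^ α
  holder_right : ∃ C : ℝ, ∀ s ∈ Ici s2, ∀ t ∈ Ici s2, |sigma' s - sigma' t| ≤ C * |s - t| ^ α
  deriv_pos : ∀ s : ℝ, s < s1 ∨ s2 < s → 0 < sigma' s
  deriv_lb : ∀ s : ℝ, s < s1 / 2 ∨ 2 * s2 < s → lam ≤ sigma' s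
  deriv_ub : ∀ s : ℝ, s < s1 / 2 ∨ 2 * s2 < s → sigma' s ≤ Lam
  sigma_zero : sigma 0 = 0
  sigma_s2_lt_s1 : sigma s2 < sigma s1
  sigma_s2_nonneg : 0 ≤ sigma s2

/-- Hypotheses on the convection coefficient `b` (with spatial derivative `bx`),
reaction coefficient `c`, source `f` and the function `d` with `c = b_x + d(t)`. -/
structure CoeffHyp (α T : ℝ) (b bx c f : ℝ → ℝ → ℝ) (d : ℝ → ℝ) : Prop where
  b_cont : ContinuousOn (fun p : ℝ × ℝ => b p.1 p.2) (ClOmegaT T)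
  b_holder : ParabolicHolder α T b
  b_deriv : ∀ p ∈ ClOmegaT T, HasDerivWithinAt (fun y => b y p.2) (bx p.1 p.2) (Icc (0:ℝ) 1) p.1
  bx_cont : ContinuousOn (fun p : ℝ × ℝ => bx p.1 p.2) (ClOmegaT T)
  c_cont : ContinuousOn (fun p : ℝ × ℝ => c p.1 p.2) (ClOmegaT T)
  c_holder : ParabolicHolder α T c
  f_cont : ContinuousOn (fun p : ℝ × ℝ => f p.1 p.2) (ClOmegaT T)
  f_holder : ParabolicHolder α T f
  d_cont : ContinuousOn d (Icc (0:ℝ) T)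
  c_eq : ∀ p ∈ ClOmegaT T, c p.1 p.2 = bx p.1 p.2 + d p.2

/-- Hypotheses on the initial datum `u0 ∈ C^{2+α}([0,1])` with `u0'(0) = u0'(1) = 0`. -/
structure InitHyp (α : ℝ) (u0 u0' u0'' : ℝ → ℝ) : Prop where
  deriv1 : ∀ x ∈ Icc (0:ℝ) 1, HasDerivWithinAt u0 (u0' x) (Icc (0:ℝ) 1) x
  deriv2 : ∀ x ∈ Icc (0:ℝ) 1, HasDerivWithinAt u0' (u0'' x) (Icc (0:ℝ) 1) x
  holder : ∃ C : ℝ, ∀ x ∈ Icc (0:ℝ) 1, ∀ y ∈ Icc (0:ℝ) 1, |u0'' x - u0'' y| ≤ C * |x - y| ^ α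
  compat0 : u0' 0 = 0
  compat1 : u0' 1 = 0

/-- `u` (with a.e. spatial derivative `ux`) is a Lipschitz (weak) solution of the
initial–Neumann problem for `u_t = (σ(u_x))_x + b u_x + c u + f` on `Ω_T`. -/
def IsLipschitzSolution (T : ℝ) (sigma : ℝ → ℝ) (b c f : ℝ → ℝ → ℝ) (u0 : ℝ → ℝ)
    (u ux : ℝ → ℝ → ℝ) : Prop :=
  (∃ K : ℝ≥0, LipschitzOnWith K (fun p : ℝ × ℝ => u p.1 p.2) (ClOmegaT T)) ∧
  (∀ᵐ p ∂(volume.restrict (OmegaT T)), HasDerivAt (fun y => u y p.2) (ux p.1 p.2) p.1) ∧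
  (∀ ζ : ℝ → ℝ → ℝ, ContDiff ℝ (⊤ : ℕ∞) (fun p : ℝ × ℝ => ζ p.1 p.2) →
    ∀ s ∈ Icc (0:ℝ) T,
      (∫ t in Ioo (0:ℝ) s, ∫ x in Ioo (0:ℝ) 1,
        (u x t * deriv (fun τ => ζ x τ) t - sigma (ux x t) * deriv (fun y => ζ y t) x
          + (b x t * ux x t + c x t * u x t + f x t) * ζ x t))
      = ∫ x in Ioo (0:ℝ) 1, (u x s * ζ x s - u0 x * ζ x 0))

/-- The forward-phase constraint: `u_x ∈ (-∞,s1) ∪ (s2,∞)` a.e. in `Ω_T`. -/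
def ForwardRange (T s1 s2 : ℝ) (ux : ℝ → ℝ → ℝ) : Prop :=
  ∀ᵐ p ∂(volume.restrict (OmegaT T)), ux p.1 p.2 < s1 ∨ s2 < ux p.1 p.2

section HelperLemmas
open Filter
private lemma holder_glue {α C1 C2 v : ℝ} {f : ℝ → ℝ} {S T : Set ℝ}
    (hα : 0 ≤ α) (hC1 : 0 ≤ C1) (hC2 : 0 ≤ C2)
    (hS : S ⊆ Iic v) (hT : T ⊆ Ici v) (hvS : v ∈ S) (hvT : v ∈ T)
    (h1 : ∀ s ∈ S, ∀ t ∈ S, |f s - f t| ≤ C1 * |s - t| ^ α)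
    (h2 : ∀ s ∈ T, ∀ t ∈ T, |f s - f t| ≤ C2 * |s - t| ^ α) :
    ∀ s ∈ S ∪ T, ∀ t ∈ S ∪ T, |f s - f t| ≤ (C1 + C2) * |s - t| ^ α := by
  have rnn : ∀ x y : ℝ, (0:ℝ) ≤ |x - y| ^ α := fun x y => Real.rpow_nonneg (abs_nonneg _) _
  have key : ∀ s ∈ S, ∀ t ∈ T, |f s - f t| ≤ (C1 + C2) * |s - t| ^ α := by
    intro s hs t ht
    have hsv : s ≤ v := hS hs
    have hvt : v ≤ t := hT ht
    have e1 : |s - v| ≤ |s - t| := by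
      rw [abs_of_nonpos (by linarith), abs_of_nonpos (by linarith)]; linarith
    have e2 : |v - t| ≤ |s - t| := by
      rw [abs_of_nonpos (by linarith), abs_of_nonpos (by linarith)]; linarith
    have p1 : |s - v| ^ α ≤ |s - t| ^ α := Real.rpow_le_rpow (abs_nonneg _) e1 hα
    have p2 : |v - t| ^ α ≤ |s - t| ^ α := Real.rpow_le_rpow (abs_nonneg _) e2 hα
    have h1' := h1 s hs v hvS
    have h2' := h2 v hvT t ht
    have b1 : C1 * |s - v| ^ α ≤ C1 * |s - t| ^ α := mul_le_mul_of_nonneg_left p1 hC1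
    have b2 : C2 * |v - t| ^ α ≤ C2 * |s - t| ^ α := mul_le_mul_of_nonneg_left p2 hC2
    calc |f s - f t| ≤ |f s - f v| + |f v - f t| := abs_sub_le _ _ _
      _ ≤ C1 * |s - t| ^ α + C2 * |s - t| ^ α := by linarith
      _ = (C1 + C2) * |s - t| ^ α := by ring
  intro s hs t ht
  have hmul1 : ∀ x y : ℝ, C1 * |x - y| ^ α ≤ (C1 + C2) * |x - y| ^ α := fun x y =>
    mul_le_mul_of_nonneg_right (by linarith) (rnn x y)
  have hmul2 : ∀ x y : ℝ, C2 * |x - y| ^ α ≤ (C1 + C2) * |x - y| ^ α := fun x y =>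
    mul_le_mul_of_nonneg_right (by linarith) (rnn x y)
  rcases hs with hs | hs <;> rcases ht with ht | ht
  · exact (h1 s hs t ht).trans (hmul1 s t)
  · exact key s hs t ht
  · rw [abs_sub_comm, abs_sub_comm s t]; exact key t ht s hs
  · exact (h2 s hs t ht).trans (hmul2 s t)
private lemma abs_le_rpow_mul {x M α : ℝ} (hα0 : 0 < α) (hα1 : α ≤ 1) (hx : 0 ≤ x)
    (hM : 0 ≤ M) (h : x ≤ M) : x ≤ M ^ (1 - α) * x ^ α := by
  rcases eq_or_lt_of_le hx with hx0 | hx0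
  · rw [← hx0, Real.zero_rpow hα0.ne', mul_zero]
  · have hid : x = x ^ (1 - α) * x ^ α := by
      rw [← Real.rpow_add hx0]; norm_num
    nth_rewrite 1 [hid]
    exact mul_le_mul_of_nonneg_right
      (Real.rpow_le_rpow hx h (by linarith : (0:ℝ) ≤ 1 - α)) (Real.rpow_nonneg hx α)

private lemma continuous_of_holder {α C : ℝ} {f : ℝ → ℝ} (hα : 0 < α)
    (h : ∀ s t : ℝ, |f s - f t| ≤ C * |s - t| ^ α) : Continuous f := by
  rw [continuous_iff_continuousAt]
  intro x
  have hb : Tendsto (fun y => C * |y - x| ^ α) (nhds x) (nhds 0) := by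
    have hc : Continuous fun y : ℝ => C * |y - x| ^ α := by
      apply Continuous.mul continuous_const
      exact (continuous_id.sub continuous_const).abs.rpow_const (fun y => Or.inr hα.le)
    have := hc.tendsto x
    simpa [Real.zero_rpow hα.ne'] using this
  rw [ContinuousAt, tendsto_iff_dist_tendsto_zero]
  apply squeeze_zero (fun y => dist_nonneg) (fun y => ?_) hb
  rw [Real.dist_eq]; exact h y x

private lemma hasDerivAt_posPartSq (x : ℝ) :
    HasDerivAt (fun y : ℝ => max y 0 ^ 2) (2 * max x 0) x := by
  rcases lt_trichotomy x 0 with hx | hx | hx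
  · have he : (fun y : ℝ => max y 0 ^ 2) =ᶠ[nhds x] fun _ => (0:ℝ) := by
      filter_upwards [Iio_mem_nhds hx] with y hy
      simp [max_eq_right (mem_Iio.1 hy).le]
    rw [max_eq_right hx.le, mul_zero]
    exact (hasDerivAt_const x (0:ℝ)).congr_of_eventuallyEq he
  · subst hx
    have hl : HasDerivWithinAt (fun y : ℝ => max y 0 ^ 2) 0 (Iic 0) 0 := by
      apply ((hasDerivAt_const (0:ℝ) (0:ℝ)).hasDerivWithinAt).congr
      · intro y hy; simp [max_eq_right (mem_Iic.1 hy)]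
      · simp
    have hr : HasDerivWithinAt (fun y : ℝ => max y 0 ^ 2) 0 (Ici 0) 0 := by
      have h2 : HasDerivAt (fun y : ℝ => y ^ 2) ((2:ℕ) * (0:ℝ) ^ (2-1)) 0 := hasDerivAt_pow 2 0
      apply (h2.hasDerivWithinAt.congr (fun y hy => by simp [max_eq_left (mem_Ici.1 hy)])
        (by simp)).congr_deriv
      simp
    have huniv := hl.union hr
    rw [Iic_union_Ici] at huniv
    rw [max_self, mul_zero]
    exact hasDerivWithinAt_univ.mp huniv
  · have he : (fun y : ℝ => max y 0 ^ 2) =ᶠ[nhds x] fun y => y ^ 2 := by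
      filter_upwards [Ioi_mem_nhds hx] with y hy
      simp [max_eq_left (mem_Ioi.1 hy).le]
    rw [max_eq_left hx.le]
    have h2 : HasDerivAt (fun y : ℝ => y ^ 2) ((2:ℕ) * x ^ (2-1)) x := hasDerivAt_pow 2 x
    exact (h2.congr_of_eventuallyEq he).congr_deriv (by simp)

private lemma Qpos {Δ m0 m1 u : ℝ} (hΔ : 0 < Δ) (h0 : 0 < m0) (h1 : 0 < m1)
    (h0' : m0 ≤ Δ / 2) (h1' : m1 ≤ Δ / 2) (hu0 : 0 ≤ u) (hu1 : u ≤ 1) :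
    0 < Δ * 6 * u * (1 - u) + m0 * (1 - u) * (1 - 3 * u) + m1 * u * (3 * u - 2) := by
  rcases le_or_gt u (1/4) with hc | hc
  · nlinarith [mul_nonneg hΔ.le hu0, mul_pos h0 (by nlinarith : (0:ℝ) < (1-u)*(1-3*u)),
      mul_nonneg (mul_nonneg hΔ.le hu0) (by linarith : (0:ℝ) ≤ 1 - u),
      mul_nonneg h1.le hu0]
  · rcases le_or_gt u (3/4) with hc2 | hc2
    · nlinarith [mul_nonneg hΔ.le (by nlinarith : (0:ℝ) ≤ u*(1-u) - 3/16),
        mul_nonneg h0.le (by nlinarith [sq_nonneg (u - 2/3)] : (0:ℝ) ≤ (1-u)*(1-3*u) + 1/3),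
        mul_nonneg h1.le (by nlinarith [sq_nonneg (u - 1/3)] : (0:ℝ) ≤ u*(3*u-2) + 1/3)]
    · nlinarith [mul_nonneg (mul_nonneg hΔ.le hu0) (by linarith : (0:ℝ) ≤ 1 - u),
        mul_pos h1 (by nlinarith : (0:ℝ) < u * (3*u - 2)),
        mul_nonneg h0.le (by linarith : (0:ℝ) ≤ 1 - u)]

private lemma hasDerivAt_rho {c ε : ℝ} (hε : 0 < ε) (u : ℝ) :
    HasDerivAt (fun v : ℝ => (1-c)*v/Real.sqrt (v^2+ε^2))
      ((1-c)*ε^2/(Real.sqrt (u^2+ε^2))^3) u := by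
  have hS : 0 < Real.sqrt (u^2+ε^2) := Real.sqrt_pos.2 (by positivity)
  have h1 : HasDerivAt (fun v : ℝ => v^2 + ε^2) (2*u) u := by
    simpa using (hasDerivAt_pow 2 u).add_const (ε^2)
  have h2 := h1.sqrt (by positivity : u^2 + ε^2 ≠ 0)
  have h3 := h2.inv hS.ne'
  have h4 := ((hasDerivAt_id u).const_mul (1-c)).mul h3
  have heq : (fun v : ℝ => (1-c)*v/Real.sqrt (v^2+ε^2))
      = fun v : ℝ => ((1-c)*v) * (Real.sqrt (v^2+ε^2))⁻¹ := by
    funext v; rw [div_eq_mul_inv]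
  rw [heq]
  convert h4 using 1
  rfl
  rfl
  rfl
  simp only [Pi.inv_apply, id_eq]
  have hsq : Real.sqrt (u^2+ε^2)^2 = u^2 + ε^2 := Real.sq_sqrt (by positivity)
  set S := Real.sqrt (u^2+ε^2) with hSdef
  rw [show ε^2 = S^2 - u^2 by linarith]
  field_simp
  ring


private lemma le_sqrt_self {u ε : ℝ} (hε : 0 < ε) : u ≤ Real.sqrt (u^2+ε^2) := by
  have hS : 0 ≤ Real.sqrt (u^2+ε^2) := Real.sqrt_nonneg _
  have hsq : Real.sqrt (u^2+ε^2)^2 = u^2 + ε^2 := Real.sq_sqrt (by positivity)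
  nlinarith [sq_nonneg (u - Real.sqrt (u^2+ε^2)), sq_nonneg (u + Real.sqrt (u^2+ε^2))]

private lemma rho_le {c ε u : ℝ} (hc1 : c ≤ 1) (hε : 0 < ε) (hu : 0 ≤ u) :
    (1-c)*u/Real.sqrt (u^2+ε^2) ≤ 1 - c := by
  have hS : 0 < Real.sqrt (u^2+ε^2) := Real.sqrt_pos.2 (by positivity)
  rw [div_le_iff₀ hS]
  have := le_sqrt_self (u := u) hε
  nlinarith

private lemma rho_nonneg {c ε u : ℝ} (hc1 : c ≤ 1) (hε : 0 < ε) (hu : 0 ≤ u) :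
    0 ≤ (1-c)*u/Real.sqrt (u^2+ε^2) := by
  have hS : 0 ≤ Real.sqrt (u^2+ε^2) := Real.sqrt_nonneg _
  have : 0 ≤ (1-c)*u := mul_nonneg (by linarith) hu
  positivity

private lemma rho_lip {c ε : ℝ} (hc : 0 ≤ c) (hc1 : c ≤ 1) (hε : 0 < ε) (u v : ℝ) :
    |(1-c)*u/Real.sqrt (u^2+ε^2) - (1-c)*v/Real.sqrt (v^2+ε^2)| ≤ ε⁻¹ * |u - v| := by
  have hbound : ∀ w ∈ (univ : Set ℝ),
      ‖(1-c)*ε^2/(Real.sqrt (w^2+ε^2))^3‖ ≤ ε⁻¹ := by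
    intro w _
    have hS : 0 < Real.sqrt (w^2+ε^2) := Real.sqrt_pos.2 (by positivity)
    have hεS : ε ≤ Real.sqrt (w^2+ε^2) := by
      have hsq : Real.sqrt (w^2+ε^2)^2 = w^2 + ε^2 := Real.sq_sqrt (by positivity)
      nlinarith [sq_nonneg w]
    have h3 : ε^3 ≤ (Real.sqrt (w^2+ε^2))^3 := pow_le_pow_left₀ hε.le hεS 3
    rw [Real.norm_eq_abs, abs_of_nonneg (div_nonneg (mul_nonneg (by linarith) (sq_nonneg ε)) (by positivity))]
    rw [div_le_iff₀ (by positivity)]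
    have hinv : ε⁻¹ * ε^3 = ε^2 := by field_simp
    calc (1-c)*ε^2 ≤ 1*ε^2 := by nlinarith [sq_nonneg ε]
      _ = ε⁻¹ * ε^3 := by rw [hinv]; ring
      _ ≤ ε⁻¹ * (Real.sqrt (w^2+ε^2))^3 :=
          mul_le_mul_of_nonneg_left h3 (by positivity)
  have key := Convex.norm_image_sub_le_of_norm_hasDerivWithin_le
    (f := fun w : ℝ => (1-c)*w/Real.sqrt (w^2+ε^2))
    (f' := fun w : ℝ => (1-c)*ε^2/(Real.sqrt (w^2+ε^2))^3) (s := univ) (C := ε⁻¹)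
    (fun w _ => (hasDerivAt_rho hε w).hasDerivWithinAt) hbound convex_univ
    (mem_univ v) (mem_univ u)
  simpa [Real.norm_eq_abs] using key

private lemma sqrt_le_add {D ε : ℝ} (hD : 0 ≤ D) (hε : 0 ≤ ε) :
    Real.sqrt (D^2+ε^2) ≤ D + ε := by
  calc Real.sqrt (D^2+ε^2) ≤ Real.sqrt ((D+ε)^2) :=
        Real.sqrt_le_sqrt (by nlinarith [mul_nonneg hD hε])
    _ = D + ε := Real.sqrt_sq (by linarith)

private lemma one_sub_rho_bound {c e D : ℝ} (hD : 0 < D) (hc : 0 ≤ c) (hc1 : c ≤ 1)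
    (he : 0 < e) : 1 - (1-c)*D/Real.sqrt (D^2+(D*e)^2) ≤ c + e := by
  have hεpos : 0 < D*e := mul_pos hD he
  have hSD1 : D ≤ Real.sqrt (D^2+(D*e)^2) := le_sqrt_self hεpos
  have hSDpos : 0 < Real.sqrt (D^2+(D*e)^2) := lt_of_lt_of_le hD hSD1
  have hSD3 : Real.sqrt (D^2+(D*e)^2) ≤ D + D*e := sqrt_le_add hD.le hεpos.le
  have hlow : (1-c)*D/(D+D*e) ≤ (1-c)*D/Real.sqrt (D^2+(D*e)^2) :=
    div_le_div_of_nonneg_left (mul_nonneg (by linarith) hD.le) hSDpos hSD3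
  have hDε : 0 < D + D*e := by linarith
  have hkey : 1 - (1-c)*D/(D+D*e) ≤ c + e := by
    rw [sub_le_iff_le_add, ← sub_le_iff_le_add']
    rw [le_div_iff₀ hDε]
    nlinarith [mul_nonneg (mul_nonneg hD.le hc) he.le,
      mul_nonneg (mul_nonneg hD.le he.le) he.le,
      mul_nonneg (mul_nonneg (mul_nonneg hD.le hc) he.le) he.le]
  linarith

private lemma small_ratio {sp sq D w : ℝ} (hsp : 0 ≤ sp) (hsq : 0 ≤ sq) (hD : 0 < D)
    (hw : 0 < w) : sp * (D/(4*w*(sp+sq+1))) ≤ D/(4*w) := by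
  rw [← mul_div_assoc]
  rw [div_le_div_iff₀ (by positivity) (by positivity)]
  nlinarith [mul_pos hD hw, mul_nonneg (mul_nonneg hD.le hw.le) hsq,
    mul_nonneg (mul_nonneg hD.le hw.le) hsp]

private lemma bracket_bound {Δ m0 m1 us ut : ℝ} (hΔ : 0 ≤ Δ) (h0 : 0 ≤ m0) (h1 : 0 ≤ m1)
    (hus0 : 0 ≤ us) (hus1 : us ≤ 1) (hut0 : 0 ≤ ut) (hut1 : ut ≤ 1) :
    |6*Δ*(1-(us+ut)) + m0*(3*(us+ut)-4) + m1*(3*(us+ut)-2)| ≤ 6*Δ + 4*m0 + 4*m1 := by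
  rw [abs_le]
  constructor <;>
  nlinarith [mul_nonneg hΔ (by linarith : (0:ℝ) ≤ us+ut),
    mul_nonneg hΔ (by linarith : (0:ℝ) ≤ 2-(us+ut)),
    mul_nonneg h0 (by linarith : (0:ℝ) ≤ us+ut),
    mul_nonneg h0 (by linarith : (0:ℝ) ≤ 2-(us+ut)),
    mul_nonneg h1 (by linarith : (0:ℝ) ≤ us+ut),
    mul_nonneg h1 (by linarith : (0:ℝ) ≤ 2-(us+ut))]

end HelperLemmas

set_option maxHeartbeats 4000000 in
/-- Construction of the modified, uniformly monotone flux `σ̃ ∈ C^{1+α}(ℝ)`: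
it agrees with `σ` outside `(s^-_{r1}, s^+_{r2})`, lies strictly below `σ` on
`(s^-_{r1}, s^-_{r2}]`, strictly above `σ` on `[s^+_{r1}, s^+_{r2})`, and has derivative
pinched between positive constants `λ̃ ≤ Λ̃`. -/
theorem exists_modified_flux
    (α s1 s2 lam Lam s1star s2star r1 r2 : ℝ)
    (sigma sigma' sm sp : ℝ → ℝ)
    (hflux : FluxHyp α s1 s2 lam Lam sigma sigma')
    (hs1star : 0 ≤ s1star) (hs1star' : s1star < s1) (hs1star_eq : sigma s1star = sigma s2)
    (hs2star : s2 < s2star) (hs2star_eq : sigma s2star = sigma s1)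
    (hsm : ∀ r ∈ Icc (sigma s2) (sigma s1), sm r ∈ Icc s1star s1 ∧ sigma (sm r) = r)
    (hsp : ∀ r ∈ Icc (sigma s2) (sigma s1), sp r ∈ Icc s2 s2star ∧ sigma (sp r) = r)
    (hr1 : sigma s2 < r1) (hr12 : r1 < r2) (hr2 : r2 < sigma s1) :
    ∃ (sigmat sigmat' : ℝ → ℝ) (lamt Lamt : ℝ),
      0 < lamt ∧ lamt ≤ Lamt ∧
      (∀ s : ℝ, HasDerivAt sigmat (sigmat' s) s) ∧
      (∃ C : ℝ, ∀ s t : ℝ, |sigmat' s - sigmat' t| ≤ C * |s - t| ^ α) ∧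
      (∀ s : ℝ, s ≤ sm r1 → sigmat s = sigma s) ∧
      (∀ s : ℝ, sp r2 ≤ s → sigmat s = sigma s) ∧
      (∀ s : ℝ, sm r1 < s → s ≤ sm r2 → sigmat s < sigma s) ∧
      (∀ s : ℝ, sp r1 ≤ s → s < sp r2 → sigma s < sigmat s) ∧
      (∀ s : ℝ, lamt ≤ sigmat' s ∧ sigmat' s ≤ Lamt) := by
  have hα0 : 0 < α := hflux.alpha_pos
  have hα1 : α ≤ 1 := hflux.alpha_lt_one.le
  have hs12 : s1 < s2 := hflux.s1_lt_s2
  have hs1pos : 0 < s1 := hflux.s1_pos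
  have hr1m : r1 ∈ Icc (sigma s2) (sigma s1) := ⟨hr1.le, (hr12.trans hr2).le⟩
  have hr2m : r2 ∈ Icc (sigma s2) (sigma s1) := ⟨(hr1.trans hr12).le, hr2.le⟩
  obtain ⟨⟨ha1, ha2⟩, hσa⟩ := hsm r1 hr1m
  obtain ⟨⟨hp1, hp2⟩, hσp⟩ := hsm r2 hr2m
  obtain ⟨⟨hq1, hq2⟩, hσq⟩ := hsp r1 hr1m
  obtain ⟨⟨hb1, hb2⟩, hσb⟩ := hsp r2 hr2m
  set a := sm r1 with hadef
  set p := sm r2 with hpdef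
  set q := sp r1 with hqdef
  set b := sp r2 with hbdef
  clear_value a p q b
  -- derivatives of sigma on the two branches
  have hderL : ∀ s, s < s1 → HasDerivAt sigma (sigma' s) s := fun s hs =>
    (hflux.deriv_left s hs.le).hasDerivAt (Iic_mem_nhds hs)
  have hderR : ∀ s, s2 < s → HasDerivAt sigma (sigma' s) s := fun s hs =>
    (hflux.deriv_right s hs.le).hasDerivAt (Ici_mem_nhds hs)
  have hcontL : ContinuousOn sigma (Iic s1) := fun s hs =>
    (hflux.deriv_left s hs).differentiableWithinAt.continuousWithinAt
  have hcontR : ContinuousOn sigma (Ici s2) := fun s hs =>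
    (hflux.deriv_right s hs).differentiableWithinAt.continuousWithinAt
  have hmonoL : StrictMonoOn sigma (Iic s1) := by
    apply strictMonoOn_of_deriv_pos (convex_Iic s1) hcontL
    intro x hx
    rw [interior_Iic] at hx
    rw [(hderL x hx).deriv]
    exact hflux.deriv_pos x (Or.inl hx)
  have hmonoR : StrictMonoOn sigma (Ici s2) := by
    apply strictMonoOn_of_deriv_pos (convex_Ici s2) hcontR
    intro x hx
    rw [interior_Ici] at hx
    rw [(hderR x hx).deriv]
    exact hflux.deriv_pos x (Or.inr hx)
  -- orderings
  have hap : a < p := by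
    have := (hmonoL.lt_iff_lt (mem_Iic.2 ha2) (mem_Iic.2 hp2)).1
    rw [hσa, hσp] at this
    exact this hr12
  have hps1 : p < s1 := by
    have := (hmonoL.lt_iff_lt (mem_Iic.2 hp2) (mem_Iic.2 le_rfl)).1
    rw [hσp] at this
    exact this hr2
  have hqs2 : s2 < q := by
    have := (hmonoR.lt_iff_lt (mem_Ici.2 le_rfl) (mem_Ici.2 hq1)).1
    rw [hσq] at this
    exact this hr1
  have hqb : q < b := by
    have := (hmonoR.lt_iff_lt (mem_Ici.2 hq1) (mem_Ici.2 hb1)).1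
    rw [hσq, hσb] at this
    exact this hr12
  have hpq : p < q := by linarith
  set D := r2 - r1 with hDdef
  have hD : 0 < D := by rw [hDdef]; linarith
  set w := q - p with hwdef
  clear_value D w
  have hw : 0 < w := by rw [hwdef]; linarith
  have hσ'p : 0 < sigma' p := hflux.deriv_pos p (Or.inl hps1)
  have hσ'q : 0 < sigma' q := hflux.deriv_pos q (Or.inr hqs2)
  -- small parameters
  set tpar := min (8⁻¹ : ℝ) (D / (4*w*(sigma' p + sigma' q + 1))) with htdef
  clear_value tpar
  have htpos : 0 < tpar := by
    rw [htdef]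
    exact lt_min (by norm_num) (div_pos hD (mul_pos (by linarith : (0:ℝ) < 4*w)
      (by linarith : (0:ℝ) < sigma' p + sigma' q + 1)))
  have ht18 : tpar ≤ 8⁻¹ := by rw [htdef]; exact min_le_left _ _
  set c := tpar/2 with hcdef
  clear_value c
  have hc0 : 0 < c := by rw [hcdef]; linarith
  have hc16 : c ≤ 16⁻¹ := by rw [hcdef]; norm_num; linarith [ht18]
  have hc1' : c < 1 := lt_of_le_of_lt hc16 (by norm_num)
  set e := min (8⁻¹ : ℝ) (tpar/2) with hedef
  clear_value e
  have he0 : 0 < e := by rw [hedef]; exact lt_min (by norm_num) (by linarith)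
  have he8 : e ≤ 8⁻¹ := by rw [hedef]; exact min_le_left _ _
  have het : e ≤ tpar/2 := by rw [hedef]; exact min_le_right _ _
  set ε := D * e with hεdef
  clear_value ε
  have hε : 0 < ε := by rw [hεdef]; exact mul_pos hD he0
  have hεD8 : ε ≤ D/8 := by
    rw [hεdef]
    calc D*e ≤ D*8⁻¹ := mul_le_mul_of_nonneg_left he8 hD.le
      _ = D/8 := by ring
  -- rho and Phi
  set ρ : ℝ → ℝ := fun u => (1-c)*u/Real.sqrt (u^2+ε^2) with hρdef
  set Φ : ℝ → ℝ := fun x => (1-c)*(Real.sqrt (max x 0^2 + ε^2) - ε) with hΦdef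
  clear_value ρ Φ
  have hρ0 : ρ 0 = 0 := by rw [hρdef]; simp
  have hρ_le : ∀ u, 0 ≤ u → ρ u ≤ 1 - c := by
    intro u hu; rw [hρdef]; exact rho_le hc1'.le hε hu
  have hρnn : ∀ u, 0 ≤ u → 0 ≤ ρ u := by
    intro u hu; rw [hρdef]; exact rho_nonneg hc1'.le hε hu
  have hρ_lip : ∀ u v, |ρ u - ρ v| ≤ ε⁻¹ * |u - v| := by
    intro u v; rw [hρdef]; exact rho_lip hc0.le hc1'.le hε u v
  have hΦ0 : ∀ x, x ≤ 0 → Φ x = 0 := by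
    intro x hx
    rw [hΦdef]
    simp only
    rw [max_eq_right hx]
    norm_num [Real.sqrt_sq hε.le]
  have hΦpos : ∀ x, 0 < x → 0 < Φ x := by
    intro x hx
    rw [hΦdef]
    simp only
    have h1 : ε < Real.sqrt (max x 0^2 + ε^2) := by
      rw [max_eq_left hx.le]
      calc ε = Real.sqrt (ε^2) := (Real.sqrt_sq hε.le).symm
        _ < _ := Real.sqrt_lt_sqrt (sq_nonneg ε) ((lt_add_iff_pos_left _).2 (pow_pos hx 2))
    exact mul_pos (by linarith) (by linarith)
  have hΦderiv : ∀ x, HasDerivAt Φ (ρ (max x 0)) x := by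
    intro x
    have h1 : HasDerivAt (fun y : ℝ => max y 0^2 + ε^2) (2 * max x 0) x :=
      (hasDerivAt_posPartSq x).add_const _
    have hSpos : 0 < Real.sqrt (max x 0^2 + ε^2) := Real.sqrt_pos.2 (by positivity)
    have h2 := h1.sqrt (by positivity : max x 0^2 + ε^2 ≠ 0)
    have h3 := (h2.sub_const ε).const_mul (1-c)
    rw [hρdef, hΦdef]
    convert h3 using 1
    rfl
    rfl
    field_simp
    -- Hoelder constants for sigma'
  obtain ⟨C0l, hC0l⟩ := hflux.holder_left
  obtain ⟨C0r, hC0r⟩ := hflux.holder_right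
  set Cl := max C0l 0 with hCldef
  set Cr := max C0r 0 with hCrdef
  clear_value Cl Cr
  have hCl0 : 0 ≤ Cl := by rw [hCldef]; exact le_max_right _ _
  have hCr0 : 0 ≤ Cr := by rw [hCrdef]; exact le_max_right _ _
  have hCl : ∀ s ∈ Iic s1, ∀ t ∈ Iic s1, |sigma' s - sigma' t| ≤ Cl * |s-t|^α := by
    intro s hs t ht
    refine (hC0l s hs t ht).trans (mul_le_mul_of_nonneg_right ?_
      (Real.rpow_nonneg (abs_nonneg _) _))
    rw [hCldef]; exact le_max_left _ _
  have hCr : ∀ s ∈ Ici s2, ∀ t ∈ Ici s2, |sigma' s - sigma' t| ≤ Cr * |s-t|^α := by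
    intro s hs t ht
    refine (hC0r s hs t ht).trans (mul_le_mul_of_nonneg_right ?_
      (Real.rpow_nonneg (abs_nonneg _) _))
    rw [hCrdef]; exact le_max_left _ _
  -- key numeric estimate : 1 - ρ D ≤ tpar
  have hSD1 : D ≤ Real.sqrt (D^2+ε^2) := le_sqrt_self hε
  have hρD_ub : ρ D ≤ 1 - c := hρ_le D hD.le
  have hρD : 1 - ρ D ≤ tpar := by
    have h1 : 1 - ρ D ≤ c + e := by
      rw [hρdef]
      simp only
      rw [hεdef]
      exact one_sub_rho_bound hD hc0.le hc1'.le he0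
    have hce : c + e ≤ tpar := by rw [hcdef]; linarith [het]
    linarith
  have h1ρDc : c ≤ 1 - ρ D := by linarith [hρD_ub]
  -- m0 m1 A B
  set m0 := sigma' p * (1 - ρ D) with hm0def
  set m1 := sigma' q * (1 - ρ D) with hm1def
  clear_value m0 m1
  have hm0pos : 0 < m0 := by rw [hm0def]; exact mul_pos hσ'p (by linarith)
  have hm1pos : 0 < m1 := by rw [hm1def]; exact mul_pos hσ'q (by linarith)
  set ΦD := Φ D with hΦDdef
  clear_value ΦD
  have hΦDval : ΦD = (1-c)*(Real.sqrt (D^2+ε^2) - ε) := by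
    rw [hΦDdef, hΦdef]
    simp only
    rw [max_eq_left hD.le]
  have hΦDpos : 0 < ΦD := by rw [hΦDdef]; exact hΦpos D hD
  have hΦDlb : 3/4*D ≤ ΦD := by
    rw [hΦDval]
    have h7 : 7/8*D ≤ Real.sqrt (D^2+ε^2) - ε := by linarith [hSD1, hεD8]
    have h15 : (15:ℝ)/16 ≤ 1 - c := by
      have : c ≤ 16⁻¹ := hc16
      linarith
    calc 3/4*D ≤ (15/16) * (7/8*D) := by linarith
      _ ≤ (1-c) * (Real.sqrt (D^2+ε^2) - ε) :=
          mul_le_mul h15 h7 (by linarith) (by linarith)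
  set A := r2 - ΦD with hAdef
  set B := r1 + ΦD with hBdef
  clear_value A B
  have hBA : D/2 ≤ B - A := by rw [hAdef, hBdef]; linarith [hΦDlb]
  have hBApos : 0 < B - A := by linarith
  set ΔH := (B - A)/w with hΔdef
  clear_value ΔH
  have hΔpos : 0 < ΔH := by rw [hΔdef]; exact div_pos hBApos hw
  have hΔlb : D/(2*w) ≤ ΔH := by
    rw [hΔdef, show D/(2*w) = (D/2)/w by ring]
    exact div_le_div_of_nonneg_right hBA hw.le
  have hm0m1Δ : m0 ≤ ΔH/2 ∧ m1 ≤ ΔH/2 := by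
    have h4 : D/(4*w) ≤ ΔH/2 := by
      have : D/(4*w) = (D/(2*w))/2 := by ring
      linarith [hΔlb, this]
    have h2 : tpar ≤ D/(4*w*(sigma' p + sigma' q + 1)) := by
      rw [htdef]; exact min_le_right _ _
    constructor
    · have h1 : m0 ≤ sigma' p * tpar := by
        rw [hm0def]; exact mul_le_mul_of_nonneg_left hρD hσ'p.le
      have h3 : sigma' p * (D/(4*w*(sigma' p + sigma' q + 1))) ≤ D/(4*w) :=
        small_ratio hσ'p.le hσ'q.le hD hw
      calc m0 ≤ sigma' p * tpar := h1
        _ ≤ sigma' p * (D/(4*w*(sigma' p + sigma' q + 1))) :=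
            mul_le_mul_of_nonneg_left h2 hσ'p.le
        _ ≤ D/(4*w) := h3
        _ ≤ ΔH/2 := h4
    · have h1 : m1 ≤ sigma' q * tpar := by
        rw [hm1def]; exact mul_le_mul_of_nonneg_left hρD hσ'q.le
      have h3 : sigma' q * (D/(4*w*(sigma' p + sigma' q + 1))) ≤ D/(4*w) := by
        rw [show sigma' p + sigma' q + 1 = sigma' q + sigma' p + 1 by ring]
        exact small_ratio hσ'q.le hσ'p.le hD hw
      calc m1 ≤ sigma' q * tpar := h1
        _ ≤ sigma' q * (D/(4*w*(sigma' p + sigma' q + 1))) :=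
            mul_le_mul_of_nonneg_left h2 hσ'q.le
        _ ≤ D/(4*w) := h3
        _ ≤ ΔH/2 := h4
  obtain ⟨hm0Δ, hm1Δ⟩ := hm0m1Δ
    -- the cubic bridge on [p,q]
  set k3 := -2*(B-A) + w*m0 + w*m1 with hk3
  set k2 := 3*(B-A) - 2*w*m0 - w*m1 with hk2
  set k1 := w*m0 with hk1
  clear_value k3 k2 k1
  set H : ℝ → ℝ := fun s => k3*((s-p)/w)^3 + k2*((s-p)/w)^2 + k1*((s-p)/w) + A with hHdef
  set H' : ℝ → ℝ := fun s => ΔH*6*((s-p)/w)*(1-(s-p)/w)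
    + m0*(1-(s-p)/w)*(1-3*((s-p)/w)) + m1*((s-p)/w)*(3*((s-p)/w)-2) with hH'def
  clear_value H H'
  have hone : (q-p)/w = 1 := by rw [hwdef]; exact div_self (by rw [hwdef] at hw; linarith)
  have hHp : H p = A := by rw [hHdef]; simp
  have hHq : H q = B := by
    rw [hHdef]
    simp only
    rw [hone, hk3, hk2, hk1]
    ring
  have hH'p : H' p = m0 := by rw [hH'def]; simp
  have hH'q : H' q = m1 := by
    rw [hH'def]
    simp only
    rw [hone]
    ring
  have hHderiv : ∀ s, HasDerivAt H (H' s) s := by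
    have hu : ∀ s : ℝ, HasDerivAt (fun y : ℝ => (y-p)/w) (1/w) s := by
      intro s
      exact ((hasDerivAt_id s).sub_const p).div_const w
    have hpoly : ∀ y : ℝ, HasDerivAt (fun y : ℝ => k3*y^3 + k2*y^2 + k1*y + A)
        (3*k3*y^2 + 2*k2*y + k1) y := by
      intro y
      have h := (((hasDerivAt_pow 3 y).const_mul k3).add ((hasDerivAt_pow 2 y).const_mul k2)).add
        (((hasDerivAt_id y).const_mul k1).add_const A)
      convert h using 1
      · rfl
      · rfl
      · funext z; simp only [id_eq, Pi.add_apply]; ring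
      · push_cast; ring
    intro s
    have hcomp := (hpoly ((s-p)/w)).comp s (hu s)
    have hfun : H = (fun y : ℝ => k3*y^3 + k2*y^2 + k1*y + A) ∘ (fun y : ℝ => (y-p)/w) := by
      funext y
      rw [hHdef]
      simp [Function.comp]
    rw [hfun]
    convert hcomp using 1
    rfl
    rfl
    rw [hH'def, hk3, hk2, hk1, hΔdef]
    have hwne : w ≠ 0 := hw.ne'
    field_simp
    ring
  have hH'pos : ∀ s ∈ Icc p q, 0 < H' s := by
    intro s hs
    have hu0 : 0 ≤ (s-p)/w := div_nonneg (by linarith [hs.1]) hw.le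
    have hu1 : (s-p)/w ≤ 1 := by
      rw [div_le_one hw, hwdef]
      linarith [hs.2]
    rw [hH'def]
    exact Qpos hΔpos hm0pos hm1pos hm0Δ hm1Δ hu0 hu1
  have hH'lip : ∀ s ∈ Icc p q, ∀ t ∈ Icc p q,
      |H' s - H' t| ≤ ((6*ΔH + 4*m0 + 4*m1)/w) * |s - t| := by
    intro s hs t ht
    have hus0 : 0 ≤ (s-p)/w := div_nonneg (by linarith [hs.1]) hw.le
    have hus1 : (s-p)/w ≤ 1 := by rw [div_le_one hw, hwdef]; linarith [hs.2]
    have hut0 : 0 ≤ (t-p)/w := div_nonneg (by linarith [ht.1]) hw.le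
    have hut1 : (t-p)/w ≤ 1 := by rw [div_le_one hw, hwdef]; linarith [ht.2]
    have hid : H' s - H' t = ((s-p)/w - (t-p)/w) *
        (6*ΔH*(1-((s-p)/w+(t-p)/w)) + m0*(3*((s-p)/w+(t-p)/w)-4)
          + m1*(3*((s-p)/w+(t-p)/w)-2)) := by
      rw [hH'def]
      ring
    rw [hid, abs_mul]
    have husut : |(s-p)/w - (t-p)/w| = |s - t|/w := by
      rw [show (s-p)/w - (t-p)/w = (s-t)/w by ring, abs_div, abs_of_pos hw]
    rw [husut]
    have hbr : |6*ΔH*(1-((s-p)/w+(t-p)/w)) + m0*(3*((s-p)/w+(t-p)/w)-4)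
        + m1*(3*((s-p)/w+(t-p)/w)-2)| ≤ 6*ΔH + 4*m0 + 4*m1 :=
      bracket_bound hΔpos.le hm0pos.le hm1pos.le hus0 hus1 hut0 hut1
    calc |s-t|/w * |6*ΔH*(1-((s-p)/w+(t-p)/w)) + m0*(3*((s-p)/w+(t-p)/w)-4)
          + m1*(3*((s-p)/w+(t-p)/w)-2)|
        ≤ |s-t|/w * (6*ΔH + 4*m0 + 4*m1) :=
          mul_le_mul_of_nonneg_left hbr (by positivity)
      _ = ((6*ΔH + 4*m0 + 4*m1)/w) * |s-t| := by ring
    -- the modified flux and its derivative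
  set gl : ℝ → ℝ := fun s => sigma' s * (1 - ρ (max (sigma s - r1) 0)) with hgldef
  set gr : ℝ → ℝ := fun s => sigma' s * (1 - ρ (max (r2 - sigma s) 0)) with hgrdef
  set F : ℝ → ℝ := fun s => if s ≤ p then sigma s - Φ (sigma s - r1)
    else if s ≤ q then H s else sigma s + Φ (r2 - sigma s) with hFdef
  set F' : ℝ → ℝ := fun s => if s ≤ p then gl s else if s ≤ q then H' s else gr s with hF'def
  clear_value gl gr F F'
  have hglp : gl p = m0 := by
    rw [hgldef]; simp only
    rw [hσp, ← hDdef, max_eq_left hD.le, hm0def]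
  have hgrq : gr q = m1 := by
    rw [hgrdef]; simp only
    rw [hσq, show r2 - r1 = D from hDdef.symm, max_eq_left hD.le, hm1def]
  have hFpA : sigma p - Φ (sigma p - r1) = A := by
    rw [hσp, show r2 - r1 = D from hDdef.symm, ← hΦDdef, hAdef]
  have hFqB : sigma q + Φ (r2 - sigma q) = B := by
    rw [hσq, show r2 - r1 = D from hDdef.symm, ← hΦDdef, hBdef]
  -- monotone consequences
  have hσ_le_r1 : ∀ s, s ≤ a → sigma s ≤ r1 := by
    intro s hs
    rcases eq_or_lt_of_le hs with h | h
    · rw [h, hσa]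
    · have := hmonoL (mem_Iic.2 (by linarith [ha2] : s ≤ s1)) (mem_Iic.2 ha2) h
      rw [hσa] at this; exact this.le
  have hσ_gt_r1 : ∀ s, a < s → s ≤ s1 → r1 < sigma s := by
    intro s h1 h2
    have := hmonoL (mem_Iic.2 ha2) (mem_Iic.2 h2) h1
    rw [hσa] at this; exact this
  have hσ_ge_r2 : ∀ s, b ≤ s → r2 ≤ sigma s := by
    intro s hs
    rcases eq_or_lt_of_le hs with h | h
    · rw [← h, hσb]
    · have := hmonoR (mem_Ici.2 hb1) (mem_Ici.2 (by linarith [hb1] : s2 ≤ s)) h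
      rw [hσb] at this; exact this.le
  have hσ_lt_r2R : ∀ s, s2 ≤ s → s < b → sigma s < r2 := by
    intro s h1 h2
    have := hmonoR (mem_Ici.2 h1) (mem_Ici.2 hb1) h2
    rw [hσb] at this; exact this
  -- F agrees with sigma outside (a,b)
  have hEqL : ∀ s, s ≤ a → F s = sigma s := by
    intro s hs
    rw [hFdef]; simp only
    rw [if_pos (by linarith [hap] : s ≤ p)]
    rw [hΦ0 _ (by linarith [hσ_le_r1 s hs] : sigma s - r1 ≤ 0)]
    ring
  have hEqR : ∀ s, b ≤ s → F s = sigma s := by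
    intro s hs
    rw [hFdef]; simp only
    rw [if_neg (by push_neg; linarith [hps1, hs12, hqs2, hqb] : ¬ s ≤ p),
       if_neg (by push_neg; linarith [hqb] : ¬ s ≤ q)]
    rw [hΦ0 _ (by linarith [hσ_ge_r2 s hs] : r2 - sigma s ≤ 0)]
    ring
  -- strict comparisons
  have hLT : ∀ s, a < s → s ≤ p → F s < sigma s := by
    intro s h1 h2
    rw [hFdef]; simp only
    rw [if_pos h2]
    have := hΦpos (sigma s - r1)
      (by linarith [hσ_gt_r1 s h1 (le_trans h2 hps1.le)] : 0 < sigma s - r1)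
    linarith
  have hGT : ∀ s, q ≤ s → s < b → sigma s < F s := by
    intro s h1 h2
    rcases eq_or_lt_of_le h1 with h | h
    · rw [← h]
      rw [hFdef]; simp only
      rw [if_neg (by push_neg; exact hpq), if_pos le_rfl, hHq, hσq, hBdef]
      linarith [hΦDpos]
    · rw [hFdef]; simp only
      rw [if_neg (by push_neg; linarith [hpq]), if_neg (by push_neg; exact h)]
      have := hΦpos (r2 - sigma s)
        (by linarith [hσ_lt_r2R s (by linarith [hqs2]) h2] : 0 < r2 - sigma s)
      linarith
  -- derivative of the left and right formulas
  have hLderiv : ∀ s, s ≤ p → HasDerivAt (fun y => sigma y - Φ (sigma y - r1)) (gl s) s := by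
    intro s hs
    have hs1' : s < s1 := lt_of_le_of_lt hs hps1
    have h1 := hderL s hs1'
    have h2 := (hΦderiv (sigma s - r1)).comp s (h1.sub_const r1)
    have h3 := h1.sub h2
    rw [hgldef]; simp only
    convert h3 using 1
    rfl
    rfl
    rfl
    ring
  have hRderiv : ∀ s, q ≤ s → HasDerivAt (fun y => sigma y + Φ (r2 - sigma y)) (gr s) s := by
    intro s hs
    have hs2' : s2 < s := lt_of_lt_of_le hqs2 hs
    have h1 := hderR s hs2'
    have h2 := (hΦderiv (r2 - sigma s)).comp s (h1.const_sub r2)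
    have h3 := h1.add h2
    rw [hgrdef]; simp only
    convert h3 using 1
    rfl
    rfl
    rfl
    ring
  -- F is differentiable everywhere with derivative F'
  have hFderiv : ∀ s, HasDerivAt F (F' s) s := by
    intro s
    rcases lt_trichotomy s p with hsp' | hsp' | hsp'
    · have hev : F =ᶠ[nhds s] fun y => sigma y - Φ (sigma y - r1) := by
        filter_upwards [Iio_mem_nhds hsp'] with y hy
        rw [hFdef]; simp only
        rw [if_pos (le_of_lt (mem_Iio.1 hy))]
      have hder := (hLderiv s hsp'.le).congr_of_eventuallyEq hev
      have hval : F' s = gl s := by rw [hF'def]; simp only; rw [if_pos hsp'.le]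
      rw [hval]; exact hder
    · subst hsp'
      have hleft : HasDerivWithinAt F (gl s) (Iic s) s := by
        refine ((hLderiv s le_rfl).hasDerivWithinAt).congr ?_ ?_
        · intro y hy
          rw [hFdef]; simp only; rw [if_pos (mem_Iic.1 hy)]
        · rw [hFdef]; simp only; rw [if_pos le_rfl]
      have hright : HasDerivWithinAt F (gl s) (Icc s q) s := by
        have hH := (hHderiv s).hasDerivWithinAt (s := Icc s q)
        rw [hH'p, ← hglp] at hH
        refine hH.congr ?_ ?_
        · intro y hy
          rw [hFdef]; simp only
          rcases eq_or_lt_of_le hy.1 with h | h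
          · rw [if_pos (le_of_eq h.symm), ← h, hFpA, hHp]
          · rw [if_neg (by push_neg; exact h), if_pos hy.2]
        · rw [hFdef]; simp only; rw [if_pos le_rfl, hFpA, hHp]
      have hun := hleft.union hright
      rw [Iic_union_Icc_eq_Iic hpq.le] at hun
      have hd := hun.hasDerivAt (Iic_mem_nhds hpq)
      have hval : F' s = gl s := by rw [hF'def]; simp only; rw [if_pos le_rfl]
      rw [hval]; exact hd
    · rcases lt_trichotomy s q with hsq' | hsq' | hsq'
      · have hev : F =ᶠ[nhds s] H := by
          filter_upwards [Ioo_mem_nhds hsp' hsq'] with y hy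
          rw [hFdef]; simp only
          rw [if_neg (by push_neg; exact hy.1), if_pos hy.2.le]
        have hder := (hHderiv s).congr_of_eventuallyEq hev
        have hval : F' s = H' s := by
          rw [hF'def]; simp only
          rw [if_neg (by push_neg; exact hsp'), if_pos hsq'.le]
        rw [hval]; exact hder
      · subst hsq'
        have hleft : HasDerivWithinAt F (gr s) (Icc p s) s := by
          have hH := (hHderiv s).hasDerivWithinAt (s := Icc p s)
          rw [hH'q, ← hgrq] at hH
          refine hH.congr ?_ ?_
          · intro y hy
            rw [hFdef]; simp only
            rcases eq_or_lt_of_le hy.1 with h | h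
            · rw [if_pos (le_of_eq h.symm), ← h, hFpA, hHp]
            · rw [if_neg (by push_neg; exact h), if_pos hy.2]
          · rw [hFdef]; simp only
            rw [if_neg (by push_neg; exact hpq), if_pos le_rfl]
        have hright : HasDerivWithinAt F (gr s) (Ici s) s := by
          refine ((hRderiv s le_rfl).hasDerivWithinAt).congr ?_ ?_
          · intro y hy
            rcases eq_or_lt_of_le (mem_Ici.1 hy) with h | h
            · rw [hFdef]; simp only
              rw [if_neg (by push_neg; rw [← h]; exact hpq), if_pos (le_of_eq h.symm), ← h,
                hHq, hFqB]
            · rw [hFdef]; simp only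
              rw [if_neg (by push_neg; linarith [hpq]), if_neg (by push_neg; exact h)]
          · rw [hFdef]; simp only
            rw [if_neg (by push_neg; exact hpq), if_pos le_rfl, hHq, ← hFqB]
        have hun := hleft.union hright
        rw [Icc_union_Ici_eq_Ici hpq.le] at hun
        have hd := hun.hasDerivAt (Ici_mem_nhds hpq)
        have hval : F' s = gr s := by
          rw [hF'def]; simp only
          rw [if_neg (by push_neg; exact hpq), if_pos le_rfl, hH'q, ← hgrq]
        rw [hval]; exact hd
      · have hev : F =ᶠ[nhds s] fun y => sigma y + Φ (r2 - sigma y) := by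
          filter_upwards [Ioi_mem_nhds hsq'] with y hy
          rw [hFdef]; simp only
          rw [if_neg (by push_neg; linarith [mem_Ioi.1 hy, hpq]),
            if_neg (by push_neg; exact mem_Ioi.1 hy)]
        have hder := (hRderiv s hsq'.le).congr_of_eventuallyEq hev
        have hval : F' s = gr s := by
          rw [hF'def]; simp only
          rw [if_neg (by push_neg; linarith [hpq]), if_neg (by push_neg; exact hsq')]
        rw [hval]; exact hder
    -- values of F' on regions
  have hval_ap : ∀ s, s ≤ p → F' s = gl s := by
    intro s hs; rw [hF'def]; simp only; rw [if_pos hs]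
  have hval_leftout : ∀ s, s ≤ a → F' s = sigma' s := by
    intro s hs
    rw [hval_ap s (by linarith [hap] : s ≤ p), hgldef]; simp only
    rw [max_eq_right (by linarith [hσ_le_r1 s hs] : sigma s - r1 ≤ 0), hρ0]
    ring
  have hval_pq : ∀ s, s ∈ Icc p q → F' s = H' s := by
    intro s hs
    rcases eq_or_lt_of_le hs.1 with h | h
    · rw [hF'def]; simp only
      rw [if_pos (le_of_eq h.symm), ← h, hglp, hH'p]
    · rw [hF'def]; simp only
      rw [if_neg (by push_neg; exact h), if_pos hs.2]
  have hval_qb : ∀ s, q ≤ s → F' s = gr s := by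
    intro s hs
    rcases eq_or_lt_of_le hs with h | h
    · rw [hF'def]; simp only
      rw [if_neg (by push_neg; rw [← h]; exact hpq), if_pos (le_of_eq h.symm), ← h, hH'q, ← hgrq]
    · rw [hF'def]; simp only
      rw [if_neg (by push_neg; linarith [hpq]), if_neg (by push_neg; exact h)]
  have hval_rightout : ∀ s, b ≤ s → F' s = sigma' s := by
    intro s hs
    rw [hval_qb s (by linarith [hqb]), hgrdef]; simp only
    rw [max_eq_right (by linarith [hσ_ge_r2 s hs] : r2 - sigma s ≤ 0), hρ0]
    ring
  -- Hoelder estimate on Icc a p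
  set M1 := Cl * (p - a)^α + sigma' p with hM1def
  clear_value M1
  have hσ'nn_ap : ∀ s ∈ Icc a p, 0 ≤ sigma' s := fun s hs =>
    (hflux.deriv_pos s (Or.inl (lt_of_le_of_lt hs.2 hps1))).le
  have hM1b : ∀ s ∈ Icc a p, |sigma' s| ≤ M1 := by
    intro s hs
    have h1 : |sigma' s - sigma' p| ≤ Cl * |s - p|^α :=
      hCl s (mem_Iic.2 (le_trans hs.2 hps1.le)) p (mem_Iic.2 hps1.le)
    have h2 : |s - p| ≤ p - a := by
      rw [abs_of_nonpos (by linarith [hs.2] : s - p ≤ 0)]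
      linarith [hs.1]
    have h3 : |s - p|^α ≤ (p-a)^α := Real.rpow_le_rpow (abs_nonneg _) h2 hα0.le
    have h5 : Cl * |s-p|^α ≤ Cl * (p-a)^α := mul_le_mul_of_nonneg_left h3 hCl0
    rw [abs_of_nonneg (hσ'nn_ap s hs), hM1def]
    have h6 := (abs_le.1 h1).2
    linarith
  have hM1nn : 0 ≤ M1 := le_trans (abs_nonneg _) (hM1b p ⟨hap.le, le_rfl⟩)
  have hσlip_ap : ∀ s ∈ Icc a p, ∀ t ∈ Icc a p, |sigma s - sigma t| ≤ M1 * |s - t| := by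
    intro s hs t ht
    have key := Convex.norm_image_sub_le_of_norm_hasDerivWithin_le
      (f := sigma) (f' := sigma') (s := Icc a p) (C := M1)
      (fun x hx => (hflux.deriv_left x (le_trans hx.2 hps1.le)).mono
        (fun y hy => mem_Iic.2 (le_trans hy.2 hps1.le)))
      (fun x hx => by rw [Real.norm_eq_abs]; exact hM1b x hx) (convex_Icc a p) ht hs
    simpa [Real.norm_eq_abs] using key
  set Cap := 2*Cl + M1^2 * ε⁻¹ * (p-a)^(1-α) with hCapdef
  clear_value Cap
  have hCapnn : 0 ≤ Cap := by
    rw [hCapdef]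
    have h1 : (0:ℝ) ≤ M1^2 * ε⁻¹ * (p-a)^(1-α) :=
      mul_nonneg (mul_nonneg (sq_nonneg M1) (inv_nonneg.2 hε.le))
        (Real.rpow_nonneg (by linarith [hap]) _)
    linarith [hCl0]
  have hHold_ap : ∀ s ∈ Icc a p, ∀ t ∈ Icc a p, |F' s - F' t| ≤ Cap * |s - t|^α := by
    intro s hs t ht
    rw [hval_ap s hs.2, hval_ap t ht.2, hgldef]
    simp only
    have hdσ' : |sigma' s - sigma' t| ≤ Cl * |s-t|^α :=
      hCl s (mem_Iic.2 (le_trans hs.2 hps1.le)) t (mem_Iic.2 (le_trans ht.2 hps1.le))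
    have hxd : |max (sigma s - r1) 0 - max (sigma t - r1) 0| ≤ |sigma s - sigma t| := by
      have h := abs_max_sub_max_le_abs (sigma s - r1) (sigma t - r1) 0
      rwa [sub_sub_sub_cancel_right] at h
    have hρd : |ρ (max (sigma s - r1) 0) - ρ (max (sigma t - r1) 0)| ≤ ε⁻¹ * (M1 * |s-t|) :=
      (hρ_lip _ _).trans (mul_le_mul_of_nonneg_left (hxd.trans (hσlip_ap s hs t ht))
        (inv_nonneg.2 hε.le))
    have hρtb : |ρ (max (sigma t - r1) 0)| ≤ 1 := by
      rw [abs_of_nonneg (hρnn _ (le_max_right _ _))]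
      linarith [hρ_le (max (sigma t - r1) 0) (le_max_right _ _), hc0]
    have hid : sigma' s * (1 - ρ (max (sigma s - r1) 0))
        - sigma' t * (1 - ρ (max (sigma t - r1) 0))
        = (sigma' s - sigma' t) - (sigma' s * (ρ (max (sigma s - r1) 0)
            - ρ (max (sigma t - r1) 0))
          + ρ (max (sigma t - r1) 0) * (sigma' s - sigma' t)) := by ring
    rw [hid]
    have htri : |(sigma' s - sigma' t) - (sigma' s * (ρ (max (sigma s - r1) 0)
            - ρ (max (sigma t - r1) 0))
          + ρ (max (sigma t - r1) 0) * (sigma' s - sigma' t))|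
        ≤ |sigma' s - sigma' t| + (|sigma' s| * |ρ (max (sigma s - r1) 0)
            - ρ (max (sigma t - r1) 0)|
          + |ρ (max (sigma t - r1) 0)| * |sigma' s - sigma' t|) := by
      rw [sub_eq_add_neg]
      refine (abs_add_le _ _).trans ?_
      rw [abs_neg]
      refine add_le_add le_rfl ((abs_add_le _ _).trans ?_)
      rw [abs_mul, abs_mul]
    have e1 : |sigma' s| * |ρ (max (sigma s - r1) 0) - ρ (max (sigma t - r1) 0)|
        ≤ M1 * (ε⁻¹ * (M1 * |s-t|)) :=
      mul_le_mul (hM1b s hs) hρd (abs_nonneg _) hM1nn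
    have e2 : |ρ (max (sigma t - r1) 0)| * |sigma' s - sigma' t| ≤ 1 * (Cl * |s-t|^α) :=
      mul_le_mul hρtb hdσ' (abs_nonneg _) zero_le_one
    have e3 : |s - t| ≤ (p-a)^(1-α) * |s-t|^α :=
      abs_le_rpow_mul hα0 hα1 (abs_nonneg _) (by linarith [hap])
        (abs_le.2 ⟨by linarith [hs.1, ht.2], by linarith [hs.2, ht.1]⟩)
    have e4 : M1 * (ε⁻¹ * (M1 * |s - t|)) ≤ M1^2*ε⁻¹*(p-a)^(1-α) * |s-t|^α := by
      have h := mul_le_mul_of_nonneg_left e3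
        (mul_nonneg (sq_nonneg M1) (inv_nonneg.2 hε.le))
      calc M1 * (ε⁻¹ * (M1*|s-t|)) = M1^2*ε⁻¹*|s-t| := by ring
        _ ≤ M1^2*ε⁻¹*((p-a)^(1-α) * |s-t|^α) := h
        _ = M1^2*ε⁻¹*(p-a)^(1-α) * |s-t|^α := by ring
    have efin := htri.trans (add_le_add hdσ' (add_le_add (e1.trans e4) e2))
    calc |(sigma' s - sigma' t) - (sigma' s * (ρ (max (sigma s - r1) 0)
            - ρ (max (sigma t - r1) 0))
          + ρ (max (sigma t - r1) 0) * (sigma' s - sigma' t))|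
        ≤ Cl * |s-t|^α + (M1^2*ε⁻¹*(p-a)^(1-α) * |s-t|^α + 1*(Cl * |s-t|^α)) := efin
      _ = Cap * |s-t|^α := by rw [hCapdef]; ring
  -- Hoelder estimate on Icc q b
  set M3 := Cr * (b - q)^α + sigma' q with hM3def
  clear_value M3
  have hσ'nn_qb : ∀ s ∈ Icc q b, 0 ≤ sigma' s := fun s hs =>
    (hflux.deriv_pos s (Or.inr (lt_of_lt_of_le hqs2 hs.1))).le
  have hM3b : ∀ s ∈ Icc q b, |sigma' s| ≤ M3 := by
    intro s hs
    have h1 : |sigma' s - sigma' q| ≤ Cr * |s - q|^α :=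
      hCr s (mem_Ici.2 (le_trans hqs2.le hs.1)) q (mem_Ici.2 hqs2.le)
    have h2 : |s - q| ≤ b - q := by
      rw [abs_of_nonneg (by linarith [hs.1] : 0 ≤ s - q)]
      linarith [hs.2]
    have h3 : |s - q|^α ≤ (b-q)^α := Real.rpow_le_rpow (abs_nonneg _) h2 hα0.le
    have h5 : Cr * |s-q|^α ≤ Cr * (b-q)^α := mul_le_mul_of_nonneg_left h3 hCr0
    rw [abs_of_nonneg (hσ'nn_qb s hs), hM3def]
    have h6 := (abs_le.1 h1).2
    linarith
  have hM3nn : 0 ≤ M3 := le_trans (abs_nonneg _) (hM3b q ⟨le_rfl, hqb.le⟩)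
  have hσlip_qb : ∀ s ∈ Icc q b, ∀ t ∈ Icc q b, |sigma s - sigma t| ≤ M3 * |s - t| := by
    intro s hs t ht
    have key := Convex.norm_image_sub_le_of_norm_hasDerivWithin_le
      (f := sigma) (f' := sigma') (s := Icc q b) (C := M3)
      (fun x hx => (hflux.deriv_right x (le_trans hqs2.le hx.1)).mono
        (fun y hy => mem_Ici.2 (le_trans hqs2.le hy.1)))
      (fun x hx => by rw [Real.norm_eq_abs]; exact hM3b x hx) (convex_Icc q b) ht hs
    simpa [Real.norm_eq_abs] using key
  set Cqb := 2*Cr + M3^2 * ε⁻¹ * (b-q)^(1-α) with hCqbdef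
  clear_value Cqb
  have hCqbnn : 0 ≤ Cqb := by
    rw [hCqbdef]
    have h1 : (0:ℝ) ≤ M3^2 * ε⁻¹ * (b-q)^(1-α) :=
      mul_nonneg (mul_nonneg (sq_nonneg M3) (inv_nonneg.2 hε.le))
        (Real.rpow_nonneg (by linarith [hqb]) _)
    linarith [hCr0]
  have hHold_qb : ∀ s ∈ Icc q b, ∀ t ∈ Icc q b, |F' s - F' t| ≤ Cqb * |s - t|^α := by
    intro s hs t ht
    rw [hval_qb s hs.1, hval_qb t ht.1, hgrdef]
    simp only
    have hdσ' : |sigma' s - sigma' t| ≤ Cr * |s-t|^α :=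
      hCr s (mem_Ici.2 (le_trans hqs2.le hs.1)) t (mem_Ici.2 (le_trans hqs2.le ht.1))
    have hxd : |max (r2 - sigma s) 0 - max (r2 - sigma t) 0| ≤ |sigma s - sigma t| := by
      have h := abs_max_sub_max_le_abs (r2 - sigma s) (r2 - sigma t) 0
      rwa [show r2 - sigma s - (r2 - sigma t) = sigma t - sigma s by ring,
        abs_sub_comm (sigma t) (sigma s)] at h
    have hρd : |ρ (max (r2 - sigma s) 0) - ρ (max (r2 - sigma t) 0)| ≤ ε⁻¹ * (M3 * |s-t|) :=
      (hρ_lip _ _).trans (mul_le_mul_of_nonneg_left (hxd.trans (hσlip_qb s hs t ht))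
        (inv_nonneg.2 hε.le))
    have hρtb : |ρ (max (r2 - sigma t) 0)| ≤ 1 := by
      rw [abs_of_nonneg (hρnn _ (le_max_right _ _))]
      linarith [hρ_le (max (r2 - sigma t) 0) (le_max_right _ _), hc0]
    have hid : sigma' s * (1 - ρ (max (r2 - sigma s) 0))
        - sigma' t * (1 - ρ (max (r2 - sigma t) 0))
        = (sigma' s - sigma' t) - (sigma' s * (ρ (max (r2 - sigma s) 0)
            - ρ (max (r2 - sigma t) 0))
          + ρ (max (r2 - sigma t) 0) * (sigma' s - sigma' t)) := by ring
    rw [hid]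
    have htri : |(sigma' s - sigma' t) - (sigma' s * (ρ (max (r2 - sigma s) 0)
            - ρ (max (r2 - sigma t) 0))
          + ρ (max (r2 - sigma t) 0) * (sigma' s - sigma' t))|
        ≤ |sigma' s - sigma' t| + (|sigma' s| * |ρ (max (r2 - sigma s) 0)
            - ρ (max (r2 - sigma t) 0)|
          + |ρ (max (r2 - sigma t) 0)| * |sigma' s - sigma' t|) := by
      rw [sub_eq_add_neg]
      refine (abs_add_le _ _).trans ?_
      rw [abs_neg]
      refine add_le_add le_rfl ((abs_add_le _ _).trans ?_)
      rw [abs_mul, abs_mul]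
    have e1 : |sigma' s| * |ρ (max (r2 - sigma s) 0) - ρ (max (r2 - sigma t) 0)|
        ≤ M3 * (ε⁻¹ * (M3 * |s-t|)) :=
      mul_le_mul (hM3b s hs) hρd (abs_nonneg _) hM3nn
    have e2 : |ρ (max (r2 - sigma t) 0)| * |sigma' s - sigma' t| ≤ 1 * (Cr * |s-t|^α) :=
      mul_le_mul hρtb hdσ' (abs_nonneg _) zero_le_one
    have e3 : |s - t| ≤ (b-q)^(1-α) * |s-t|^α :=
      abs_le_rpow_mul hα0 hα1 (abs_nonneg _) (by linarith [hqb])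
        (abs_le.2 ⟨by linarith [hs.1, ht.2], by linarith [hs.2, ht.1]⟩)
    have e4 : M3 * (ε⁻¹ * (M3 * |s - t|)) ≤ M3^2*ε⁻¹*(b-q)^(1-α) * |s-t|^α := by
      have h := mul_le_mul_of_nonneg_left e3
        (mul_nonneg (sq_nonneg M3) (inv_nonneg.2 hε.le))
      calc M3 * (ε⁻¹ * (M3*|s-t|)) = M3^2*ε⁻¹*|s-t| := by ring
        _ ≤ M3^2*ε⁻¹*((b-q)^(1-α) * |s-t|^α) := h
        _ = M3^2*ε⁻¹*(b-q)^(1-α) * |s-t|^α := by ring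
    have efin := htri.trans (add_le_add hdσ' (add_le_add (e1.trans e4) e2))
    calc |(sigma' s - sigma' t) - (sigma' s * (ρ (max (r2 - sigma s) 0)
            - ρ (max (r2 - sigma t) 0))
          + ρ (max (r2 - sigma t) 0) * (sigma' s - sigma' t))|
        ≤ Cr * |s-t|^α + (M3^2*ε⁻¹*(b-q)^(1-α) * |s-t|^α + 1*(Cr * |s-t|^α)) := efin
      _ = Cqb * |s-t|^α := by rw [hCqbdef]; ring
  -- Hoelder on the middle
  set Cpq := ((6*ΔH + 4*m0 + 4*m1)/w) * w^(1-α) with hCpqdef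
  clear_value Cpq
  have hLnn : (0:ℝ) ≤ (6*ΔH + 4*m0 + 4*m1)/w :=
    div_nonneg (by linarith [hΔpos, hm0pos, hm1pos]) hw.le
  have hCpqnn : 0 ≤ Cpq := by
    rw [hCpqdef]
    exact mul_nonneg hLnn (Real.rpow_nonneg hw.le _)
  have hHold_pq : ∀ s ∈ Icc p q, ∀ t ∈ Icc p q, |F' s - F' t| ≤ Cpq * |s-t|^α := by
    intro s hs t ht
    rw [hval_pq s hs, hval_pq t ht]
    have h2 : |s - t| ≤ w^(1-α) * |s-t|^α :=
      abs_le_rpow_mul hα0 hα1 (abs_nonneg _) hw.le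
        (by rw [hwdef]; exact abs_le.2 ⟨by linarith [hs.1, ht.2], by linarith [hs.2, ht.1]⟩)
    calc |H' s - H' t| ≤ ((6*ΔH+4*m0+4*m1)/w) * |s-t| := hH'lip s hs t ht
      _ ≤ ((6*ΔH+4*m0+4*m1)/w) * (w^(1-α) * |s-t|^α) := mul_le_mul_of_nonneg_left h2 hLnn
      _ = Cpq * |s-t|^α := by rw [hCpqdef]; ring
  -- Hoelder on outer regions
  have hHold_left : ∀ s ∈ Iic a, ∀ t ∈ Iic a, |F' s - F' t| ≤ Cl * |s-t|^α := by
    intro s hs t ht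
    rw [hval_leftout s hs, hval_leftout t ht]
    exact hCl s (mem_Iic.2 (by linarith [mem_Iic.1 hs, hap, hps1]))
      t (mem_Iic.2 (by linarith [mem_Iic.1 ht, hap, hps1]))
  have hHold_right : ∀ s ∈ Ici b, ∀ t ∈ Ici b, |F' s - F' t| ≤ Cr * |s-t|^α := by
    intro s hs t ht
    rw [hval_rightout s hs, hval_rightout t ht]
    exact hCr s (mem_Ici.2 (by linarith [mem_Ici.1 hs, hb1]))
      t (mem_Ici.2 (by linarith [mem_Ici.1 ht, hb1]))
  -- glue everything
  have G1 := holder_glue hα0.le hCl0 hCapnn (fun x hx => hx) (fun x hx => mem_Ici.2 hx.1)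
    (mem_Iic.2 le_rfl) (⟨le_rfl, hap.le⟩ : a ∈ Icc a p) hHold_left hHold_ap
  rw [Iic_union_Icc_eq_Iic hap.le] at G1
  have G2 := holder_glue hα0.le (by linarith [hCl0, hCapnn] : (0:ℝ) ≤ Cl + Cap) hCpqnn
    (fun x hx => hx) (fun x hx => mem_Ici.2 hx.1)
    (mem_Iic.2 le_rfl) (⟨le_rfl, hpq.le⟩ : p ∈ Icc p q) G1 hHold_pq
  rw [Iic_union_Icc_eq_Iic hpq.le] at G2
  have G3 := holder_glue hα0.le hCqbnn hCr0 (fun x hx => mem_Iic.2 hx.2) (fun x hx => hx)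
    (⟨hqb.le, le_rfl⟩ : b ∈ Icc q b) (mem_Ici.2 le_rfl) hHold_qb hHold_right
  rw [Icc_union_Ici_eq_Ici hqb.le] at G3
  have G4 := holder_glue hα0.le (by linarith [hCl0, hCapnn, hCpqnn] : (0:ℝ) ≤ Cl + Cap + Cpq)
    (by linarith [hCqbnn, hCr0] : (0:ℝ) ≤ Cqb + Cr)
    (fun x hx => hx) (fun x hx => hx) (mem_Iic.2 le_rfl) (mem_Ici.2 le_rfl) G2 G3
  rw [Iic_union_Ici] at G4
  have hHolder : ∀ s t : ℝ, |F' s - F' t| ≤ (Cl + Cap + Cpq + (Cqb + Cr)) * |s - t|^α :=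
    fun s t => G4 s (mem_univ s) t (mem_univ t)
  -- continuity, positivity, global bounds
  have hFcont : Continuous F' := continuous_of_holder hα0 hHolder
  have hFpos : ∀ s, 0 < F' s := by
    intro s
    rcases le_or_gt s p with h | h
    · rw [hval_ap s h, hgldef]; simp only
      have h1 : 0 < sigma' s := hflux.deriv_pos s (Or.inl (lt_of_le_of_lt h hps1))
      have h2 : ρ (max (sigma s - r1) 0) ≤ 1 - c := hρ_le _ (le_max_right _ _)
      exact mul_pos h1 (by linarith)
    · rcases le_or_gt s q with h2 | h2
      · rw [hval_pq s ⟨h.le, h2⟩]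
        exact hH'pos s ⟨h.le, h2⟩
      · rw [hval_qb s h2.le, hgrdef]; simp only
        have h1 : 0 < sigma' s := hflux.deriv_pos s (Or.inr (by linarith [hqs2]))
        have h3 : ρ (max (r2 - sigma s) 0) ≤ 1 - c := hρ_le _ (le_max_right _ _)
        exact mul_pos h1 (by linarith)
  set mK := min (s1/2) a - 1 with hmKdef
  set MK := max (2*s2) b + 1 with hMKdef
  clear_value mK MK
  have hmM : mK ≤ MK := by
    rw [hmKdef, hMKdef]
    have h1 : min (s1/2) a ≤ a := min_le_right _ _
    have h2 : b ≤ max (2*s2) b := le_max_right _ _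
    have h3 : a ≤ b := by linarith [hap, hpq, hqb]
    linarith
  obtain ⟨xm, hxmK, hxm⟩ := isCompact_Icc.exists_isMinOn
    (⟨mK, le_rfl, hmM⟩ : (Icc mK MK).Nonempty) hFcont.continuousOn
  obtain ⟨xM, hxMK, hxM⟩ := isCompact_Icc.exists_isMaxOn
    (⟨mK, le_rfl, hmM⟩ : (Icc mK MK).Nonempty) hFcont.continuousOn
  set lamt := min lam (F' xm) with hlamdef
  set Lamt := max Lam (F' xM) with hLamdef
  clear_value lamt Lamt
  have hlamt0 : 0 < lamt := by rw [hlamdef]; exact lt_min hflux.lam_pos (hFpos xm)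
  have hlamLam : lamt ≤ Lamt := by
    rw [hlamdef, hLamdef]
    exact le_trans (min_le_left _ _) (le_trans hflux.lam_le_Lam (le_max_left _ _))
  have hbounds : ∀ s, lamt ≤ F' s ∧ F' s ≤ Lamt := by
    intro s
    by_cases hsK : s ∈ Icc mK MK
    · constructor
      · rw [hlamdef]
        exact le_trans (min_le_right _ _) ((isMinOn_iff.1 hxm) s hsK)
      · rw [hLamdef]
        exact le_trans ((isMaxOn_iff.1 hxM) s hsK) (le_max_right _ _)
    · rw [mem_Icc, not_and_or] at hsK
      rcases hsK with h | h
      · push_neg at h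
        have hsa : s ≤ a := by
          rw [hmKdef] at h
          have := min_le_right (s1/2) a
          linarith
        have hs1h : s < s1/2 := by
          rw [hmKdef] at h
          have := min_le_left (s1/2) a
          linarith
        rw [hval_leftout s hsa]
        constructor
        · rw [hlamdef]
          exact le_trans (min_le_left _ _) (hflux.deriv_lb s (Or.inl hs1h))
        · rw [hLamdef]
          exact le_trans (hflux.deriv_ub s (Or.inl hs1h)) (le_max_left _ _)
      · push_neg at h
        have hsb : b ≤ s := by
          rw [hMKdef] at h
          have := le_max_right (2*s2) b
          linarith
        have hs2h : 2*s2 < s := by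
          rw [hMKdef] at h
          have := le_max_left (2*s2) b
          linarith
        rw [hval_rightout s hsb]
        constructor
        · rw [hlamdef]
          exact le_trans (min_le_left _ _) (hflux.deriv_lb s (Or.inr hs2h))
        · rw [hLamdef]
          exact le_trans (hflux.deriv_ub s (Or.inr hs2h)) (le_max_left _ _)
  exact ⟨F, F', lamt, Lamt, hlamt0, hlamLam, hFderiv,
    ⟨Cl + Cap + Cpq + (Cqb + Cr), hHolder⟩, hEqL, hEqR, hLT, hGT, hbounds⟩
end
end

section
/- With the modified flux σ̃ and the classical solution u* of the modified problem, define v*(x,t) = ∫_0^t (σ̃(u*_x) + b u* + P_{u*} + F)(x,τ) dτ + ∫_0^x u0(y) dy and w* = (u*,v*). Then w* is a subsolution of the nonlocal differential inclusion, the set E = Ω²_T = {(x,t) ∈ Ω_T : s^−_{r1} < u*_x(x,t) < s^+_{r2}} is a nonempty subset of the transition set O^{w*}, and its transition gauge satisfies Γ_{w*}^E = (1/|Ω²_T|) ∫_{Ω²_T} (u*_x − s^−_{σ̃(u*_x)})/(s^+_{σ̃(u*_x)} − s^−_{σ̃(u*_x)}) dx dt, a number lying strictly between 0 and 1. -/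
open MeasureTheory Set
open scoped NNReal

noncomputable section

/-- `F(x,t) = ∫_0^x f(y,t) dy`. -/
def Fint (f : ℝ → ℝ → ℝ) (x t : ℝ) : ℝ := ∫ y in (0:ℝ)..x, f y t

/-- The potential operator `P_u(x,t) = ∫_0^x (c(y,t) - b_y(y,t)) u(y,t) dy`. -/
def Pot (c bx : ℝ → ℝ → ℝ) (u : ℝ → ℝ → ℝ) (x t : ℝ) : ℝ :=
  ∫ y in (0:ℝ)..x, (c y t - bx y t) * u y t

/-- The quantity `v_t - b u - P_u - F` at `(x,t)` (the second coordinate of the gradient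
constraint in the nonlocal differential inclusion). -/
def GVal (b c bx f : ℝ → ℝ → ℝ) (u vt : ℝ → ℝ → ℝ) (x t : ℝ) : ℝ :=
  vt x t - b x t * u x t - Pot c bx u x t - Fint f x t

/-- `Σ0`, the graph of `σ`. -/
def Sigma0 (sigma : ℝ → ℝ) : Set (ℝ × ℝ) := {q | q.2 = sigma q.1}

/-- `U0 = {(s,r) : σ(s2) < r < σ(s1), s_r^- < s < s_r^+}`. -/
def U0set (sigma : ℝ → ℝ) (s1 s2 : ℝ) (sm sp : ℝ → ℝ) : Set (ℝ × ℝ) :=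
  {q | sigma s2 < q.2 ∧ q.2 < sigma s1 ∧ sm q.2 < q.1 ∧ q.1 < sp q.2}

/-- `K0 = {(s,σ(s)) : s ∈ [s1*,s1] ∪ [s2,s2*]}`. -/
def K0set (sigma : ℝ → ℝ) (s1star s1 s2 s2star : ℝ) : Set (ℝ × ℝ) :=
  {q | (q.1 ∈ Icc s1star s1 ∨ q.1 ∈ Icc s2 s2star) ∧ q.2 = sigma q.1}

/-- `w = (u,v)` (with a.e. partial derivatives `ux`, `vx`, `vt`) is a subsolution of the
nonlocal differential inclusion: `v_x = u` and `(u_x, v_t - bu - P_u - F) ∈ Σ0 ∪ U0` a.e. -/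
structure IsSubsolution (T : ℝ) (sigma : ℝ → ℝ) (s1 s2 : ℝ) (sm sp : ℝ → ℝ)
    (b bx c f : ℝ → ℝ → ℝ) (u v ux vx vt : ℝ → ℝ → ℝ) : Prop where
  lip_u : ∃ K : ℝ≥0, LipschitzOnWith K (fun p : ℝ × ℝ => u p.1 p.2) (ClOmegaT T)
  lip_v : ∃ K : ℝ≥0, LipschitzOnWith K (fun p : ℝ × ℝ => v p.1 p.2) (ClOmegaT T)
  du : ∀ᵐ p ∂(volume.restrict (OmegaT T)), HasDerivAt (fun y => u y p.2) (ux p.1 p.2) p.1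
  dvx : ∀ᵐ p ∂(volume.restrict (OmegaT T)), HasDerivAt (fun y => v y p.2) (vx p.1 p.2) p.1
  dvt : ∀ᵐ p ∂(volume.restrict (OmegaT T)), HasDerivAt (fun τ => v p.1 τ) (vt p.1 p.2) p.2
  vx_eq_u : ∀ᵐ p ∂(volume.restrict (OmegaT T)), vx p.1 p.2 = u p.1 p.2
  incl : ∀ᵐ p ∂(volume.restrict (OmegaT T)),
    (ux p.1 p.2, GVal b c bx f u vt p.1 p.2) ∈ Sigma0 sigma ∪ U0set sigma s1 s2 sm sp

/-- The transition set `O^w` of a subsolution `w = (u,v)`. -/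
def TransSet (T : ℝ) (sigma : ℝ → ℝ) (s1star s1 s2 s2star : ℝ) (sm sp : ℝ → ℝ)
    (b bx c f : ℝ → ℝ → ℝ) (u vt ux : ℝ → ℝ → ℝ) : Set (ℝ × ℝ) :=
  {p ∈ OmegaT T | (ux p.1 p.2, GVal b c bx f u vt p.1 p.2)
      ∈ K0set sigma s1star s1 s2 s2star ∪ U0set sigma s1 s2 sm sp}

/-- `Z_w = (u_x - S_w^-)/(S_w^+ - S_w^-)` with `S_w^± = s^±_{v_t - bu - P_u - F}`. -/
def Zfun (sm sp : ℝ → ℝ) (b bx c f : ℝ → ℝ → ℝ) (u vt ux : ℝ → ℝ → ℝ) (p : ℝ × ℝ) : ℝ :=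
  (ux p.1 p.2 - sm (GVal b c bx f u vt p.1 p.2))
    / (sp (GVal b c bx f u vt p.1 p.2) - sm (GVal b c bx f u vt p.1 p.2))

/-- The transition gauge `Γ_w^E = (1/|E|) ∫_E Z_w`. -/
def Gauge (sm sp : ℝ → ℝ) (b bx c f : ℝ → ℝ → ℝ) (u vt ux : ℝ → ℝ → ℝ)
    (E : Set (ℝ × ℝ)) : ℝ :=
  ((volume E).toReal)⁻¹ * ∫ p in E, Zfun sm sp b bx c f u vt ux p

/-- Membership in `C^{2,1}(cl Ω_T)`, with the derivative data `ux`, `uxx`, `ut`. -/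
structure C21 (T : ℝ) (u ux uxx ut : ℝ → ℝ → ℝ) : Prop where
  dx : ∀ p ∈ ClOmegaT T, HasDerivWithinAt (fun y => u y p.2) (ux p.1 p.2) (Icc (0:ℝ) 1) p.1
  dxx : ∀ p ∈ ClOmegaT T, HasDerivWithinAt (fun y => ux y p.2) (uxx p.1 p.2) (Icc (0:ℝ) 1) p.1
  dt : ∀ p ∈ ClOmegaT T, HasDerivWithinAt (fun τ => u p.1 τ) (ut p.1 p.2) (Icc (0:ℝ) T) p.2
  cont : ContinuousOn (fun p : ℝ × ℝ => u p.1 p.2) (ClOmegaT T)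
  cont_x : ContinuousOn (fun p : ℝ × ℝ => ux p.1 p.2) (ClOmegaT T)
  cont_xx : ContinuousOn (fun p : ℝ × ℝ => uxx p.1 p.2) (ClOmegaT T)
  cont_t : ContinuousOn (fun p : ℝ × ℝ => ut p.1 p.2) (ClOmegaT T)

/-- Membership in `C^{3,1}(cl Ω_T)`, with the derivative data `vx`, `vxx`, `vxxx`, `vt`. -/
structure C31 (T : ℝ) (v vx vxx vxxx vt : ℝ → ℝ → ℝ) : Prop where
  dx : ∀ p ∈ ClOmegaT T, HasDerivWithinAt (fun y => v y p.2) (vx p.1 p.2) (Icc (0:ℝ) 1) p.1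
  dxx : ∀ p ∈ ClOmegaT T, HasDerivWithinAt (fun y => vx y p.2) (vxx p.1 p.2) (Icc (0:ℝ) 1) p.1
  dxxx : ∀ p ∈ ClOmegaT T, HasDerivWithinAt (fun y => vxx y p.2) (vxxx p.1 p.2) (Icc (0:ℝ) 1) p.1
  dt : ∀ p ∈ ClOmegaT T, HasDerivWithinAt (fun τ => v p.1 τ) (vt p.1 p.2) (Icc (0:ℝ) T) p.2
  cont : ContinuousOn (fun p : ℝ × ℝ => v p.1 p.2) (ClOmegaT T)
  cont_x : ContinuousOn (fun p : ℝ × ℝ => vx p.1 p.2) (ClOmegaT T)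
  cont_xx : ContinuousOn (fun p : ℝ × ℝ => vxx p.1 p.2) (ClOmegaT T)
  cont_xxx : ContinuousOn (fun p : ℝ × ℝ => vxxx p.1 p.2) (ClOmegaT T)
  cont_t : ContinuousOn (fun p : ℝ × ℝ => vt p.1 p.2) (ClOmegaT T)

/-- `Ω¹_T = {(x,t) ∈ Ω_T : u*_x(x,t) < s^-_{r1}}`. -/
def Omega1 (T smr1 : ℝ) (usx : ℝ → ℝ → ℝ) : Set (ℝ × ℝ) :=
  {p ∈ OmegaT T | usx p.1 p.2 < smr1}

/-- `Ω²_T = {(x,t) ∈ Ω_T : s^-_{r1} < u*_x(x,t) < s^+_{r2}}`. -/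
def Omega2 (T smr1 spr2 : ℝ) (usx : ℝ → ℝ → ℝ) : Set (ℝ × ℝ) :=
  {p ∈ OmegaT T | smr1 < usx p.1 p.2 ∧ usx p.1 p.2 < spr2}

/-- `Ω³_T = {(x,t) ∈ Ω_T : u*_x(x,t) > s^+_{r2}}`. -/
def Omega3 (T spr2 : ℝ) (usx : ℝ → ℝ → ℝ) : Set (ℝ × ℝ) :=
  {p ∈ OmegaT T | spr2 < usx p.1 p.2}

/-- `Ω^{0,-}_T = {(x,t) ∈ Ω_T : u*_x(x,t) = s^-_{r1}}`. -/
def Omega0m (T smr1 : ℝ) (usx : ℝ → ℝ → ℝ) : Set (ℝ × ℝ) :=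
  {p ∈ OmegaT T | usx p.1 p.2 = smr1}

/-- `Ω^{0,+}_T = {(x,t) ∈ Ω_T : u*_x(x,t) = s^+_{r2}}`. -/
def Omega0p (T spr2 : ℝ) (usx : ℝ → ℝ → ℝ) : Set (ℝ × ℝ) :=
  {p ∈ OmegaT T | usx p.1 p.2 = spr2}

/-- The `L∞(Ω_T)` norm (essential supremum over `Ω_T` of the absolute value). -/
def EssSupAbs (T : ℝ) (g : ℝ → ℝ → ℝ) : ℝ :=
  essSup (fun p : ℝ × ℝ => |g p.1 p.2|) (volume.restrict (OmegaT T))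

/-- Hypotheses on the modified flux `σ̃ ∈ C^{1+α}(ℝ)` (with derivative `σ̃'`). -/
structure TildeHyp (α r1 r2 lamt Lamt : ℝ) (sigma sm sp sigmat sigmat' : ℝ → ℝ) : Prop where
  deriv : ∀ s : ℝ, HasDerivAt sigmat (sigmat' s) s
  holder : ∃ C : ℝ, ∀ s t : ℝ, |sigmat' s - sigmat' t| ≤ C * |s - t| ^ α
  eq_left : ∀ s : ℝ, s ≤ sm r1 → sigmat s = sigma s
  eq_right : ∀ s : ℝ, sp r2 ≤ s → sigmat s = sigma s
  lt_mid : ∀ s : ℝ, sm r1 < s → s ≤ sm r2 → sigmat s < sigma s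
  gt_mid : ∀ s : ℝ, sp r1 ≤ s → s < sp r2 → sigma s < sigmat s
  lamt_pos : 0 < lamt
  lamt_le_Lamt : lamt ≤ Lamt
  deriv_lb : ∀ s : ℝ, lamt ≤ sigmat' s
  deriv_ub : ∀ s : ℝ, sigmat' s ≤ Lamt

/-- `u*` is the classical solution in `C^{2+α,1+α/2}(cl Ω_T)` of the modified problem. -/
structure StarSol (α T : ℝ) (sigmat sigmat' : ℝ → ℝ) (b bx c f : ℝ → ℝ → ℝ) (u0 : ℝ → ℝ)
    (us usx usxx ust : ℝ → ℝ → ℝ) : Prop where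
  reg : C21 T us usx usxx ust
  holder_xx : ParabolicHolder α T usxx
  holder_t : ParabolicHolder α T ust
  pde : ∀ p ∈ OmegaT T, ust p.1 p.2 =
    sigmat' (usx p.1 p.2) * usxx p.1 p.2 + b p.1 p.2 * usx p.1 p.2
      + c p.1 p.2 * us p.1 p.2 + f p.1 p.2
  ic : ∀ x ∈ Icc (0:ℝ) 1, us x 0 = u0 x
  bc : ∀ t ∈ Icc (0:ℝ) T, usx 0 t = 0 ∧ usx 1 t = 0

/-- The auxiliary function
`v*(x,t) = ∫_0^t (σ̃(u*_x) + b u* + P_{u*} + F)(x,τ) dτ + ∫_0^x u0(y) dy`. -/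
def VStar (sigmat : ℝ → ℝ) (b bx c f : ℝ → ℝ → ℝ) (u0 : ℝ → ℝ) (us usx : ℝ → ℝ → ℝ)
    (x t : ℝ) : ℝ :=
  (∫ τ in (0:ℝ)..t, (sigmat (usx x τ) + b x τ * us x τ + Pot c bx us x τ + Fint f x τ))
    + ∫ y in (0:ℝ)..x, u0 y

/-- The classical time derivative of `v*`: `v*_t = σ̃(u*_x) + b u* + P_{u*} + F`. -/
def VStarT (sigmat : ℝ → ℝ) (b bx c f : ℝ → ℝ → ℝ) (us usx : ℝ → ℝ → ℝ) (x t : ℝ) : ℝ :=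
  sigmat (usx x t) + b x t * us x t + Pot c bx us x t + Fint f x t

/-- A `2×2` matrix `(a b; c d)` regarded as a point of Euclidean `ℝ⁴`, so that the Euclidean
distance is the Hilbert–Schmidt distance. -/
def mk4 (a b c d : ℝ) : EuclideanSpace ℝ (Fin 4) :=
  (WithLp.equiv 2 (Fin 4 → ℝ)).symm ![a, b, c, d]

/-- `K' = {(s,σ(s)) : s ∈ [s^-_{r1}, s^-_{r2}] ∪ [s^+_{r1}, s^+_{r2}]}`. -/
def Kprime (sigma : ℝ → ℝ) (sm sp : ℝ → ℝ) (r1 r2 : ℝ) : Set (ℝ × ℝ) :=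
  {q | (q.1 ∈ Icc (sm r1) (sm r2) ∨ q.1 ∈ Icc (sp r1) (sp r2)) ∧ q.2 = sigma q.1}

/-- `U' = {(s,r) : r1 < r < r2, s_r^- < s < s_r^+}`. -/
def Uprime (sm sp : ℝ → ℝ) (r1 r2 : ℝ) : Set (ℝ × ℝ) :=
  {q | r1 < q.2 ∧ q.2 < r2 ∧ sm q.2 < q.1 ∧ q.1 < sp q.2}

/-- The compact matrix set `K((x,t);u)` (as a subset of Euclidean `ℝ⁴`). -/
def KmatSet (sigma sm sp : ℝ → ℝ) (r1 r2 mstar : ℝ) (b c bx f : ℝ → ℝ → ℝ)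
    (u : ℝ → ℝ → ℝ) (x t : ℝ) : Set (EuclideanSpace ℝ (Fin 4)) :=
  {A | ∃ s c' q : ℝ, A = mk4 s c' (u x t) q ∧ |c'| ≤ mstar ∧
    (s, q - b x t * u x t - Pot c bx u x t - Fint f x t) ∈ Kprime sigma sm sp r1 r2}

/-- The condition `∇w(x,t) ∈ U((x,t);u)` for `w = (u,v)` with gradient data
`ux, ut, vx, vt`. -/
def GradInU (r1 r2 mstar : ℝ) (sm sp : ℝ → ℝ) (b c bx f : ℝ → ℝ → ℝ)
    (u ux ut vx vt : ℝ → ℝ → ℝ) (p : ℝ × ℝ) : Prop :=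
  vx p.1 p.2 = u p.1 p.2 ∧ |ut p.1 p.2| < mstar ∧
    (ux p.1 p.2, GVal b c bx f u vt p.1 p.2) ∈ Uprime sm sp r1 r2

/-- A pair `w = (u,v)` together with all relevant partial-derivative data. -/
structure PairData where
  u : ℝ → ℝ → ℝ
  ux : ℝ → ℝ → ℝ
  uxx : ℝ → ℝ → ℝ
  ut : ℝ → ℝ → ℝ
  v : ℝ → ℝ → ℝ
  vx : ℝ → ℝ → ℝ
  vxx : ℝ → ℝ → ℝ
  vxxx : ℝ → ℝ → ℝ
  vt : ℝ → ℝ → ℝ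

/-- Membership in the admissible set `𝒜` of subsolutions. Here `us, usx, ust` are the data of
`u*`, `vs` is `v*`, `E = Ω²_T`, `mstar = m*` and `GammaStar = Γ_{w*}^E`. -/
def InAdmissible (T r1 r2 mstar ε GammaStar : ℝ) (sigma sm sp : ℝ → ℝ)
    (b bx c f : ℝ → ℝ → ℝ) (us ust vs : ℝ → ℝ → ℝ) (E : Set (ℝ × ℝ))
    (W : PairData) : Prop :=
  C21 T W.u W.ux W.uxx W.ut ∧
  C31 T W.v W.vx W.vxx W.vxxx W.vt ∧
  (∃ O : Set (ℝ × ℝ), IsOpen O ∧ closure O ⊆ E ∧ IsCompact (closure O) ∧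
    volume (frontier O) = 0 ∧
    (∀ p ∈ OmegaT T \ closure O, W.u p.1 p.2 = us p.1 p.2 ∧ W.v p.1 p.2 = vs p.1 p.2) ∧
    (∀ p ∈ OmegaT T \ closure O, Pot c bx W.u p.1 p.2 = Pot c bx us p.1 p.2)) ∧
  EssSupAbs T (fun x t => W.u x t - us x t) < ε / 2 ∧
  EssSupAbs T (fun x t => W.ut x t - ust x t) < ε / 2 ∧
  (∀ p ∈ E, GradInU r1 r2 mstar sm sp b c bx f W.u W.ux W.ut W.vx W.vt p) ∧
  |Gauge sm sp b bx c f W.u W.vt W.ux E - GammaStar| < ε / 2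

/-- Membership in the set `𝒜_δ` of `δ`-approximating subsolutions (the extra integral
condition beyond membership in `𝒜`). -/
def DeltaApproxCond (r1 r2 mstar δ : ℝ) (sigma sm sp : ℝ → ℝ)
    (b bx c f : ℝ → ℝ → ℝ) (E : Set (ℝ × ℝ)) (W : PairData) : Prop :=
  (∫ p in E, Metric.infDist
      (mk4 (W.ux p.1 p.2) (W.ut p.1 p.2) (W.vx p.1 p.2) (W.vt p.1 p.2))
      (KmatSet sigma sm sp r1 r2 mstar b c bx f W.u p.1 p.2))
    ≤ δ * (volume E).toReal

section Helpers

open Topology Filter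

variable {T : ℝ}

lemma clOmegaT_compact (T : ℝ) : IsCompact (ClOmegaT T) :=
  isCompact_Icc.prod isCompact_Icc

lemma omegaT_subset_cl (T : ℝ) : OmegaT T ⊆ ClOmegaT T :=
  Set.prod_mono Ioo_subset_Icc_self Ioo_subset_Icc_self

lemma sliceX {g : ℝ → ℝ → ℝ} (hg : ContinuousOn (fun p : ℝ × ℝ => g p.1 p.2) (ClOmegaT T))
    {t : ℝ} (ht : t ∈ Icc (0:ℝ) T) : ContinuousOn (fun x => g x t) (Icc (0:ℝ) 1) :=
  hg.comp ((continuous_id.prodMk continuous_const).continuousOn) (fun _ hx => ⟨hx, ht⟩)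

lemma sliceT {g : ℝ → ℝ → ℝ} (hg : ContinuousOn (fun p : ℝ × ℝ => g p.1 p.2) (ClOmegaT T))
    {x : ℝ} (hx : x ∈ Icc (0:ℝ) 1) : ContinuousOn (fun t => g x t) (Icc (0:ℝ) T) :=
  hg.comp ((continuous_const.prodMk continuous_id).continuousOn) (fun _ ht => ⟨hx, ht⟩)

lemma bound_of_contOn {g : ℝ → ℝ → ℝ}
    (hg : ContinuousOn (fun p : ℝ × ℝ => g p.1 p.2) (ClOmegaT T)) :
    ∃ M : ℝ, 0 ≤ M ∧ ∀ x ∈ Icc (0:ℝ) 1, ∀ t ∈ Icc (0:ℝ) T, |g x t| ≤ M := by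
  obtain ⟨C, hC⟩ := (clOmegaT_compact T).exists_bound_of_continuousOn hg
  refine ⟨max C 0, le_max_right _ _, fun x hx t ht => ?_⟩
  have := hC (x, t) ⟨hx, ht⟩
  rw [Real.norm_eq_abs] at this
  exact this.trans (le_max_left _ _)

lemma Icc01_eq_uIcc : Icc (0:ℝ) 1 = Set.uIcc (0:ℝ) 1 := (Set.uIcc_of_le (by norm_num)).symm

lemma prim_contX {g : ℝ → ℝ → ℝ}
    (hg : ContinuousOn (fun p : ℝ × ℝ => g p.1 p.2) (ClOmegaT T))
    {t : ℝ} (ht : t ∈ Icc (0:ℝ) T) :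
    ContinuousOn (fun x => ∫ y in (0:ℝ)..x, g y t) (Icc (0:ℝ) 1) := by
  have h : IntegrableOn (fun y => g y t) (Set.uIcc (0:ℝ) 1) volume := by
    rw [← Icc01_eq_uIcc]; exact (sliceX hg ht).integrableOn_Icc
  rw [Icc01_eq_uIcc]
  exact intervalIntegral.continuousOn_primitive_interval h

lemma prim_contT {g : ℝ → ℝ → ℝ}
    (hg : ContinuousOn (fun p : ℝ × ℝ => g p.1 p.2) (ClOmegaT T))
    {x : ℝ} (hx : x ∈ Icc (0:ℝ) 1) :
    ContinuousOn (fun t => ∫ y in (0:ℝ)..x, g y t) (Icc (0:ℝ) T) := by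
  obtain ⟨M, hM0, hM⟩ := bound_of_contOn hg
  have hsub : Ioc (0:ℝ) x ⊆ Icc (0:ℝ) 1 :=
    Ioc_subset_Icc_self.trans (Icc_subset_Icc le_rfl hx.2)
  have hre : ∀ t : ℝ, (∫ y in (0:ℝ)..x, g y t)
      = ∫ y, g y t ∂(volume.restrict (Ioc (0:ℝ) x)) := by
    intro t; rw [intervalIntegral.integral_of_le hx.1]
  simp only [hre]
  apply continuousOn_of_dominated (bound := fun _ => M)
  · intro t ht
    exact ((sliceX hg ht).mono hsub).aestronglyMeasurable measurableSet_Ioc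
  · intro t ht
    refine ae_restrict_of_forall_mem measurableSet_Ioc (fun y hy => ?_)
    rw [Real.norm_eq_abs]; exact hM y (hsub hy) t ht
  · exact integrableOn_const measure_Ioc_lt_top.ne
  · exact ae_restrict_of_forall_mem measurableSet_Ioc (fun y hy => sliceT hg (hsub hy))

lemma prim_bound {g : ℝ → ℝ → ℝ} {M : ℝ} (hM0 : 0 ≤ M)
    (hM : ∀ x ∈ Icc (0:ℝ) 1, ∀ t ∈ Icc (0:ℝ) T, |g x t| ≤ M)
    {x t : ℝ} (hx : x ∈ Icc (0:ℝ) 1) (ht : t ∈ Icc (0:ℝ) T) :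
    |∫ y in (0:ℝ)..x, g y t| ≤ M := by
  have h1 : ∀ y ∈ Set.uIoc (0:ℝ) x, ‖g y t‖ ≤ M := by
    intro y hy
    rw [Set.uIoc_of_le hx.1] at hy
    rw [Real.norm_eq_abs]
    exact hM y ⟨hy.1.le, hy.2.trans hx.2⟩ t ht
  have := intervalIntegral.norm_integral_le_of_norm_le_const h1
  rw [Real.norm_eq_abs] at this
  refine this.trans ?_
  have : |x - 0| ≤ 1 := by rw [sub_zero, abs_of_nonneg hx.1]; exact hx.2
  nlinarith

lemma prim_intervalIntegrable {g : ℝ → ℝ → ℝ}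
    (hg : ContinuousOn (fun p : ℝ × ℝ => g p.1 p.2) (ClOmegaT T))
    {t : ℝ} (ht : t ∈ Icc (0:ℝ) T) {a b : ℝ} (ha : a ∈ Icc (0:ℝ) 1) (hb : b ∈ Icc (0:ℝ) 1) :
    IntervalIntegrable (fun y => g y t) volume a b := by
  apply ContinuousOn.intervalIntegrable
  exact (sliceX hg ht).mono (Set.uIcc_subset_Icc ha hb)

lemma prim_deriv {g : ℝ → ℝ → ℝ}
    (hg : ContinuousOn (fun p : ℝ × ℝ => g p.1 p.2) (ClOmegaT T))
    {x t : ℝ} (hx : x ∈ Ioo (0:ℝ) 1) (ht : t ∈ Icc (0:ℝ) T) :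
    HasDerivAt (fun y => ∫ z in (0:ℝ)..y, g z t) (g x t) x := by
  have hc : ContinuousOn (fun y => g y t) (Icc (0:ℝ) 1) := sliceX hg ht
  have hnb : Icc (0:ℝ) 1 ∈ 𝓝 x := Icc_mem_nhds hx.1 hx.2
  refine intervalIntegral.integral_hasDerivAt_right
    (prim_intervalIntegrable hg ht ⟨le_rfl, by norm_num⟩ ⟨hx.1.le, hx.2.le⟩)
    ⟨Icc (0:ℝ) 1, hnb, hc.aestronglyMeasurable measurableSet_Icc⟩
    (hc.continuousAt hnb)

end Helpers

open Topology Filter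

set_option maxHeartbeats 1000000 in
/-- `w* = (u*, v*)` is a subsolution of the nonlocal differential inclusion,
`E = Ω²_T` is a nonempty subset of the transition set `O^{w*}`, and the transition gauge
`Γ_{w*}^E` is given by the explicit formula and lies strictly between `0` and `1`. -/
theorem wstar_is_subsolution_with_gauge
    (α s1 s2 lam Lam T s1star s2star r1 r2 x0 lamt Lamt : ℝ)
    (sigma sigma' sm sp sigmat sigmat' : ℝ → ℝ)
    (b bx c f : ℝ → ℝ → ℝ) (d : ℝ → ℝ) (u0 u0' u0'' : ℝ → ℝ)
    (us usx usxx ust : ℝ → ℝ → ℝ)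
    (hT : 0 < T)
    (hflux : FluxHyp α s1 s2 lam Lam sigma sigma')
    (hcoeff : CoeffHyp α T b bx c f d)
    (hinit : InitHyp α u0 u0' u0'')
    (hs1star : 0 ≤ s1star) (hs1star' : s1star < s1) (hs1star_eq : sigma s1star = sigma s2)
    (hs2star : s2 < s2star) (hs2star_eq : sigma s2star = sigma s1)
    (hsm : ∀ r ∈ Icc (sigma s2) (sigma s1), sm r ∈ Icc s1star s1 ∧ sigma (sm r) = r)
    (hsp : ∀ r ∈ Icc (sigma s2) (sigma s1), sp r ∈ Icc s2 s2star ∧ sigma (sp r) = r)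
    (hr1 : sigma s2 < r1) (hr12 : r1 < r2) (hr2 : r2 < sigma s1)
    (hx0 : x0 ∈ Ioo (0:ℝ) 1) (hx0l : sm r1 < u0' x0) (hx0r : u0' x0 < sp r2)
    (htilde : TildeHyp α r1 r2 lamt Lamt sigma sm sp sigmat sigmat')
    (hstar : StarSol α T sigmat sigmat' b bx c f u0 us usx usxx ust) :
    IsSubsolution T sigma s1 s2 sm sp b bx c f
      us (VStar sigmat b bx c f u0 us usx) usx us (VStarT sigmat b bx c f us usx) ∧
    (Omega2 T (sm r1) (sp r2) usx).Nonempty ∧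
    Omega2 T (sm r1) (sp r2) usx
      ⊆ TransSet T sigma s1star s1 s2 s2star sm sp b bx c f
          us (VStarT sigmat b bx c f us usx) usx ∧
    Gauge sm sp b bx c f us (VStarT sigmat b bx c f us usx) usx (Omega2 T (sm r1) (sp r2) usx)
      = ((volume (Omega2 T (sm r1) (sp r2) usx)).toReal)⁻¹
          * ∫ p in Omega2 T (sm r1) (sp r2) usx,
              (usx p.1 p.2 - sm (sigmat (usx p.1 p.2)))
                / (sp (sigmat (usx p.1 p.2)) - sm (sigmat (usx p.1 p.2))) ∧
    0 < Gauge sm sp b bx c f us (VStarT sigmat b bx c f us usx) usx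
          (Omega2 T (sm r1) (sp r2) usx) ∧
    Gauge sm sp b bx c f us (VStarT sigmat b bx c f us usx) usx
        (Omega2 T (sm r1) (sp r2) usx) < 1 := by
  classical
  -- notation
  set HH := VStarT sigmat b bx c f us usx with hHH
  set V := VStar sigmat b bx c f u0 us usx with hV
  -- basic facts
  have hT0 : (0:ℝ) ∈ Icc (0:ℝ) T := ⟨le_rfl, hT.le⟩
  have h0m : (0:ℝ) ∈ Icc (0:ℝ) 1 := ⟨le_rfl, by norm_num⟩
  have hOmegaOpen : IsOpen (OmegaT T) := isOpen_Ioo.prod isOpen_Ioo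
  have hOmegaMeas : MeasurableSet (OmegaT T) := hOmegaOpen.measurableSet
  have hclsub := omegaT_subset_cl T
  -- continuity package
  have hus := hstar.reg.cont
  have husx := hstar.reg.cont_x
  have hust := hstar.reg.cont_t
  have hsigc : Continuous sigmat :=
    Differentiable.continuous (fun s => (htilde.deriv s).differentiableAt)
  have hsigusx : ContinuousOn (fun p : ℝ × ℝ => sigmat (usx p.1 p.2)) (ClOmegaT T) :=
    hsigc.comp_continuousOn husx
  have hbus : ContinuousOn (fun p : ℝ × ℝ => b p.1 p.2 * us p.1 p.2) (ClOmegaT T) :=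
    hcoeff.b_cont.mul hus
  have hgc : ContinuousOn
      (fun p : ℝ × ℝ => (c p.1 p.2 - bx p.1 p.2) * us p.1 p.2) (ClOmegaT T) :=
    (hcoeff.c_cont.sub hcoeff.bx_cont).mul hus
  have hu0cont : ContinuousOn u0 (Icc (0:ℝ) 1) :=
    fun x hx => (hinit.deriv1 x hx).continuousWithinAt
  have hVdef : ∀ x t : ℝ, V x t = (∫ τ in (0:ℝ)..t, HH x τ) + ∫ y in (0:ℝ)..x, u0 y :=
    fun _ _ => rfl
  -- slice continuity of HH
  have hHcontX : ∀ t ∈ Icc (0:ℝ) T, ContinuousOn (fun y => HH y t) (Icc (0:ℝ) 1) := by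
    intro t ht
    have h1 := sliceX (g := fun x t => sigmat (usx x t)) hsigusx ht
    have h2 := sliceX (g := fun x t => b x t * us x t) hbus ht
    have h3 := prim_contX (g := fun x t => (c x t - bx x t) * us x t) hgc ht
    have h4 := prim_contX (g := f) hcoeff.f_cont ht
    simp only [hHH, VStarT, Pot, Fint]
    exact ((h1.add h2).add h3).add h4
  have hHcontT : ∀ x ∈ Icc (0:ℝ) 1, ContinuousOn (fun t => HH x t) (Icc (0:ℝ) T) := by
    intro x hx
    have h1 := sliceT (g := fun x t => sigmat (usx x t)) hsigusx hx
    have h2 := sliceT (g := fun x t => b x t * us x t) hbus hx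
    have h3 := prim_contT (g := fun x t => (c x t - bx x t) * us x t) hgc hx
    have h4 := prim_contT (g := f) hcoeff.f_cont hx
    simp only [hHH, VStarT, Pot, Fint]
    exact ((h1.add h2).add h3).add h4
  -- bound for HH
  obtain ⟨M1, hM10, hM1⟩ := bound_of_contOn (g := fun x t => sigmat (usx x t)) hsigusx
  obtain ⟨M2, hM20, hM2⟩ := bound_of_contOn (g := fun x t => b x t * us x t) hbus
  obtain ⟨M3, hM30, hM3⟩ := bound_of_contOn (g := fun x t => (c x t - bx x t) * us x t) hgc
  obtain ⟨M4, hM40, hM4⟩ := bound_of_contOn (g := f) hcoeff.f_cont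
  have hHbound : ∀ x ∈ Icc (0:ℝ) 1, ∀ t ∈ Icc (0:ℝ) T, |HH x t| ≤ M1 + M2 + M3 + M4 := by
    intro x hx t ht
    have b3 := prim_bound hM30 hM3 hx ht
    have b4 := prim_bound hM40 hM4 hx ht
    have h1 := hM1 x hx t ht
    have h2 := hM2 x hx t ht
    simp only [hHH, VStarT, Pot, Fint]
    exact (abs_add_le _ _).trans (add_le_add ((abs_add_le _ _).trans
      (add_le_add ((abs_add_le _ _).trans (add_le_add h1 h2)) b3)) b4)
  -- spatial derivative of HH at interior points
  have hHderiv : ∀ p ∈ OmegaT T, HasDerivAt (fun y => HH y p.2) (ust p.1 p.2) p.1 := by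
    rintro ⟨x, t⟩ hp
    have hx : x ∈ Ioo (0:ℝ) 1 := hp.1
    have ht : t ∈ Ioo (0:ℝ) T := hp.2
    have htI : t ∈ Icc (0:ℝ) T := ⟨ht.1.le, ht.2.le⟩
    have hcl : ((x, t) : ℝ × ℝ) ∈ ClOmegaT T := hclsub hp
    have hnb : Icc (0:ℝ) 1 ∈ 𝓝 x := Icc_mem_nhds hx.1 hx.2
    have h1 : HasDerivAt (fun y => usx y t) (usxx x t) x :=
      (hstar.reg.dxx (x, t) hcl).hasDerivAt hnb
    have hsig : HasDerivAt (fun y => sigmat (usx y t)) (sigmat' (usx x t) * usxx x t) x :=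
      (htilde.deriv (usx x t)).comp x h1
    have hb' : HasDerivAt (fun y => b y t) (bx x t) x :=
      (hcoeff.b_deriv (x, t) hcl).hasDerivAt hnb
    have hu' : HasDerivAt (fun y => us y t) (usx x t) x :=
      (hstar.reg.dx (x, t) hcl).hasDerivAt hnb
    have hbu : HasDerivAt (fun y => b y t * us y t)
        (bx x t * us x t + b x t * usx x t) x := hb'.mul hu'
    have hPot : HasDerivAt (fun y => ∫ z in (0:ℝ)..y, (c z t - bx z t) * us z t)
        ((c x t - bx x t) * us x t) x := prim_deriv (g := fun x t => (c x t - bx x t) * us x t) hgc hx htI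
    have hF : HasDerivAt (fun y => ∫ z in (0:ℝ)..y, f z t) (f x t) x :=
      prim_deriv (g := f) hcoeff.f_cont hx htI
    have hsum := ((hsig.add hbu).add hPot).add hF
    have hpde := hstar.pde (x, t) hp
    simp only [hHH, VStarT, Pot, Fint]
    refine hsum.congr_deriv ?_
    rw [hpde]; ring
  -- time FTC for us
  have husTime : ∀ z ∈ Icc (0:ℝ) 1, ∀ t ∈ Icc (0:ℝ) T,
      (∫ τ in (0:ℝ)..t, ust z τ) = us z t - u0 z := by
    intro z hz t ht
    have hco : ContinuousOn (fun τ => us z τ) (Icc (0:ℝ) t) :=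
      (sliceT (g := us) hus hz).mono (Icc_subset_Icc le_rfl ht.2)
    have hint : IntervalIntegrable (fun τ => ust z τ) volume 0 t :=
      ContinuousOn.intervalIntegrable ((sliceT (g := ust) hust hz).mono (Set.uIcc_subset_Icc hT0 ht))
    have hder : ∀ τ ∈ Ioo (0:ℝ) t, HasDerivWithinAt (fun τ' => us z τ') (ust z τ) (Ioi τ) τ := by
      intro τ hτ
      have hmem : ((z, τ) : ℝ × ℝ) ∈ ClOmegaT T := ⟨hz, ⟨hτ.1.le, hτ.2.le.trans ht.2⟩⟩
      exact ((hstar.reg.dt (z, τ) hmem).hasDerivAt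
        (Icc_mem_nhds hτ.1 (lt_of_lt_of_le hτ.2 ht.2))).hasDerivWithinAt
    rw [intervalIntegral.integral_eq_sub_of_hasDeriv_right_of_le ht.1 hco hder hint,
      hstar.ic z hz]
  -- spatial FTC for HH
  have hHdiffX : ∀ t ∈ Ioo (0:ℝ) T, ∀ y ∈ Icc (0:ℝ) 1,
      (∫ z in (0:ℝ)..y, ust z t) = HH y t - HH 0 t := by
    intro t ht y hy
    have htI : t ∈ Icc (0:ℝ) T := ⟨ht.1.le, ht.2.le⟩
    have hcX : ContinuousOn (fun x' => HH x' t) (Icc (0:ℝ) y) :=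
      (hHcontX t htI).mono (Icc_subset_Icc le_rfl hy.2)
    have hder : ∀ z ∈ Ioo (0:ℝ) y, HasDerivWithinAt (fun x' => HH x' t) (ust z t) (Ioi z) z :=
      fun z hz => (hHderiv (z, t) ⟨⟨hz.1, hz.2.trans_le hy.2⟩, ht⟩).hasDerivWithinAt
    have hint : IntervalIntegrable (fun z => ust z t) volume 0 y :=
      ContinuousOn.intervalIntegrable ((sliceX (g := ust) hust htI).mono (Set.uIcc_subset_Icc h0m hy))
    exact intervalIntegral.integral_eq_sub_of_hasDeriv_right_of_le hy.1 hcX hder hint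
  -- Fubini
  have hswap : ∀ t ∈ Icc (0:ℝ) T, ∀ y ∈ Icc (0:ℝ) 1,
      (∫ τ in (0:ℝ)..t, (∫ z in (0:ℝ)..y, ust z τ))
        = ∫ z in (0:ℝ)..y, (∫ τ in (0:ℝ)..t, ust z τ) := by
    intro t ht y hy
    rw [intervalIntegral.integral_of_le ht.1, intervalIntegral.integral_of_le hy.1]
    simp_rw [intervalIntegral.integral_of_le hy.1, intervalIntegral.integral_of_le ht.1]
    obtain ⟨M, hM0, hM⟩ := bound_of_contOn (g := ust) hust
    have hsub : (Ioc (0:ℝ) t) ×ˢ (Ioc (0:ℝ) y) ⊆ (Icc (0:ℝ) T) ×ˢ (Icc (0:ℝ) 1) :=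
      Set.prod_mono (Ioc_subset_Icc_self.trans (Icc_subset_Icc le_rfl ht.2))
        (Ioc_subset_Icc_self.trans (Icc_subset_Icc le_rfl hy.2))
    have hmeasS : MeasurableSet ((Ioc (0:ℝ) t) ×ˢ (Ioc (0:ℝ) y)) :=
      measurableSet_Ioc.prod measurableSet_Ioc
    have hcont : ContinuousOn (Function.uncurry fun τ z => ust z τ)
        ((Icc (0:ℝ) T) ×ˢ (Icc (0:ℝ) 1)) :=
      hust.comp continuous_swap.continuousOn (fun q hq => ⟨hq.2, hq.1⟩)
    have hInt : Integrable (Function.uncurry fun τ z => ust z τ)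
        ((volume.restrict (Ioc (0:ℝ) t)).prod (volume.restrict (Ioc (0:ℝ) y))) := by
      rw [Measure.prod_restrict, ← Measure.volume_eq_prod]
      refine Integrable.mono' (g := fun _ => M) (integrableOn_const (ne_of_lt ?_))
        ((hcont.mono hsub).aestronglyMeasurable hmeasS) ?_
      · exact lt_of_le_of_lt (measure_mono hsub)
          (isCompact_Icc.prod isCompact_Icc).measure_lt_top
      · refine ae_restrict_of_forall_mem hmeasS (fun q hq => ?_)
        have hq' := hsub hq
        rw [Real.norm_eq_abs]
        exact hM q.2 hq'.2 q.1 hq'.1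
    exact MeasureTheory.integral_integral_swap hInt
  -- the key identity V(y,t) = V(0,t) + ∫_0^y us
  have hVid : ∀ t ∈ Icc (0:ℝ) T, ∀ y ∈ Icc (0:ℝ) 1,
      V y t = V 0 t + ∫ z in (0:ℝ)..y, us z t := by
    intro t ht y hy
    have hInty : IntervalIntegrable (fun τ => HH y τ) volume 0 t :=
      ContinuousOn.intervalIntegrable ((hHcontT y hy).mono (Set.uIcc_subset_Icc hT0 ht))
    have hInt0 : IntervalIntegrable (fun τ => HH 0 τ) volume 0 t :=
      ContinuousOn.intervalIntegrable ((hHcontT 0 h0m).mono (Set.uIcc_subset_Icc hT0 ht))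
    have hA : (∫ τ in (0:ℝ)..t, HH y τ) - (∫ τ in (0:ℝ)..t, HH 0 τ)
        = ∫ τ in (0:ℝ)..t, (∫ z in (0:ℝ)..y, ust z τ) := by
      rw [← intervalIntegral.integral_sub hInty hInt0]
      apply intervalIntegral.integral_congr_ae
      have hTnull : (volume : Measure ℝ) {T} = 0 := measure_singleton T
      filter_upwards [compl_mem_ae_iff.2 hTnull] with τ hτ hmem
      rw [Set.uIoc_of_le ht.1] at hmem
      have hτT : τ < T := lt_of_le_of_ne (hmem.2.trans ht.2) (by simpa using hτ)
      exact (hHdiffX τ ⟨hmem.1, hτT⟩ y hy).symm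
    have hB : (∫ τ in (0:ℝ)..t, (∫ z in (0:ℝ)..y, ust z τ))
        = ∫ z in (0:ℝ)..y, (us z t - u0 z) := by
      rw [hswap t ht y hy]
      apply intervalIntegral.integral_congr
      intro z hz
      rw [Set.uIcc_of_le hy.1] at hz
      exact husTime z ⟨hz.1, hz.2.trans hy.2⟩ t ht
    have hInt_us : IntervalIntegrable (fun z => us z t) volume 0 y :=
      ContinuousOn.intervalIntegrable ((sliceX (g := us) hus ht).mono (Set.uIcc_subset_Icc h0m hy))
    have hInt_u0 : IntervalIntegrable u0 volume 0 y :=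
      ContinuousOn.intervalIntegrable (hu0cont.mono (Set.uIcc_subset_Icc h0m hy))
    have hC : (∫ z in (0:ℝ)..y, (us z t - u0 z))
        = (∫ z in (0:ℝ)..y, us z t) - ∫ z in (0:ℝ)..y, u0 z :=
      intervalIntegral.integral_sub hInt_us hInt_u0
    have hD : (∫ τ in (0:ℝ)..t, HH y τ) = (∫ τ in (0:ℝ)..t, HH 0 τ)
        + ((∫ z in (0:ℝ)..y, us z t) - ∫ z in (0:ℝ)..y, u0 z) := by
      rw [← hC, ← hB, ← hA]; ring
    rw [hVdef y t, hVdef 0 t, hD, intervalIntegral.integral_same]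
    ring
  -- GVal identity
  have hGall : ∀ x t : ℝ, GVal b c bx f us HH x t = sigmat (usx x t) := by
    intro x t
    simp only [hHH, GVal, VStarT]
    ring
  -- monotonicity of sigma and sigmat
  have hσL : StrictMonoOn sigma (Icc s1star s1) := by
    apply strictMonoOn_of_deriv_pos (convex_Icc _ _)
    · exact fun s hs => ((hflux.deriv_left s hs.2).continuousWithinAt).mono Icc_subset_Iic_self
    · intro s hs
      rw [interior_Icc] at hs
      rw [((hflux.deriv_left s hs.2.le).hasDerivAt (Iic_mem_nhds hs.2)).deriv]
      exact hflux.deriv_pos s (Or.inl hs.2)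
  have hσR : StrictMonoOn sigma (Icc s2 s2star) := by
    apply strictMonoOn_of_deriv_pos (convex_Icc _ _)
    · exact fun s hs => ((hflux.deriv_right s hs.1).continuousWithinAt).mono Icc_subset_Ici_self
    · intro s hs
      rw [interior_Icc] at hs
      rw [((hflux.deriv_right s hs.1.le).hasDerivAt (Ici_mem_nhds hs.1)).deriv]
      exact hflux.deriv_pos s (Or.inr hs.1)
  have hσt : StrictMono sigmat := by
    apply strictMono_of_deriv_pos
    intro s
    rw [(htilde.deriv s).deriv]
    exact htilde.lamt_pos.trans_le (htilde.deriv_lb s)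
  have hr1mem : r1 ∈ Icc (sigma s2) (sigma s1) := ⟨hr1.le, (hr12.trans hr2).le⟩
  have hr2mem : r2 ∈ Icc (sigma s2) (sigma s1) := ⟨(hr1.trans hr12).le, hr2.le⟩
  -- the key pointwise geometry
  have hkey : ∀ s : ℝ, sm r1 < s → s < sp r2 →
      (r1 < sigmat s ∧ sigmat s < r2) ∧ sm (sigmat s) < s ∧ s < sp (sigmat s) := by
    intro s hls hrs
    obtain ⟨h1m, h1v⟩ := hsm r1 hr1mem
    obtain ⟨h2m, h2v⟩ := hsm r2 hr2mem
    obtain ⟨h3m, h3v⟩ := hsp r1 hr1mem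
    obtain ⟨h4m, h4v⟩ := hsp r2 hr2mem
    have e1 : sigmat (sm r1) = r1 := by rw [htilde.eq_left _ le_rfl, h1v]
    have e2 : sigmat (sp r2) = r2 := by rw [htilde.eq_right _ le_rfl, h4v]
    have hrl : r1 < sigmat s := by rw [← e1]; exact hσt hls
    have hrr : sigmat s < r2 := by rw [← e2]; exact hσt hrs
    have hrmem : sigmat s ∈ Icc (sigma s2) (sigma s1) := ⟨(hr1.trans hrl).le, (hrr.trans hr2).le⟩
    obtain ⟨h5m, h5v⟩ := hsm (sigmat s) hrmem
    obtain ⟨h6m, h6v⟩ := hsp (sigmat s) hrmem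
    refine ⟨⟨hrl, hrr⟩, ?_, ?_⟩
    · by_contra hcon
      push_neg at hcon
      have hsmem : s ∈ Icc s1star s1 := ⟨h1m.1.trans hls.le, hcon.trans h5m.2⟩
      have hlt2 : sm (sigmat s) < sm r2 := by
        by_contra hc2
        push_neg at hc2
        have hmm := hσL.monotoneOn h2m h5m hc2
        rw [h2v, h5v] at hmm
        exact absurd hmm (not_le.2 hrr)
      have hmid := htilde.lt_mid s hls (hcon.trans hlt2.le)
      have hmono := hσL.monotoneOn hsmem h5m hcon
      rw [h5v] at hmono
      linarith
    · by_contra hcon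
      push_neg at hcon
      have hsmem : s ∈ Icc s2 s2star := ⟨h6m.1.trans hcon, hrs.le.trans h4m.2⟩
      have hlt3 : sp r1 < sp (sigmat s) := by
        by_contra hc2
        push_neg at hc2
        have hmm := hσR.monotoneOn h6m h3m hc2
        rw [h3v, h6v] at hmm
        exact absurd hmm (not_le.2 hrl)
      have hmid := htilde.gt_mid s (hlt3.le.trans hcon) hrs
      have hmono := hσR.monotoneOn h6m hsmem hcon
      rw [h6v] at hmono
      linarith
  have hU0 : ∀ s : ℝ, sm r1 < s → s < sp r2 →
      ((s, sigmat s) : ℝ × ℝ) ∈ U0set sigma s1 s2 sm sp := by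
    intro s h1 h2
    obtain ⟨⟨ha, hb⟩, hc, hd⟩ := hkey s h1 h2
    exact ⟨hr1.trans ha, hb.trans hr2, hc, hd⟩
  -- E and its properties
  set E := Omega2 T (sm r1) (sp r2) usx with hE
  have hEopen : IsOpen E := by
    have : E = OmegaT T ∩ (fun p : ℝ × ℝ => usx p.1 p.2) ⁻¹' (Ioo (sm r1) (sp r2)) := rfl
    rw [this]
    exact ContinuousOn.isOpen_inter_preimage (husx.mono hclsub) hOmegaOpen isOpen_Ioo
  have hEmeas : MeasurableSet E := hEopen.measurableSet
  have hEsubCl : E ⊆ ClOmegaT T := fun p hp => hclsub hp.1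
  -- Nonemptiness of E
  have hx0m : x0 ∈ Icc (0:ℝ) 1 := ⟨hx0.1.le, hx0.2.le⟩
  have husx0 : usx x0 0 = u0' x0 := by
    have hcl0 : ((x0, 0) : ℝ × ℝ) ∈ ClOmegaT T := ⟨hx0m, hT0⟩
    have hd1 : HasDerivWithinAt (fun y => us y 0) (usx x0 0) (Icc (0:ℝ) 1) x0 :=
      hstar.reg.dx (x0, 0) hcl0
    have hd1' : HasDerivWithinAt u0 (usx x0 0) (Icc (0:ℝ) 1) x0 :=
      hd1.congr (fun y hy => (hstar.ic y hy).symm) (hstar.ic x0 hx0m).symm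
    have hnb : Icc (0:ℝ) 1 ∈ 𝓝 x0 := Icc_mem_nhds hx0.1 hx0.2
    exact (hd1.hasDerivAt hnb).unique
      (((hinit.deriv1 x0 hx0m).congr (fun y hy => hstar.ic y hy) (hstar.ic x0 hx0m)).hasDerivAt hnb)
  have hNE : E.Nonempty := by
    have hk0 : ContinuousWithinAt (fun t => usx x0 t) (Icc (0:ℝ) T) 0 :=
      (sliceT (g := usx) husx hx0m) 0 hT0
    rw [Metric.continuousWithinAt_iff] at hk0
    have hεpos : 0 < min (u0' x0 - sm r1) (sp r2 - u0' x0) :=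
      lt_min (by linarith) (by linarith)
    obtain ⟨δ, hδpos, hδ⟩ := hk0 _ hεpos
    have ht1pos : 0 < min (δ / 2) (T / 2) := lt_min (by linarith) (by linarith)
    have ht1T : min (δ / 2) (T / 2) < T := lt_of_le_of_lt (min_le_right _ _) (by linarith)
    have hdist : dist (min (δ / 2) (T / 2)) 0 < δ := by
      rw [Real.dist_eq, sub_zero, abs_of_pos ht1pos]
      exact lt_of_le_of_lt (min_le_left _ _) (by linarith)
    have hclose := hδ ⟨ht1pos.le, ht1T.le⟩ hdist
    rw [Real.dist_eq, husx0] at hclose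
    have habs := abs_lt.1 hclose
    have hle1 : min (u0' x0 - sm r1) (sp r2 - u0' x0) ≤ u0' x0 - sm r1 := min_le_left _ _
    have hle2 : min (u0' x0 - sm r1) (sp r2 - u0' x0) ≤ sp r2 - u0' x0 := min_le_right _ _
    refine ⟨(x0, min (δ / 2) (T / 2)), ⟨⟨hx0, ⟨ht1pos, ht1T⟩⟩, ?_, ?_⟩⟩
    · linarith [habs.1, hle1]
    · linarith [habs.2, hle2]
  -- bounds on Zfun over E
  have hZmem : ∀ p ∈ E, 0 < Zfun sm sp b bx c f us HH usx p ∧ Zfun sm sp b bx c f us HH usx p < 1 := by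
    rintro ⟨x, t⟩ ⟨hp, h1, h2⟩
    obtain ⟨⟨ha, hb⟩, hc, hd⟩ := hkey (usx x t) h1 h2
    have hrmem : sigmat (usx x t) ∈ Icc (sigma s2) (sigma s1) :=
      ⟨(hr1.trans ha).le, (hb.trans hr2).le⟩
    obtain ⟨h5m, -⟩ := hsm (sigmat (usx x t)) hrmem
    obtain ⟨h6m, -⟩ := hsp (sigmat (usx x t)) hrmem
    have hden : 0 < sp (sigmat (usx x t)) - sm (sigmat (usx x t)) := by
      have := hflux.s1_lt_s2
      have := h5m.2
      have := h6m.1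
      linarith
    constructor
    · simp only [Zfun, hGall]
      exact div_pos (by linarith) hden
    · simp only [Zfun, hGall]
      exact (div_lt_one hden).2 (by linarith)
  -- measure of E
  have hEpos : 0 < volume E := hEopen.measure_pos volume hNE
  have hEfin : volume E < ⊤ :=
    lt_of_le_of_lt (measure_mono hEsubCl) (clOmegaT_compact T).measure_lt_top
  have hEtR : 0 < (volume E).toReal := ENNReal.toReal_pos hEpos.ne' hEfin.ne
  -- measurability and integrability of Zfun on E
  have hsmMono : ∀ r ∈ Icc (sigma s2) (sigma s1), ∀ r' ∈ Icc (sigma s2) (sigma s1),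
      r ≤ r' → sm r ≤ sm r' := by
    intro r hr r' hr' hle
    by_contra hcon
    push_neg at hcon
    have hmm := hσL.monotoneOn (hsm r' hr').1 (hsm r hr).1 hcon.le
    rw [(hsm r' hr').2, (hsm r hr).2] at hmm
    have : r = r' := le_antisymm hle hmm
    rw [this] at hcon
    exact lt_irrefl _ hcon
  have hspMono : ∀ r ∈ Icc (sigma s2) (sigma s1), ∀ r' ∈ Icc (sigma s2) (sigma s1),
      r ≤ r' → sp r ≤ sp r' := by
    intro r hr r' hr' hle
    by_contra hcon
    push_neg at hcon
    have hmm := hσR.monotoneOn (hsp r' hr').1 (hsp r hr).1 hcon.le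
    rw [(hsp r' hr').2, (hsp r hr).2] at hmm
    have : r = r' := le_antisymm hle hmm
    rw [this] at hcon
    exact lt_irrefl _ hcon
  have hclampmem : ∀ r : ℝ, max (sigma s2) (min r (sigma s1)) ∈ Icc (sigma s2) (sigma s1) :=
    fun r => ⟨le_max_left _ _, max_le hflux.sigma_s2_lt_s1.le (min_le_right _ _)⟩
  have hsmM : Measurable (fun r => sm (max (sigma s2) (min r (sigma s1)))) := by
    apply Monotone.measurable
    intro r r' h
    exact hsmMono _ (hclampmem r) _ (hclampmem r') (max_le_max le_rfl (min_le_min h le_rfl))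
  have hspM : Measurable (fun r => sp (max (sigma s2) (min r (sigma s1)))) := by
    apply Monotone.measurable
    intro r r' h
    exact hspMono _ (hclampmem r) _ (hclampmem r') (max_le_max le_rfl (min_le_min h le_rfl))
  have hφM : Measurable (fun s : ℝ =>
      (s - sm (max (sigma s2) (min (sigmat s) (sigma s1))))
        / (sp (max (sigma s2) (min (sigmat s) (sigma s1)))
            - sm (max (sigma s2) (min (sigmat s) (sigma s1))))) :=
    (measurable_id.sub (hsmM.comp hsigc.measurable)).div
      ((hspM.comp hsigc.measurable).sub (hsmM.comp hsigc.measurable))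
  have husxAE : AEMeasurable (fun p : ℝ × ℝ => usx p.1 p.2) (volume.restrict E) :=
    (husx.mono hEsubCl).aemeasurable hEmeas
  have hZae : AEMeasurable (Zfun sm sp b bx c f us HH usx) (volume.restrict E) := by
    refine AEMeasurable.congr (hφM.comp_aemeasurable husxAE) ?_
    refine ae_restrict_of_forall_mem hEmeas (fun p hp => ?_)
    obtain ⟨hp1, h1, h2⟩ := hp
    obtain ⟨⟨ha, hb⟩, -, -⟩ := hkey (usx p.1 p.2) h1 h2
    have hmm : max (sigma s2) (min (sigmat (usx p.1 p.2)) (sigma s1)) = sigmat (usx p.1 p.2) := by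
      rw [min_eq_left (hb.trans hr2).le, max_eq_right (hr1.trans ha).le]
    simp only [Function.comp_apply, Zfun, hGall, hmm]
  have hZint : IntegrableOn (Zfun sm sp b bx c f us HH usx) E volume := by
    refine Integrable.mono' (g := fun _ => (1:ℝ)) (integrableOn_const hEfin.ne)
      hZae.aestronglyMeasurable ?_
    refine ae_restrict_of_forall_mem hEmeas (fun p hp => ?_)
    obtain ⟨h0, h1⟩ := hZmem p hp
    rw [Real.norm_eq_abs, abs_of_pos h0]
    exact h1.le
  have hIpos : 0 < ∫ p in E, Zfun sm sp b bx c f us HH usx p := by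
    refine (setIntegral_pos_iff_support_of_nonneg_ae ?_ hZint).2 ?_
    · exact ae_restrict_of_forall_mem hEmeas (fun p hp => (hZmem p hp).1.le)
    · exact lt_of_lt_of_le hEpos (measure_mono (fun p hp => ⟨(hZmem p hp).1.ne', hp⟩))
  have hIlt : (∫ p in E, Zfun sm sp b bx c f us HH usx p) < (volume E).toReal := by
    have hone : IntegrableOn (fun _ : ℝ × ℝ => (1:ℝ)) E volume :=
      integrableOn_const hEfin.ne
    have h2 : 0 < ∫ p in E, ((1:ℝ) - Zfun sm sp b bx c f us HH usx p) := by
      refine (setIntegral_pos_iff_support_of_nonneg_ae ?_ (hone.sub hZint)).2 ?_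
      · refine ae_restrict_of_forall_mem hEmeas (fun p hp => ?_)
        have h2' := (hZmem p hp).2
        simp only [Pi.sub_apply, Pi.zero_apply, Pi.one_apply]
        linarith
      · refine lt_of_lt_of_le hEpos (measure_mono (fun p hp => ⟨?_, hp⟩))
        have h2' := (hZmem p hp).2
        simp only [Function.mem_support, Pi.sub_apply, Pi.one_apply, ne_eq]
        intro hcon
        linarith [sub_eq_zero.1 hcon]
    have h3 : (∫ p in E, ((1:ℝ) - Zfun sm sp b bx c f us HH usx p))
        = (volume E).toReal - ∫ p in E, Zfun sm sp b bx c f us HH usx p := by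
      rw [integral_sub hone hZint, setIntegral_const]
      simp
      rfl
    linarith [h3 ▸ h2]
  -- assemble
  refine ⟨⟨?_, ?_, ?_, ?_, ?_, ?_, ?_⟩, hNE, ?_, ?_, ?_, ?_⟩
  -- lip_u
  · obtain ⟨Mx, hMx0, hMx⟩ := bound_of_contOn (g := usx) husx
    obtain ⟨Mt, hMt0, hMt⟩ := bound_of_contOn (g := ust) hust
    refine ⟨⟨Mx + Mt, by positivity⟩, LipschitzOnWith.of_dist_le_mul ?_⟩
    rintro ⟨x, t⟩ ⟨hx, ht⟩ ⟨x', t'⟩ ⟨hx', ht'⟩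
    have h1 : |us x t - us x' t| ≤ Mx * |x - x'| := by
      have := Convex.norm_image_sub_le_of_norm_hasDerivWithin_le
        (f := fun y => us y t) (f' := fun y => usx y t) (s := Icc (0:ℝ) 1)
        (fun z hz => hstar.reg.dx (z, t) ⟨hz, ht⟩)
        (fun z hz => by rw [Real.norm_eq_abs]; exact hMx z hz t ht)
        (convex_Icc _ _) hx' hx
      simpa [Real.norm_eq_abs] using this
    have h2 : |us x' t - us x' t'| ≤ Mt * |t - t'| := by
      have := Convex.norm_image_sub_le_of_norm_hasDerivWithin_le
        (f := fun τ => us x' τ) (f' := fun τ => ust x' τ) (s := Icc (0:ℝ) T)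
        (fun τ' hτ' => hstar.reg.dt (x', τ') ⟨hx', hτ'⟩)
        (fun τ' hτ' => by rw [Real.norm_eq_abs]; exact hMt x' hx' τ' hτ')
        (convex_Icc _ _) ht' ht
      simpa [Real.norm_eq_abs] using this
    have hdx : |x - x'| ≤ dist ((x, t) : ℝ × ℝ) (x', t') := by
      rw [Prod.dist_eq, Real.dist_eq, Real.dist_eq]
      exact le_max_left _ _
    have hdt : |t - t'| ≤ dist ((x, t) : ℝ × ℝ) (x', t') := by
      rw [Prod.dist_eq, Real.dist_eq, Real.dist_eq]
      exact le_max_right _ _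
    have htri : |us x t - us x' t'| ≤ |us x t - us x' t| + |us x' t - us x' t'| :=
      abs_sub_le _ _ _
    have e1 := h1.trans (mul_le_mul_of_nonneg_left hdx hMx0)
    have e2 := h2.trans (mul_le_mul_of_nonneg_left hdt hMt0)
    show dist _ _ ≤ (Mx + Mt) * dist ((x, t) : ℝ × ℝ) (x', t')
    calc dist (us x t) (us x' t') = |us x t - us x' t'| := Real.dist_eq _ _
      _ ≤ |us x t - us x' t| + |us x' t - us x' t'| := htri
      _ ≤ Mx * dist ((x, t) : ℝ × ℝ) (x', t') + Mt * dist ((x, t) : ℝ × ℝ) (x', t') :=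
          add_le_add e1 e2
      _ = (Mx + Mt) * dist ((x, t) : ℝ × ℝ) (x', t') := by ring
  -- lip_v
  · obtain ⟨Mu, hMu0, hMu⟩ := bound_of_contOn (g := us) hus
    have hMH0 : (0:ℝ) ≤ M1 + M2 + M3 + M4 := by positivity
    refine ⟨⟨Mu + (M1 + M2 + M3 + M4), by positivity⟩, LipschitzOnWith.of_dist_le_mul ?_⟩
    rintro ⟨x, t⟩ ⟨hx, ht⟩ ⟨x', t'⟩ ⟨hx', ht'⟩
    have h1 : |V x t - V x' t| ≤ Mu * |x - x'| := by
      have hIx : IntervalIntegrable (fun z => us z t) volume 0 x :=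
        ContinuousOn.intervalIntegrable ((sliceX (g := us) hus ht).mono (Set.uIcc_subset_Icc h0m hx))
      have hIx' : IntervalIntegrable (fun z => us z t) volume 0 x' :=
        ContinuousOn.intervalIntegrable ((sliceX (g := us) hus ht).mono (Set.uIcc_subset_Icc h0m hx'))
      have heq : V x t - V x' t = ∫ z in x'..x, us z t := by
        rw [hVid t ht x hx, hVid t ht x' hx',
          show (V 0 t + ∫ z in (0:ℝ)..x, us z t) - (V 0 t + ∫ z in (0:ℝ)..x', us z t)
            = (∫ z in (0:ℝ)..x, us z t) - ∫ z in (0:ℝ)..x', us z t from by ring,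
          intervalIntegral.integral_interval_sub_left hIx hIx']
      rw [heq]
      have hb' := intervalIntegral.norm_integral_le_of_norm_le_const (C := Mu)
        (f := fun z => us z t) (a := x') (b := x) ?_
      · simpa [Real.norm_eq_abs] using hb'
      · intro z hz
        have hz' : z ∈ Icc (0:ℝ) 1 := Set.uIcc_subset_Icc hx' hx (Set.uIoc_subset_uIcc hz)
        rw [Real.norm_eq_abs]
        exact hMu z hz' t ht
    have h2 : |V x' t - V x' t'| ≤ (M1 + M2 + M3 + M4) * |t - t'| := by
      have hIt : IntervalIntegrable (fun τ => HH x' τ) volume 0 t :=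
        ContinuousOn.intervalIntegrable ((hHcontT x' hx').mono (Set.uIcc_subset_Icc hT0 ht))
      have hIt' : IntervalIntegrable (fun τ => HH x' τ) volume 0 t' :=
        ContinuousOn.intervalIntegrable ((hHcontT x' hx').mono (Set.uIcc_subset_Icc hT0 ht'))
      have heq : V x' t - V x' t' = ∫ τ in t'..t, HH x' τ := by
        rw [hVdef x' t, hVdef x' t',
          show ((∫ τ in (0:ℝ)..t, HH x' τ) + ∫ y in (0:ℝ)..x', u0 y)
              - ((∫ τ in (0:ℝ)..t', HH x' τ) + ∫ y in (0:ℝ)..x', u0 y)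
            = (∫ τ in (0:ℝ)..t, HH x' τ) - ∫ τ in (0:ℝ)..t', HH x' τ from by ring,
          intervalIntegral.integral_interval_sub_left hIt hIt']
      rw [heq]
      have hb' := intervalIntegral.norm_integral_le_of_norm_le_const (C := M1 + M2 + M3 + M4)
        (f := fun τ => HH x' τ) (a := t') (b := t) ?_
      · simpa [Real.norm_eq_abs] using hb'
      · intro τ hτ
        have hτ' : τ ∈ Icc (0:ℝ) T := Set.uIcc_subset_Icc ht' ht (Set.uIoc_subset_uIcc hτ)
        rw [Real.norm_eq_abs]
        exact hHbound x' hx' τ hτ'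
    have hdx : |x - x'| ≤ dist ((x, t) : ℝ × ℝ) (x', t') := by
      rw [Prod.dist_eq, Real.dist_eq, Real.dist_eq]
      exact le_max_left _ _
    have hdt : |t - t'| ≤ dist ((x, t) : ℝ × ℝ) (x', t') := by
      rw [Prod.dist_eq, Real.dist_eq, Real.dist_eq]
      exact le_max_right _ _
    have htri : |V x t - V x' t'| ≤ |V x t - V x' t| + |V x' t - V x' t'| :=
      abs_sub_le _ _ _
    have e1 := h1.trans (mul_le_mul_of_nonneg_left hdx hMu0)
    have e2 := h2.trans (mul_le_mul_of_nonneg_left hdt hMH0)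
    show dist _ _ ≤ (Mu + (M1 + M2 + M3 + M4)) * dist ((x, t) : ℝ × ℝ) (x', t')
    calc dist (V x t) (V x' t') = |V x t - V x' t'| := Real.dist_eq _ _
      _ ≤ |V x t - V x' t| + |V x' t - V x' t'| := htri
      _ ≤ Mu * dist ((x, t) : ℝ × ℝ) (x', t')
            + (M1 + M2 + M3 + M4) * dist ((x, t) : ℝ × ℝ) (x', t') := add_le_add e1 e2
      _ = (Mu + (M1 + M2 + M3 + M4)) * dist ((x, t) : ℝ × ℝ) (x', t') := by ring
  -- du
  · refine ae_restrict_of_forall_mem hOmegaMeas (fun p hp => ?_)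
    exact (hstar.reg.dx p (hclsub hp)).hasDerivAt (Icc_mem_nhds hp.1.1 hp.1.2)
  -- dvx
  · refine ae_restrict_of_forall_mem hOmegaMeas (fun p hp => ?_)
    have hx : p.1 ∈ Ioo (0:ℝ) 1 := hp.1
    have ht : p.2 ∈ Ioo (0:ℝ) T := hp.2
    have htI : p.2 ∈ Icc (0:ℝ) T := ⟨ht.1.le, ht.2.le⟩
    have hFTC : HasDerivAt (fun y => ∫ z in (0:ℝ)..y, us z p.2) (us p.1 p.2) p.1 :=
      prim_deriv (g := us) hus hx htI
    have heq : (fun y => V 0 p.2 + ∫ z in (0:ℝ)..y, us z p.2) =ᶠ[𝓝 p.1] (fun y => V y p.2) := by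
      filter_upwards [Icc_mem_nhds hx.1 hx.2] with y hy
      exact (hVid p.2 htI y hy).symm
    exact ((hFTC.const_add (V 0 p.2)).congr_of_eventuallyEq heq.symm)
  -- dvt
  · refine ae_restrict_of_forall_mem hOmegaMeas (fun p hp => ?_)
    have hx : p.1 ∈ Ioo (0:ℝ) 1 := hp.1
    have ht : p.2 ∈ Ioo (0:ℝ) T := hp.2
    have hxI : p.1 ∈ Icc (0:ℝ) 1 := ⟨hx.1.le, hx.2.le⟩
    have hco := hHcontT p.1 hxI
    have hnb : Icc (0:ℝ) T ∈ 𝓝 p.2 := Icc_mem_nhds ht.1 ht.2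
    have hFTC : HasDerivAt (fun τ => ∫ σ' in (0:ℝ)..τ, HH p.1 σ') (HH p.1 p.2) p.2 :=
      intervalIntegral.integral_hasDerivAt_right
        (ContinuousOn.intervalIntegrable (hco.mono (Set.uIcc_subset_Icc hT0 ⟨ht.1.le, ht.2.le⟩)))
        ⟨Icc (0:ℝ) T, hnb, hco.aestronglyMeasurable measurableSet_Icc⟩
        (hco.continuousAt hnb)
    exact hFTC.add_const _
  -- vx_eq_u
  · exact Filter.Eventually.of_forall (fun p => rfl)
  -- incl
  · refine ae_restrict_of_forall_mem hOmegaMeas (fun p hp => ?_)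
    have hpair : ((usx p.1 p.2, GVal b c bx f us HH p.1 p.2) : ℝ × ℝ)
        = (usx p.1 p.2, sigmat (usx p.1 p.2)) := by rw [hGall]
    rw [hpair]
    rcases le_or_gt (usx p.1 p.2) (sm r1) with hle | hgt
    · exact Or.inl (htilde.eq_left _ hle)
    rcases le_or_gt (sp r2) (usx p.1 p.2) with hge | hlt
    · exact Or.inl (htilde.eq_right _ hge)
    · exact Or.inr (hU0 _ hgt hlt)
  -- subset of transition set
  · rintro ⟨x, t⟩ ⟨hp, h1, h2⟩
    refine ⟨hp, ?_⟩
    have hpair : ((usx x t, GVal b c bx f us HH x t) : ℝ × ℝ)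
        = (usx x t, sigmat (usx x t)) := by rw [hGall]
    rw [hpair]
    exact Or.inr (hU0 _ h1 h2)
  -- gauge formula
  · simp only [Gauge]
    congr 1
    apply MeasureTheory.integral_congr_ae
    refine Filter.Eventually.of_forall (fun p => ?_)
    simp only [Zfun, hGall]
  -- gauge positive
  · exact mul_pos (inv_pos.2 hEtR) hIpos
  -- gauge < 1
  · show ((volume E).toReal)⁻¹ * (∫ p in E, Zfun sm sp b bx c f us HH usx p) < 1
    rw [← div_eq_inv_mul]
    exact (div_lt_one hEtR).2 hIlt
end
end
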